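/- arXiv:2402.17046 — 6 statements merged into one kernel-verified Lean document; each statement's English description precedes it below -/
import Mathlib

section
/- Let B be a generalized Bratteli diagram with incidence matrices (F_n). Suppose (p^(n))_{n≥0} is a sequence of nonnegative real vectors p^(n) = (p^(n)_w)_{w∈V_n} satisfying F_n^T p^(n+1) = p^(n) for all n ≥ 0, i.e. ∑_{v∈V_{n+1}} f^(n)_{vw} p^(n+1)_v = p^(n)_w for all w ∈ V_n. Then there exists a unique tail-invariant Borel measure μ on the path space X_B such that μ([ē]) = p^(n)_w for every n ≥ 0 and every finite path ē of length n ending at w ∈ V_n. -/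
open MeasureTheory
open scoped ENNReal

/-- Edges of a generalized Bratteli diagram at level `n` are encoded as triples
`(w, v, j)`: source `w ∈ V_n`, range `v ∈ V_{n+1}`, index `j < f n v w`. -/
abbrev GBDEdge : Type := ℕ × ℕ × ℕ

namespace GBDEdge

/-- The source vertex of an edge. -/
def src (e : GBDEdge) : ℕ := e.1

/-- The range vertex of an edge. -/
def rng (e : GBDEdge) : ℕ := e.2.1

/-- The index of an edge among the parallel edges with the same source and range. -/
def idx (e : GBDEdge) : ℕ := e.2.2

end GBDEdge

/-- A generalized Bratteli diagram, encoded by its incidence matrices: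
`f n v w` is the number of edges from the vertex `w ∈ V_n` to the vertex `v ∈ V_{n+1}`
(all levels are identified with `ℕ`).  Every vertex of level `n+1` has at least one
incoming edge, every vertex has at least one outgoing edge, and every vertex has
finitely many incoming edges. -/
structure GBD where
  f : ℕ → ℕ → ℕ → ℕ
  in_pos : ∀ n v, ∃ w, 0 < f n v w
  out_pos : ∀ n w, ∃ v, 0 < f n v w
  in_fin : ∀ n v, (Function.support fun w => f n v w).Finite

namespace GBD

/-- `e` is an edge of the diagram `B` at level `n`. -/
def IsEdge (B : GBD) (n : ℕ) (e : GBDEdge) : Prop := e.idx < B.f n e.rng e.src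

/-- The path space `X_B` of all infinite paths starting at level `0`. -/
def PathSpace (B : GBD) : Type :=
  {x : ℕ → GBDEdge // (∀ n, B.IsEdge n (x n)) ∧ ∀ n, (x n).rng = (x (n + 1)).src}

instance (B : GBD) : TopologicalSpace B.PathSpace :=
  inferInstanceAs (TopologicalSpace {x : ℕ → GBDEdge //
    (∀ n, B.IsEdge n (x n)) ∧ ∀ n, (x n).rng = (x (n + 1)).src})

instance (B : GBD) : MeasurableSpace B.PathSpace :=
  inferInstanceAs (MeasurableSpace {x : ℕ → GBDEdge //
    (∀ n, B.IsEdge n (x n)) ∧ ∀ n, (x n).rng = (x (n + 1)).src})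

/-- The cylinder set of all paths whose first `m` edges are `es 0, …, es (m-1)` and whose
`m`-th edge has source `w`; for a finite path `es` of length `m` ending at `w ∈ V_m` this
is the cylinder set `[es]` (for `m = 0` this is the set of paths starting at `w ∈ V_0`). -/
def cyl (B : GBD) (m : ℕ) (es : ℕ → GBDEdge) (w : ℕ) : Set B.PathSpace :=
  {x | (∀ n, n < m → x.val n = es n) ∧ (x.val m).src = w}

/-- `es` (more precisely, its first `m` entries) is a finite path of length `m`
ending at the vertex `w ∈ V_m`. -/
def IsFinPathTo (B : GBD) (m : ℕ) (es : ℕ → GBDEdge) (w : ℕ) : Prop :=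
  (∀ n, n < m → B.IsEdge n (es n)) ∧
  (∀ n, n + 1 < m → (es n).rng = (es (n + 1)).src) ∧
  (∀ k, m = k + 1 → (es k).rng = w)

/-- A measure on the path space is tail invariant if any two cylinder sets determined by
finite paths with the same terminal vertex have equal measure. -/
def TailInvariant (B : GBD) (μ : Measure B.PathSpace) : Prop :=
  ∀ m es es' w, B.IsFinPathTo m es w → B.IsFinPathTo m es' w →
    μ (B.cyl m es w) = μ (B.cyl m es' w)

/-- Two paths are tail equivalent if they agree from some index on. -/
def TailEquiv (B : GBD) (x y : B.PathSpace) : Prop :=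
  ∃ N, ∀ n, N ≤ n → x.val n = y.val n

/-- A set is tail invariant if it is a union of tail-equivalence classes. -/
def TailInvSet (B : GBD) (S : Set B.PathSpace) : Prop :=
  ∀ x y, B.TailEquiv x y → x ∈ S → y ∈ S

/-- A probability tail-invariant measure is ergodic if every tail-invariant Borel set is
null or conull. -/
def IsErgodicTI (B : GBD) (μ : Measure B.PathSpace) : Prop :=
  IsProbabilityMeasure μ ∧ B.TailInvariant μ ∧
    ∀ S, MeasurableSet S → B.TailInvSet S → μ S = 0 ∨ μ S = 1

end GBD

namespace Stmt1Aux

open MeasureTheory Set Filter Topology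

noncomputable section

/-! ### Locating a point in a partition by partial sums -/

def loc (S : ℕ → ℝ) (t : ℝ) : ℕ := sInf {m | t < S (m + 1)}

lemma loc_spec {S : ℕ → ℝ} (hm : Monotone S) (h0 : S 0 = 0) {t : ℝ} (ht : 0 ≤ t)
    (hex : ∃ m, t < S m) : S (loc S t) ≤ t ∧ t < S (loc S t + 1) := by
  have hne : {m | t < S (m + 1)}.Nonempty := by
    obtain ⟨m, hm'⟩ := hex
    cases m with
    | zero => exact ⟨0, lt_of_lt_of_le hm' (hm (Nat.zero_le 1))⟩
    | succ k => exact ⟨k, hm'⟩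
  have hmem : t < S (loc S t + 1) := Nat.sInf_mem hne
  refine ⟨?_, hmem⟩
  rcases Nat.eq_zero_or_pos (loc S t) with h | h
  · rw [h, h0]; exact ht
  · have hl : sInf {m | t < S (m + 1)} = loc S t := rfl
    have h2 : loc S t - 1 ∉ {m | t < S (m + 1)} := Nat.notMem_of_lt_sInf (by rw [hl]; omega)
    simp only [Set.mem_setOf_eq, not_lt] at h2
    have e : loc S t - 1 + 1 = loc S t := by omega
    rwa [e] at h2

lemma loc_eq {S : ℕ → ℝ} (hm : Monotone S) {t : ℝ} {k : ℕ}
    (h1 : S k ≤ t) (h2 : t < S (k + 1)) : loc S t = k := by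
  have hk : k ∈ {m | t < S (m + 1)} := h2
  have hle : loc S t ≤ k := Nat.sInf_le hk
  rcases eq_or_lt_of_le hle with h | h
  · exact h
  · exfalso
    have hmem : t < S (loc S t + 1) := Nat.sInf_mem (s := {m | t < S (m + 1)}) ⟨k, hk⟩
    exact absurd (lt_of_lt_of_le hmem (hm (by omega : loc S t + 1 ≤ k))) (not_lt.2 h1)

lemma loc_eq_iff (S : ℕ → ℝ) (t : ℝ) (k : ℕ) :
    loc S t = k ↔ ((t < S (k + 1) ∧ ∀ i < k, S (i + 1) ≤ t) ∨ (k = 0 ∧ ∀ m, S (m + 1) ≤ t)) := by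
  constructor
  · rintro rfl
    rcases Set.eq_empty_or_nonempty {m | t < S (m + 1)} with he | hne
    · refine Or.inr ⟨by rw [loc, he, Nat.sInf_empty], fun m => ?_⟩
      by_contra h
      exact Set.eq_empty_iff_forall_notMem.1 he m (not_le.1 h)
    · refine Or.inl ⟨Nat.sInf_mem hne, fun i hi => ?_⟩
      by_contra h
      have := Nat.sInf_le (show i ∈ {m | t < S (m + 1)} from not_le.1 h)
      rw [loc] at hi; omega
  · rintro (⟨h1, h2⟩ | ⟨rfl, h⟩)
    · refine le_antisymm (Nat.sInf_le h1) ?_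
      by_contra hlt
      push_neg at hlt
      have hmem : t < S (loc S t + 1) := Nat.sInf_mem (s := {m | t < S (m + 1)}) ⟨k, h1⟩
      exact absurd (h2 _ hlt) (not_le.2 hmem)
    · rcases Set.eq_empty_or_nonempty {m | t < S (m + 1)} with he | hne
      · rw [loc, he, Nat.sInf_empty]
      · exact absurd (h _) (not_le.2 (Nat.sInf_mem hne))

lemma measurable_loc (S : ℕ → ℝ) : Measurable (loc S) := by
  apply measurable_to_countable'
  intro k
  by_cases hk : k = 0
  · subst hk
    have : loc S ⁻¹' {0} = (Set.Iio (S 1) ∪ ⋂ m, Set.Ici (S (m + 1))) := by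
      ext t
      simp [loc_eq_iff]
    rw [this]
    exact measurableSet_Iio.union (MeasurableSet.iInter fun m => measurableSet_Ici)
  · have : loc S ⁻¹' {k} = (Set.Iio (S (k + 1)) ∩ ⋂ i ∈ Set.Iio k, Set.Ici (S (i + 1))) := by
      ext t
      simp [loc_eq_iff, hk]
    rw [this]
    exact measurableSet_Iio.inter (MeasurableSet.biInter (Set.to_countable _)
      (fun i _ => measurableSet_Ici))

/-! ### Diagram-specific constructions -/

variable (B : GBD) (p : ℕ → ℕ → ℝ)

def clen (n w k : ℕ) : ℝ :=
  if (Nat.unpair k).2 < B.f n (Nat.unpair k).1 w then p (n + 1) (Nat.unpair k).1 else 0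

def S (n w m : ℕ) : ℝ := ∑ k ∈ Finset.range m, clen B p n w k

def T (w : ℕ) : ℝ := ∑ u ∈ Finset.range w, p 0 u

def st (t : ℝ) : ℕ → ℕ × ℝ
  | 0 => (loc (T p) t, t - T p (loc (T p) t))
  | n + 1 =>
    ((Nat.unpair (loc (S B p n (st t n).1) (st t n).2)).1,
     (st t n).2 - S B p n (st t n).1 (loc (S B p n (st t n).1) (st t n).2))

def edg (t : ℝ) (n : ℕ) : GBDEdge :=
  ((st B p t n).1, (Nat.unpair (loc (S B p n (st B p t n).1) (st B p t n).2)).1,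
   (Nat.unpair (loc (S B p n (st B p t n).1) (st B p t n).2)).2)

def Dset : Set ℝ := ⋃ w, Set.Ico 0 (T p w)

def dv : ℕ → ℕ
  | 0 => 0
  | n + 1 => Classical.choose (B.out_pos n (dv n))

def dpath : B.PathSpace :=
  ⟨fun n => (dv B n, dv B (n + 1), 0),
   fun n => Classical.choose_spec (B.out_pos n (dv B n)), fun n => rfl⟩

open Classical in
def PsiF (t : ℝ) : ℕ → GBDEdge := if t ∈ Dset p then edg B p t else (dpath B).val

def A : ℕ → (ℕ → GBDEdge) → ℕ → ℝ
  | 0, _, w => T p w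
  | m + 1, es, _ =>
    A m es (es m).src + S B p m (es m).src (Nat.pair (es m).rng (es m).idx)

variable {B p}

lemma S_succ (n w m : ℕ) : S B p n w (m + 1) = S B p n w m + clen B p n w m :=
  Finset.sum_range_succ _ _

lemma T_succ (w : ℕ) : T p (w + 1) = T p w + p 0 w := Finset.sum_range_succ _ _

section Sums

variable (hpos : ∀ n w, 0 ≤ p n w)
  (hrec : ∀ n w, HasSum (fun v : ℕ => (B.f n v w : ℝ) * p (n + 1) v) (p n w))

include hpos

lemma clen_nonneg (n w k : ℕ) : 0 ≤ clen B p n w k := by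
  unfold clen; split
  · exact hpos _ _
  · exact le_rfl

lemma S_mono (n w : ℕ) : Monotone (S B p n w) :=
  monotone_nat_of_le_succ fun m => by
    rw [S_succ]
    exact le_add_of_nonneg_right (clen_nonneg hpos n w m)

lemma S_nonneg (n w m : ℕ) : 0 ≤ S B p n w m :=
  Finset.sum_nonneg fun k _ => clen_nonneg hpos n w k

lemma T_mono : Monotone (T p) :=
  monotone_nat_of_le_succ fun w => by
    rw [T_succ]
    exact le_add_of_nonneg_right (hpos 0 w)

lemma T_nonneg (w : ℕ) : 0 ≤ T p w := Finset.sum_nonneg fun u _ => hpos 0 u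

include hrec

lemma clen_hasSum (n w : ℕ) : HasSum (clen B p n w) (p n w) := by
  set g : ℕ × ℕ → ℝ := fun q => if q.2 < B.f n q.1 w then p (n + 1) q.1 else 0 with hg
  have hfib : ∀ v, HasSum (fun j => g (v, j)) ((B.f n v w : ℝ) * p (n + 1) v) := by
    intro v
    have h1 : ∀ j ∉ Finset.range (B.f n v w), g (v, j) = 0 := by
      intro j hj
      simp only [g]
      rw [if_neg]
      simpa using hj
    have h2 : HasSum (fun j => g (v, j)) (∑ j ∈ Finset.range (B.f n v w), g (v, j)) :=
      hasSum_sum_of_ne_finset_zero h1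
    have h3 : ∑ j ∈ Finset.range (B.f n v w), g (v, j) = (B.f n v w : ℝ) * p (n + 1) v := by
      have hc : ∀ j ∈ Finset.range (B.f n v w), g (v, j) = p (n + 1) v :=
        fun j hj => if_pos (Finset.mem_range.1 hj)
      rw [Finset.sum_congr rfl hc, Finset.sum_const, Finset.card_range, nsmul_eq_mul]
    rwa [h3] at h2
  have hgnn : ∀ q, 0 ≤ g q := by
    intro q
    simp only [g]
    split
    · exact hpos _ _
    · exact le_rfl
  have hsummable : Summable g := by
    rw [summable_prod_of_nonneg hgnn]
    refine ⟨fun v => (hfib v).summable, ?_⟩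
    have he : (fun v => ∑' j, g (v, j)) = fun v => (B.f n v w : ℝ) * p (n + 1) v :=
      funext fun v => (hfib v).tsum_eq
    rw [he]
    exact (hrec n w).summable
  have htsum : ∑' q, g q = p n w := by
    rw [Summable.tsum_prod' hsummable (fun v => (hfib v).summable)]
    calc ∑' v, ∑' j, g (v, j) = ∑' v, (B.f n v w : ℝ) * p (n + 1) v :=
          tsum_congr fun v => (hfib v).tsum_eq
      _ = p n w := (hrec n w).tsum_eq
  have hgsum : HasSum g (p n w) := htsum ▸ hsummable.hasSum
  have h4 : HasSum (g ∘ Nat.pairEquiv.symm) (p n w) := (Nat.pairEquiv.symm.hasSum_iff).2 hgsum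
  have h5 : clen B p n w = g ∘ Nat.pairEquiv.symm := by
    funext k
    rfl
  rwa [h5]

lemma S_le (n w m : ℕ) : S B p n w m ≤ p n w :=
  sum_le_hasSum (Finset.range m) (fun k _ => clen_nonneg hpos n w k) (clen_hasSum hpos hrec n w)

lemma S_tendsto (n w : ℕ) : Filter.Tendsto (S B p n w) Filter.atTop (nhds (p n w)) :=
  (clen_hasSum hpos hrec n w).tendsto_sum_nat

lemma step {n w : ℕ} {u : ℝ} (h0 : 0 ≤ u) (h1 : u < p n w) :
    S B p n w (loc (S B p n w) u) ≤ u ∧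
    u - S B p n w (loc (S B p n w) u) < clen B p n w (loc (S B p n w) u) ∧
    0 < clen B p n w (loc (S B p n w) u) := by
  have hex : ∃ m, u < S B p n w m :=
    ((S_tendsto hpos hrec n w).eventually (eventually_gt_nhds h1)).exists
  obtain ⟨hle, hlt⟩ := loc_spec (S_mono hpos n w) (by simp [S]) h0 hex
  rw [S_succ] at hlt
  exact ⟨hle, by linarith, by linarith⟩

end Sums

lemma clen_pos {n w k : ℕ} (h : 0 < clen B p n w k) :
    (Nat.unpair k).2 < B.f n (Nat.unpair k).1 w ∧
      clen B p n w k = p (n + 1) (Nat.unpair k).1 := by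
  unfold clen at h ⊢
  split at h
  · exact ⟨by assumption, if_pos (by assumption)⟩
  · exact absurd h (lt_irrefl 0)

section Inv

variable (hpos : ∀ n w, 0 ≤ p n w)
  (hrec : ∀ n w, HasSum (fun v : ℕ => (B.f n v w : ℝ) * p (n + 1) v) (p n w))

include hpos hrec

lemma st_mem {t : ℝ} (ht : t ∈ Dset p) (n : ℕ) :
    0 ≤ (st B p t n).2 ∧ (st B p t n).2 < p n (st B p t n).1 := by
  induction n with
  | zero =>
    obtain ⟨w, hw⟩ := Set.mem_iUnion.1 ht
    have hex : ∃ m, t < T p m := ⟨w, hw.2⟩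
    obtain ⟨hle, hlt⟩ := loc_spec (T_mono hpos) (by simp [T]) hw.1 hex
    rw [T_succ] at hlt
    exact ⟨sub_nonneg.2 hle, by simp only [st]; linarith⟩
  | succ n ih =>
    obtain ⟨h0, h1⟩ := ih
    obtain ⟨hle, hlt, hp'⟩ := step hpos hrec h0 h1
    obtain ⟨hidx, hclen⟩ := clen_pos hp'
    refine ⟨sub_nonneg.2 hle, ?_⟩
    show (st B p t n).2 - S B p n (st B p t n).1 (loc (S B p n (st B p t n).1) (st B p t n).2) <
      p (n + 1) (Nat.unpair (loc (S B p n (st B p t n).1) (st B p t n).2)).1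
    rw [← hclen]
    exact hlt

lemma edg_isEdge {t : ℝ} (ht : t ∈ Dset p) (n : ℕ) : B.IsEdge n (edg B p t n) := by
  obtain ⟨h0, h1⟩ := st_mem hpos hrec ht n
  obtain ⟨-, -, hp'⟩ := step hpos hrec h0 h1
  exact (clen_pos hp').1

end Inv

lemma edg_src (t : ℝ) (n : ℕ) : (edg B p t n).src = (st B p t n).1 := rfl

lemma edg_rng (t : ℝ) (n : ℕ) : (edg B p t n).rng = (st B p t (n + 1)).1 := rfl

/-! ### The map `psi` and its measurability -/

section Psi

variable (hpos : ∀ n w, 0 ≤ p n w)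
  (hrec : ∀ n w, HasSum (fun v : ℕ => (B.f n v w : ℝ) * p (n + 1) v) (p n w))

include hpos hrec

lemma PsiF_mem (t : ℝ) :
    (∀ n, B.IsEdge n (PsiF B p t n)) ∧ ∀ n, (PsiF B p t n).rng = (PsiF B p t (n + 1)).src := by
  unfold PsiF
  split_ifs with h
  · exact ⟨fun n => edg_isEdge hpos hrec h n, fun n => rfl⟩
  · exact (dpath B).2

def psi (t : ℝ) : B.PathSpace := ⟨PsiF B p t, PsiF_mem hpos hrec t⟩

end Psi

lemma measurable_from_nat_prod {X : Type*} [MeasurableSpace X] {F : ℕ × ℝ → X}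
    (hf : ∀ w : ℕ, Measurable fun u : ℝ => F (w, u)) : Measurable F := by
  have h : Measurable fun q : ℝ × ℕ => F (q.2, q.1) := measurable_from_prod_countable_left fun w => hf w
  exact h.comp measurable_swap

lemma measurable_st (n : ℕ) : Measurable fun t => st B p t n := by
  induction n with
  | zero =>
    exact (measurable_loc (T p)).prodMk
      (measurable_id.sub ((measurable_from_top (f := T p)).comp (measurable_loc (T p))))
  | succ n ih =>
    have hF : Measurable fun q : ℕ × ℝ =>
        ((Nat.unpair (loc (S B p n q.1) q.2)).1,
          q.2 - S B p n q.1 (loc (S B p n q.1) q.2)) := by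
      apply measurable_from_nat_prod
      intro w
      exact ((measurable_from_top (f := fun k => (Nat.unpair k).1)).comp
          (measurable_loc (S B p n w))).prodMk
        (measurable_id.sub ((measurable_from_top (f := S B p n w)).comp
          (measurable_loc (S B p n w))))
    exact hF.comp ih

lemma measurable_edg (n : ℕ) : Measurable fun t => edg B p t n := by
  have hG : Measurable fun q : ℕ × ℝ =>
      ((q.1, (Nat.unpair (loc (S B p n q.1) q.2)).1,
        (Nat.unpair (loc (S B p n q.1) q.2)).2) : GBDEdge) := by
    apply measurable_from_nat_prod
    intro w
    exact measurable_const.prodMk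
      (((measurable_from_top (f := fun k => (Nat.unpair k).1)).comp
          (measurable_loc (S B p n w))).prodMk
        ((measurable_from_top (f := fun k => (Nat.unpair k).2)).comp
          (measurable_loc (S B p n w))))
  exact hG.comp (measurable_st n)

lemma measurableSet_Dset : MeasurableSet (Dset p) :=
  MeasurableSet.iUnion fun _ => measurableSet_Ico

lemma measurable_psi (hpos : ∀ n w, 0 ≤ p n w)
    (hrec : ∀ n w, HasSum (fun v : ℕ => (B.f n v w : ℝ) * p (n + 1) v) (p n w)) :
    Measurable (psi hpos hrec) := by
  apply Measurable.subtype_mk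
  show Measurable (PsiF B p)
  exact Measurable.ite measurableSet_Dset
    (measurable_pi_lambda _ fun n => measurable_edg n) measurable_const

lemma measurable_eval (n : ℕ) : Measurable fun x : B.PathSpace => x.val n :=
  (measurable_pi_apply n).comp measurable_subtype_coe

lemma measurableSet_cyl (m : ℕ) (es : ℕ → GBDEdge) (w : ℕ) :
    MeasurableSet (B.cyl m es w) := by
  have hrep : B.cyl m es w =
      (⋂ n ∈ Set.Iio m, {x : B.PathSpace | x.val n = es n}) ∩
        {x : B.PathSpace | (x.val m).src = w} := by
    ext x
    simp only [GBD.cyl, Set.mem_setOf_eq, Set.mem_inter_iff, Set.mem_iInter, Set.mem_Iio]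
  rw [hrep]
  refine (MeasurableSet.biInter (Set.to_countable _) fun n _ => ?_).inter ?_
  · exact measurable_eval n (measurableSet_singleton (es n))
  · exact (measurable_fst.comp (measurable_eval m)) (measurableSet_singleton w)

/-! ### Left endpoints of cylinder intervals -/

lemma path_trunc {m : ℕ} {es : ℕ → GBDEdge} {w : ℕ} (h : B.IsFinPathTo (m + 1) es w) :
    B.IsFinPathTo m es (es m).src := by
  obtain ⟨h1, h2, h3⟩ := h
  refine ⟨fun n hn => h1 n (by omega), fun n hn => h2 n (by omega), fun k hk => ?_⟩
  have : k + 1 < m + 1 := by omega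
  have := h2 k this
  rw [← hk] at this
  exact this

lemma clen_pair {m : ℕ} {es : ℕ → GBDEdge} {w : ℕ} (hedge : B.IsEdge m (es m))
    (hterm : (es m).rng = w) :
    clen B p m (es m).src (Nat.pair (es m).rng (es m).idx) = p (m + 1) w := by
  simp only [clen, Nat.unpair_pair]
  have h' : (es m).idx < B.f m (es m).rng (es m).src := hedge
  rw [if_pos h', hterm]

section Main

variable (hpos : ∀ n w, 0 ≤ p n w)
  (hrec : ∀ n w, HasSum (fun v : ℕ => (B.f n v w : ℝ) * p (n + 1) v) (p n w))

include hpos hrec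

lemma A_bound {m : ℕ} {es : ℕ → GBDEdge} {w : ℕ} (h : B.IsFinPathTo m es w) :
    0 ≤ A B p m es w ∧ ∃ w', A B p m es w + p m w ≤ T p w' := by
  induction m generalizing w with
  | zero => exact ⟨T_nonneg hpos w, ⟨w + 1, by rw [T_succ]; exact le_rfl⟩⟩
  | succ m ih =>
    obtain ⟨h0, w', hw'⟩ := ih (path_trunc h)
    have hedge : B.IsEdge m (es m) := h.1 m (by omega)
    have hterm : (es m).rng = w := h.2.2 m rfl
    have hclen := clen_pair (p := p) hedge hterm
    have hSle := S_le hpos hrec m (es m).src (Nat.pair (es m).rng (es m).idx + 1)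
    rw [S_succ, hclen] at hSle
    have hSnn := S_nonneg (B := B) hpos m (es m).src (Nat.pair (es m).rng (es m).idx)
    refine ⟨add_nonneg h0 hSnn, ⟨w', ?_⟩⟩
    show A B p m es (es m).src + S B p m (es m).src (Nat.pair (es m).rng (es m).idx)
      + p (m + 1) w ≤ T p w'
    linarith

lemma main_corr {m : ℕ} {es : ℕ → GBDEdge} {w : ℕ} (h : B.IsFinPathTo m es w)
    {t : ℝ} (ht : t ∈ Dset p) :
    (((∀ k < m, edg B p t k = es k) ∧ (st B p t m).1 = w) →
      (A B p m es w ≤ t ∧ t < A B p m es w + p m w ∧ (st B p t m).2 = t - A B p m es w)) ∧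
    ((A B p m es w ≤ t ∧ t < A B p m es w + p m w) →
      ((∀ k < m, edg B p t k = es k) ∧ (st B p t m).1 = w)) := by
  induction m generalizing w with
  | zero =>
    obtain ⟨w0, hw0⟩ := Set.mem_iUnion.1 ht
    have hex : ∃ n, t < T p n := ⟨w0, hw0.2⟩
    obtain ⟨hle, hlt⟩ := loc_spec (T_mono hpos) (by simp [T]) hw0.1 hex
    rw [T_succ] at hlt
    constructor
    · rintro ⟨-, hst⟩
      have hw : loc (T p) t = w := hst
      rw [hw] at hle hlt
      refine ⟨hle, hlt, ?_⟩
      show t - T p (loc (T p) t) = t - T p w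
      rw [hw]
    · rintro ⟨h1, h2⟩
      have h1' : T p w ≤ t := h1
      have h2' : t < T p (w + 1) := by rw [T_succ]; exact h2
      exact ⟨fun k hk => absurd hk (by omega), loc_eq (T_mono hpos) h1' h2'⟩
  | succ m ih =>
    have htr := path_trunc h
    have hedge : B.IsEdge m (es m) := h.1 m (by omega)
    have hterm : (es m).rng = w := h.2.2 m rfl
    have hclen := clen_pair (p := p) hedge hterm
    obtain ⟨ihf, ihb⟩ := ih htr
    have hA1 : A B p (m + 1) es w =
        A B p m es (es m).src + S B p m (es m).src (Nat.pair (es m).rng (es m).idx) := rfl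
    have hSK1 : S B p m (es m).src (Nat.pair (es m).rng (es m).idx + 1) =
        S B p m (es m).src (Nat.pair (es m).rng (es m).idx) + p (m + 1) w := by
      rw [S_succ, hclen]
    have hSle : S B p m (es m).src (Nat.pair (es m).rng (es m).idx + 1) ≤ p m (es m).src :=
      S_le hpos hrec m (es m).src _
    have hSnn := S_nonneg (B := B) hpos m (es m).src (Nat.pair (es m).rng (es m).idx)
    constructor
    · rintro ⟨hC, hst1⟩
      have hCm : ∀ k < m, edg B p t k = es k := fun k hk => hC k (by omega)
      have he : edg B p t m = es m := hC m (by omega)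
      have hstm : (st B p t m).1 = (es m).src := congrArg GBDEdge.src he
      obtain ⟨-, -, hoff⟩ := ihf ⟨hCm, hstm⟩
      obtain ⟨hm0, hm1⟩ := st_mem hpos hrec ht m
      have hl : loc (S B p m (st B p t m).1) (st B p t m).2 =
          Nat.pair (es m).rng (es m).idx := by
        have h1 : (Nat.unpair (loc (S B p m (st B p t m).1) (st B p t m).2)).1 = (es m).rng :=
          congrArg GBDEdge.rng he
        have h2 : (Nat.unpair (loc (S B p m (st B p t m).1) (st B p t m).2)).2 = (es m).idx :=
          congrArg GBDEdge.idx he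
        rw [← h1, ← h2, Nat.pair_unpair]
      obtain ⟨hs1, hs2, -⟩ := step hpos hrec hm0 hm1
      rw [hl, hstm] at hs1
      rw [hl, hstm, hclen] at hs2
      rw [hA1]
      refine ⟨by linarith, by linarith, ?_⟩
      show (st B p t m).2 -
          S B p m (st B p t m).1 (loc (S B p m (st B p t m).1) (st B p t m).2) =
        t - (A B p m es (es m).src + S B p m (es m).src (Nat.pair (es m).rng (es m).idx))
      rw [hl, hstm, hoff]
      ring
    · rintro ⟨hI1, hI2⟩
      rw [hA1] at hI1 hI2
      have hIm : A B p m es (es m).src ≤ t ∧ t < A B p m es (es m).src + p m (es m).src :=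
        ⟨by linarith, by linarith⟩
      obtain ⟨hCm, hstm⟩ := ihb hIm
      obtain ⟨-, -, hoff⟩ := ihf ⟨hCm, hstm⟩
      have hu0 : S B p m (es m).src (Nat.pair (es m).rng (es m).idx) ≤ (st B p t m).2 := by
        rw [hoff]; linarith
      have hu1 : (st B p t m).2 < S B p m (es m).src (Nat.pair (es m).rng (es m).idx + 1) := by
        rw [hoff, hSK1]; linarith
      have hl : loc (S B p m (es m).src) (st B p t m).2 = Nat.pair (es m).rng (es m).idx :=
        loc_eq (S_mono hpos m (es m).src) hu0 hu1
      have he : edg B p t m = es m := by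
        show ((st B p t m).1, (Nat.unpair (loc (S B p m (st B p t m).1) (st B p t m).2)).1,
          (Nat.unpair (loc (S B p m (st B p t m).1) (st B p t m).2)).2) = es m
        rw [hstm, hl, Nat.unpair_pair]
        rfl
      refine ⟨fun k hk => ?_, ?_⟩
      · rcases Nat.lt_succ_iff_lt_or_eq.1 hk with hk' | hk'
        · exact hCm k hk'
        · subst hk'; exact he
      · show (Nat.unpair (loc (S B p m (st B p t m).1) (st B p t m).2)).1 = w
        rw [hstm, hl, Nat.unpair_pair]
        exact hterm

lemma psi_val {t : ℝ} (ht : t ∈ Dset p) : (psi hpos hrec t).val = edg B p t := by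
  show PsiF B p t = edg B p t
  simp only [PsiF, if_pos ht]

lemma cyl_inter {m : ℕ} {es : ℕ → GBDEdge} {w : ℕ} (h : B.IsFinPathTo m es w) :
    psi hpos hrec ⁻¹' (B.cyl m es w) ∩ Dset p =
      Set.Ico (A B p m es w) (A B p m es w + p m w) := by
  ext t
  simp only [Set.mem_inter_iff, Set.mem_preimage, Set.mem_Ico]
  constructor
  · rintro ⟨⟨hc1, hc2⟩, htD⟩
    have hv := psi_val hpos hrec htD
    have hC : ∀ k < m, edg B p t k = es k :=
      fun k hk => (congrFun hv k).symm.trans (hc1 k hk)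
    have hst : (st B p t m).1 = w := by
      rw [hv] at hc2
      exact hc2
    obtain ⟨hx, hy, -⟩ := (main_corr hpos hrec h htD).1 ⟨hC, hst⟩
    exact ⟨hx, hy⟩
  · intro hIco
    have htD : t ∈ Dset p := by
      obtain ⟨hA0, w', hw'⟩ := A_bound hpos hrec h
      exact Set.mem_iUnion.2 ⟨w', ⟨le_trans hA0 hIco.1, lt_of_lt_of_le hIco.2 hw'⟩⟩
    obtain ⟨hC, hst⟩ := (main_corr hpos hrec h htD).2 hIco
    have hv := psi_val hpos hrec htD
    refine ⟨⟨fun n hn => ?_, ?_⟩, htD⟩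
    · rw [hv]; exact hC n hn
    · rw [hv]; exact hst

end Main

noncomputable def mu (hpos : ∀ n w, 0 ≤ p n w)
    (hrec : ∀ n w, HasSum (fun v : ℕ => (B.f n v w : ℝ) * p (n + 1) v) (p n w)) :
    Measure B.PathSpace :=
  Measure.map (psi hpos hrec) (volume.restrict (Dset p))

lemma mu_cyl (hpos : ∀ n w, 0 ≤ p n w)
    (hrec : ∀ n w, HasSum (fun v : ℕ => (B.f n v w : ℝ) * p (n + 1) v) (p n w))
    {m : ℕ} {es : ℕ → GBDEdge} {w : ℕ} (h : B.IsFinPathTo m es w) :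
    mu hpos hrec (B.cyl m es w) = ENNReal.ofReal (p m w) := by
  rw [mu, Measure.map_apply (measurable_psi hpos hrec) (measurableSet_cyl m es w),
    Measure.restrict_apply (measurable_psi hpos hrec (measurableSet_cyl m es w)),
    cyl_inter hpos hrec h, Real.volume_Ico, add_sub_cancel_left]

/-! ### The cylinder sets form a generating π-system -/

variable (B) in
def cylSet : Set (Set B.PathSpace) :=
  {s | ∃ m es w, B.IsFinPathTo m es w ∧ s = B.cyl m es w}

lemma coord_measurable_gen (n : ℕ) :
    @Measurable B.PathSpace GBDEdge (MeasurableSpace.generateFrom (cylSet B)) _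
      (fun x => x.val n) := by
  letI : MeasurableSpace B.PathSpace := MeasurableSpace.generateFrom (cylSet B)
  apply measurable_to_countable'
  intro e
  have hrep : ((fun x : B.PathSpace => x.val n) ⁻¹' {e}) =
      ⋃ (g : Fin (n + 1) → GBDEdge)
        (_ : B.IsFinPathTo (n + 1) (fun k => if h : k < n + 1 then g ⟨k, h⟩ else e)
            ((g ⟨n, Nat.lt_succ_self n⟩).rng) ∧ g ⟨n, Nat.lt_succ_self n⟩ = e),
        B.cyl (n + 1) (fun k => if h : k < n + 1 then g ⟨k, h⟩ else e)
          ((g ⟨n, Nat.lt_succ_self n⟩).rng) := by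
    ext x
    simp only [Set.mem_preimage, Set.mem_singleton_iff, Set.mem_iUnion]
    constructor
    · intro hx
      refine ⟨fun k => x.val k.val, ⟨⟨fun k hk => ?_, fun k hk => ?_, fun k hk => ?_⟩, hx⟩,
        ⟨fun k hk => ?_, ?_⟩⟩
      · simp only [dif_pos hk]
        exact x.2.1 k
      · simp only [dif_pos (by omega : k < n + 1)]
        simp only [dif_pos (by omega : k + 1 < n + 1)]
        exact x.2.2 k
      · have hkn : k = n := by omega
        subst hkn
        simp only [dif_pos (Nat.lt_succ_self k)]
      · simp only [dif_pos hk]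
      · show (x.val (n + 1)).src = (x.val n).rng
        exact (x.2.2 n).symm
    · rintro ⟨g, ⟨-, hge⟩, hcyl, -⟩
      have hxn := hcyl n (Nat.lt_succ_self n)
      simp only [dif_pos (Nat.lt_succ_self n)] at hxn
      rw [hxn, hge]
  rw [hrep]
  exact MeasurableSet.iUnion fun g => MeasurableSet.iUnion fun hg =>
    MeasurableSpace.measurableSet_generateFrom ⟨n + 1, _, _, hg.1, rfl⟩

lemma generate_eq :
    (inferInstance : MeasurableSpace B.PathSpace) =
      MeasurableSpace.generateFrom (cylSet B) := by
  apply le_antisymm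
  · have hval : @Measurable B.PathSpace (ℕ → GBDEdge)
        (MeasurableSpace.generateFrom (cylSet B)) _ Subtype.val := by
      letI : MeasurableSpace B.PathSpace := MeasurableSpace.generateFrom (cylSet B)
      exact measurable_pi_iff.2 fun n => coord_measurable_gen n
    exact measurable_iff_comap_le.1 hval
  · apply MeasurableSpace.generateFrom_le
    rintro s ⟨m, es, w, -, rfl⟩
    exact measurableSet_cyl m es w

lemma cyl_subset_of_le {m m' : ℕ} {es es' : ℕ → GBDEdge} {w w' : ℕ} (hmm : m ≤ m')
    (hne : (B.cyl m es w ∩ B.cyl m' es' w').Nonempty) :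
    B.cyl m' es' w' ⊆ B.cyl m es w := by
  obtain ⟨x, hx1, hx2⟩ := hne
  intro y hy
  refine ⟨fun k hk => ?_, ?_⟩
  · rw [hy.1 k (lt_of_lt_of_le hk hmm), ← hx2.1 k (lt_of_lt_of_le hk hmm)]
    exact hx1.1 k hk
  · rcases eq_or_lt_of_le hmm with rfl | hlt
    · rw [hy.2, ← hx2.2]
      exact hx1.2
    · rw [hy.1 m hlt, ← hx2.1 m hlt]
      exact hx1.2

lemma isPiSystem_cyl : IsPiSystem (cylSet B) := by
  rintro s ⟨m, es, w, hp1, rfl⟩ t' ⟨m', es', w', hp', rfl⟩ hne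
  rcases le_total m m' with hmm | hmm
  · rw [Set.inter_eq_self_of_subset_right (cyl_subset_of_le hmm hne)]
    exact ⟨m', es', w', hp', rfl⟩
  · have hne' : (B.cyl m' es' w' ∩ B.cyl m es w).Nonempty := by rwa [Set.inter_comm]
    rw [Set.inter_eq_self_of_subset_left (cyl_subset_of_le hmm hne')]
    exact ⟨m, es, w, hp1, rfl⟩

lemma isFinPathTo_zero (w : ℕ) (es : ℕ → GBDEdge) : B.IsFinPathTo 0 es w :=
  ⟨fun n hn => absurd hn (by omega), fun n hn => absurd hn (by omega),
   fun k hk => absurd hk (by omega)⟩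

lemma cyl_zero_cover : ⋃ w, B.cyl 0 (fun _ => ((0, 0, 0) : GBDEdge)) w = Set.univ := by
  ext x
  simp only [Set.mem_iUnion, Set.mem_univ, iff_true]
  exact ⟨(x.val 0).src, ⟨fun n hn => absurd hn (by omega), rfl⟩⟩

lemma unique_measure (μ ν : Measure B.PathSpace)
    (hμ : ∀ m w (es : ℕ → GBDEdge), B.IsFinPathTo m es w →
      μ (B.cyl m es w) = ENNReal.ofReal (p m w))
    (hν : ∀ m w (es : ℕ → GBDEdge), B.IsFinPathTo m es w →
      ν (B.cyl m es w) = ENNReal.ofReal (p m w)) : μ = ν := by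
  refine MeasureTheory.Measure.ext_of_generateFrom_of_iUnion (cylSet B)
    (fun w => B.cyl 0 (fun _ => ((0, 0, 0) : GBDEdge)) w) generate_eq isPiSystem_cyl
    cyl_zero_cover (fun w => ⟨0, _, w, isFinPathTo_zero w _, rfl⟩)
    (fun w => by
      rw [hμ 0 w _ (isFinPathTo_zero w _)]
      exact ENNReal.ofReal_ne_top) ?_
  rintro s ⟨m, es, w, hp', rfl⟩
  rw [hμ m w es hp', hν m w es hp']

end

end Stmt1Aux
/-- Given nonnegative real vectors `p^{(n)}` with
`Fₙᵀ p^{(n+1)} = p^{(n)}` for all `n`, there is a unique tail-invariant Borel measure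
`μ` on the path space with `μ [es] = p n w` for every finite path `es` of length `n`
ending at `w ∈ V_n`. -/
theorem stmt1 (B : GBD) (p : ℕ → ℕ → ℝ)
    (hpos : ∀ n w, 0 ≤ p n w)
    (hrec : ∀ n w, HasSum (fun v : ℕ => (B.f n v w : ℝ) * p (n + 1) v) (p n w)) :
    ∃! μ : Measure B.PathSpace, B.TailInvariant μ ∧
      ∀ n w (es : ℕ → GBDEdge), B.IsFinPathTo n es w →
        μ (B.cyl n es w) = ENNReal.ofReal (p n w) := by
  refine ⟨Stmt1Aux.mu hpos hrec, ⟨?_, fun n w es h => Stmt1Aux.mu_cyl hpos hrec h⟩, ?_⟩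
  · intro m es es' w h h'
    rw [Stmt1Aux.mu_cyl hpos hrec h, Stmt1Aux.mu_cyl hpos hrec h']
  · rintro ν ⟨-, hν⟩
    exact Stmt1Aux.unique_measure ν (Stmt1Aux.mu hpos hrec) hν
      (fun m w es h => Stmt1Aux.mu_cyl hpos hrec h)
end

section
/- Let B be a generalized Bratteli diagram with incidence matrices (F_n), let B̄ be the vertex subdiagram determined by nonempty proper subsets W_n ⊂ V_n, let μ̄ be a tail-invariant probability measure on X_{B̄} with cylinder vectors p̄^(n), and let μ̂ be the canonical extension of μ̄. Then μ̂(X̂_{B̄}) = 1 + ∑_{n=0}^∞ ∑_{v∈W_{n+1}} ∑_{w∈V_n∖W_n} f^(n)_{vw} H^(n)_w p̄^(n+1)_v, as an equality in [0,∞]. In particular, μ̂(X̂_{B̄}) < ∞ if and only if ∑_{n=0}^∞ ∑_{v∈W_{n+1}} ∑_{w∈V_n∖W_n} f^(n)_{vw} H^(n)_w p̄^(n+1)_v < ∞. -/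
open MeasureTheory
open scoped ENNReal

/-- The path space of the vertex subdiagram of `B` determined by the vertex sets `W n`. -/
def SubXB (B : GBD) (W : ℕ → Set ℕ) : Set B.PathSpace :=
  {x | ∀ n, (x.val n).src ∈ W n ∧ (x.val n).rng ∈ W (n + 1)}

/-- The saturation `X̂_{B̄}`: all paths of `X_B` tail equivalent to a path of `X_{B̄}`. -/
def SubXHat (B : GBD) (W : ℕ → Set ℕ) : Set B.PathSpace :=
  {x | ∃ y ∈ SubXB B W, B.TailEquiv x y}


namespace Stmt3Aux

lemma measurable_val (B : GBD) (m : ℕ) : Measurable fun x : B.PathSpace => x.val m :=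
  (measurable_pi_apply m).comp measurable_subtype_coe

/-- The "partial cylinder with tail condition" sets are measurable. -/
lemma measKeySet (B : GBD) (W : ℕ → Set ℕ) (j n w : ℕ) (es : ℕ → GBDEdge) :
    MeasurableSet {x : B.PathSpace | (∀ m, j ≤ m → m < n → x.val m = es m) ∧
      (x.val j).src = w ∧
      ∀ m, n ≤ m → (x.val m).src ∈ W m ∧ (x.val m).rng ∈ W (m + 1)} := by
  have hEq : {x : B.PathSpace | (∀ m, j ≤ m → m < n → x.val m = es m) ∧
      (x.val j).src = w ∧
      ∀ m, n ≤ m → (x.val m).src ∈ W m ∧ (x.val m).rng ∈ W (m + 1)} =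
      ⋂ m, (fun x : B.PathSpace => x.val m) ⁻¹'
        {e : GBDEdge | (j ≤ m → m < n → e = es m) ∧ (m = j → e.src = w) ∧
          (n ≤ m → e.src ∈ W m ∧ e.rng ∈ W (m + 1))} := by
    ext x
    simp only [Set.mem_setOf_eq, Set.mem_iInter, Set.mem_preimage]
    constructor
    · rintro ⟨h1, h2, h3⟩ m
      exact ⟨h1 m, fun h => by subst h; exact h2, h3 m⟩
    · intro h
      exact ⟨fun m => (h m).1, (h j).2.1 rfl, fun m => (h m).2.2⟩
  rw [hEq]
  exact MeasurableSet.iInter fun m =>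
    (measurable_val B m) ((Set.to_countable _).measurableSet)

lemma tsum_ite_lt (k : ℕ) (c : ℝ≥0∞) :
    (∑' i : ℕ, if i < k then c else 0) = (k : ℝ≥0∞) * c := by
  rw [tsum_eq_sum (s := Finset.range k)
      (fun i hi => by simp [Finset.mem_range] at hi; simp [hi])]
  rw [Finset.sum_congr rfl (fun i hi => if_pos (Finset.mem_range.mp hi)),
    Finset.sum_const, Finset.card_range, nsmul_eq_mul]

/-- Summing `H j (src e)` over all edges at level `j` with range `w` gives `H (j+1) w`. -/
lemma edge_tsum (B : GBD) (H : ℕ → ℕ → ℝ≥0∞)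
    (hHrec : ∀ n v, H (n + 1) v = ∑' w : ℕ, (B.f n v w : ℝ≥0∞) * H n w)
    (j w : ℕ) :
    (∑' e : ↥{e : GBDEdge | B.IsEdge j e ∧ e.rng = w}, H j e.val.src) = H (j + 1) w := by
  classical
  rw [hHrec]
  rw [tsum_subtype {e : GBDEdge | B.IsEdge j e ∧ e.rng = w} (fun e => H j e.src)]
  have h1 : (∑' e : GBDEdge,
      ({e : GBDEdge | B.IsEdge j e ∧ e.rng = w}).indicator (fun e => H j e.src) e)
      = ∑' (u : ℕ) (q : ℕ × ℕ),
        ({e : GBDEdge | B.IsEdge j e ∧ e.rng = w}).indicator (fun e => H j e.src) (u, q) :=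
    ENNReal.tsum_prod (f := fun u q =>
      ({e : GBDEdge | B.IsEdge j e ∧ e.rng = w}).indicator (fun e => H j e.src) (u, q))
  rw [h1]
  refine tsum_congr fun u => ?_
  have h2 : (∑' q : ℕ × ℕ,
      ({e : GBDEdge | B.IsEdge j e ∧ e.rng = w}).indicator (fun e => H j e.src) (u, q))
      = ∑' (r : ℕ) (i : ℕ),
        ({e : GBDEdge | B.IsEdge j e ∧ e.rng = w}).indicator (fun e => H j e.src) (u, r, i) :=
    ENNReal.tsum_prod (f := fun r i =>
      ({e : GBDEdge | B.IsEdge j e ∧ e.rng = w}).indicator (fun e => H j e.src) (u, r, i))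
  rw [h2]
  rw [tsum_eq_single w (fun r hr => ?_)]
  · have h3 : ∀ i : ℕ,
        ({e : GBDEdge | B.IsEdge j e ∧ e.rng = w}).indicator (fun e => H j e.src) (u, w, i)
        = if i < B.f j w u then H j u else 0 := by
      intro i
      by_cases h : i < B.f j w u
      · rw [Set.indicator_of_mem]
        · simp [GBDEdge.src, if_pos h]
        · exact ⟨h, rfl⟩
      · rw [Set.indicator_of_notMem, if_neg h]
        intro hmem
        exact h hmem.1
    rw [tsum_congr h3, tsum_ite_lt]
  · have : ∀ i : ℕ,
        ({e : GBDEdge | B.IsEdge j e ∧ e.rng = w}).indicator (fun e => H j e.src) (u, r, i)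
        = 0 := by
      intro i
      apply Set.indicator_of_notMem
      intro hmem
      exact hr hmem.2
    rw [tsum_congr this, tsum_zero]

/-- Key lemma: the measure of the set of paths agreeing with the finite path `es` on
`[j, n)` (with source `w` at level `j`, terminal vertex `v ∈ W n`) and staying in the
subdiagram from level `n` on, equals `H j w * p n v`. -/
lemma key (B : GBD) (W : ℕ → Set ℕ) (H : ℕ → ℕ → ℝ≥0∞)
    (hH0 : ∀ w, H 0 w = 1)
    (hHrec : ∀ n v, H (n + 1) v = ∑' w : ℕ, (B.f n v w : ℝ≥0∞) * H n w)
    (p : ℕ → ℕ → ℝ≥0∞) (μ : Measure B.PathSpace)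
    (hval : ∀ n, ∀ v ∈ W n, ∀ es, B.IsFinPathTo n es v →
      μ {x | x ∈ B.cyl n es v ∧
          ∀ m, n ≤ m → (x.val m).src ∈ W m ∧ (x.val m).rng ∈ W (m + 1)} = p n v) :
    ∀ j n, j ≤ n → ∀ v, v ∈ W n → ∀ w (es : ℕ → GBDEdge),
    (∀ m, j ≤ m → m < n → B.IsEdge m (es m)) →
    (∀ m, j ≤ m → m + 1 < n → (es m).rng = (es (m + 1)).src) →
    (∀ k, j ≤ k → n = k + 1 → (es k).rng = v) →
    (j < n → (es j).src = w) →
    (j = n → w = v) →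
    μ {x : B.PathSpace | (∀ m, j ≤ m → m < n → x.val m = es m) ∧ (x.val j).src = w ∧
        ∀ m, n ≤ m → (x.val m).src ∈ W m ∧ (x.val m).rng ∈ W (m + 1)} = H j w * p n v := by
  intro j
  induction j with
  | zero =>
    intro n _ v hv w es hEdges hChain hEnd hsrc hw
    have hset : {x : B.PathSpace | (∀ m, 0 ≤ m → m < n → x.val m = es m) ∧
        (x.val 0).src = w ∧
        ∀ m, n ≤ m → (x.val m).src ∈ W m ∧ (x.val m).rng ∈ W (m + 1)}
        = {x : B.PathSpace | x ∈ B.cyl n es v ∧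
          ∀ m, n ≤ m → (x.val m).src ∈ W m ∧ (x.val m).rng ∈ W (m + 1)} := by
      ext x
      simp only [Set.mem_setOf_eq, GBD.cyl]
      constructor
      · rintro ⟨h1, h2, h3⟩
        refine ⟨⟨fun m hm => h1 m (Nat.zero_le _) hm, ?_⟩, h3⟩
        rcases n with _ | k
        · rw [h2]; exact hw rfl
        · rw [← x.2.2 k, h1 k (Nat.zero_le _) (Nat.lt_succ_self k)]
          exact hEnd k (Nat.zero_le _) rfl
      · rintro ⟨⟨h1, h2⟩, h3⟩
        refine ⟨fun m _ hm => h1 m hm, ?_, h3⟩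
        rcases n with _ | k
        · rw [h2]; exact (hw rfl).symm
        · rw [h1 0 (Nat.succ_pos k)]
          exact hsrc (Nat.succ_pos k)
    rw [hset, hval n v hv es
      ⟨fun m hm => hEdges m (Nat.zero_le _) hm,
       fun m hm => hChain m (Nat.zero_le _) hm,
       fun k hk => hEnd k (Nat.zero_le _) hk⟩, hH0, one_mul]
  | succ j ih =>
    intro n hjn v hv w es hEdges hChain hEnd hsrc hw
    have hjlt : j < n := Nat.lt_of_lt_of_le (Nat.lt_succ_self j) hjn
    set S : ↥{e : GBDEdge | B.IsEdge j e ∧ e.rng = w} → Set B.PathSpace := fun e =>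
      {x : B.PathSpace |
        (∀ m, j ≤ m → m < n → x.val m = Function.update es j e.val m) ∧
        (x.val j).src = e.val.src ∧
        ∀ m, n ≤ m → (x.val m).src ∈ W m ∧ (x.val m).rng ∈ W (m + 1)} with hS
    have hxj_mem : ∀ e, ∀ x ∈ S e, x.val j = e.val := by
      intro e x hx
      have := hx.1 j le_rfl hjlt
      rwa [Function.update_self] at this
    have hunion : {x : B.PathSpace |
        (∀ m, j + 1 ≤ m → m < n → x.val m = es m) ∧ (x.val (j + 1)).src = w ∧
        ∀ m, n ≤ m → (x.val m).src ∈ W m ∧ (x.val m).rng ∈ W (m + 1)} = ⋃ e, S e := by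
      ext x
      simp only [hS, Set.mem_setOf_eq, Set.mem_iUnion]
      constructor
      · rintro ⟨h1, h2, h3⟩
        refine ⟨⟨x.val j, x.2.1 j, by rw [x.2.2 j]; exact h2⟩, ?_, rfl, h3⟩
        intro m hjm hmn
        rcases Nat.eq_or_lt_of_le hjm with h | h
        · rw [← h, Function.update_self]
        · rw [Function.update_of_ne (by omega)]
          exact h1 m h hmn
      · rintro ⟨e, h1, h2, h3⟩
        have hxj : x.val j = e.val := by
          have := h1 j le_rfl hjlt
          rwa [Function.update_self] at this
        refine ⟨?_, ?_, h3⟩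
        · intro m hm hmn
          have := h1 m (by omega) hmn
          rwa [Function.update_of_ne (by omega)] at this
        · rw [← x.2.2 j, hxj]; exact e.2.2
    have hdisj : Pairwise (Function.onFun Disjoint S) := by
      intro e e' hne
      refine Set.disjoint_left.mpr fun x hx hx' => hne ?_
      apply Subtype.ext
      rw [← hxj_mem e x hx, hxj_mem e' x hx']
    have hmeas : ∀ e, MeasurableSet (S e) := fun e =>
      measKeySet B W j n e.val.src (Function.update es j e.val)
    rw [hunion, measure_iUnion hdisj hmeas]
    have hterm : ∀ e : ↥{e : GBDEdge | B.IsEdge j e ∧ e.rng = w},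
        μ (S e) = H j e.val.src * p n v := by
      intro e
      refine ih n (le_of_lt hjlt) v hv e.val.src (Function.update es j e.val)
        ?_ ?_ ?_ ?_ ?_
      · intro m hm hmn
        rcases Nat.eq_or_lt_of_le hm with h | h
        · subst h
          rw [Function.update_self]
          exact e.2.1
        · rw [Function.update_of_ne (by omega)]
          exact hEdges m (by omega) hmn
      · intro m hm h1
        rcases Nat.eq_or_lt_of_le hm with h | h
        · subst h
          rw [Function.update_self, Function.update_of_ne (by omega)]
          rw [e.2.2, hsrc (by omega)]
        · rw [Function.update_of_ne (by omega), Function.update_of_ne (by omega)]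
          exact hChain m (by omega) h1
      · intro k hk hnk
        rcases Nat.eq_or_lt_of_le hk with h | h
        · subst h
          rw [Function.update_self, e.2.2]
          exact hw (by omega)
        · rw [Function.update_of_ne (by omega)]
          exact hEnd k (by omega) hnk
      · intro _
        rw [Function.update_self]
      · intro h; omega
    rw [tsum_congr hterm, ENNReal.tsum_mul_right, edge_tsum B H hHrec j w]

/-- Backward extension: every vertex of `W n` is reachable by a finite path inside
the subdiagram. -/
lemma exists_prefix (B : GBD) (W : ℕ → Set ℕ)
    (hWin : ∀ n, ∀ v ∈ W (n + 1), ∃ w ∈ W n, 0 < B.f n v w) :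
    ∀ n v, v ∈ W n → ∃ es : ℕ → GBDEdge,
      (∀ m, m < n → B.IsEdge m (es m) ∧ (es m).src ∈ W m ∧ (es m).rng ∈ W (m + 1)) ∧
      (∀ m, m + 1 < n → (es m).rng = (es (m + 1)).src) ∧
      (∀ k, n = k + 1 → (es k).rng = v) := by
  intro n
  induction n with
  | zero =>
    intro v _
    exact ⟨fun _ => (0, 0, 0), fun m hm => absurd hm (by omega),
      fun m hm => absurd hm (by omega), fun k hk => absurd hk (by omega)⟩
  | succ n ihn =>
    intro v hv
    obtain ⟨w, hwW, hfw⟩ := hWin n v hv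
    obtain ⟨es, h1, h2, h3⟩ := ihn w hwW
    refine ⟨Function.update es n (w, v, 0), ?_, ?_, ?_⟩
    · intro m hm
      rcases Nat.lt_succ_iff_lt_or_eq.mp hm with h | h
      · rw [Function.update_of_ne (by omega)]
        exact h1 m h
      · subst h
        rw [Function.update_self]
        exact ⟨hfw, hwW, hv⟩
    · intro m hm
      have hmn : m + 1 ≤ n := by omega
      rcases Nat.eq_or_lt_of_le hmn with h | h
      · rw [Function.update_of_ne (by omega), h, Function.update_self, h3 m h.symm]
        rfl
      · rw [Function.update_of_ne (by omega), Function.update_of_ne (by omega)]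
        exact h2 m h
    · intro k hk
      have : k = n := by omega
      subst this
      rw [Function.update_self]
      rfl

end Stmt3Aux

/-- Measure-extension formula for a vertex subdiagram `B̄` of a
generalized Bratteli diagram `B`: if `μ̄` is a tail-invariant probability measure on
`X_{B̄}` with cylinder vectors `p̄^{(n)}` and `μ̂` is its canonical extension, then
`μ̂(X̂_{B̄}) = 1 + ∑_{n} ∑_{v ∈ W_{n+1}} ∑_{w ∈ V_n∖W_n} f n v w * H n w * p (n+1) v`;
in particular `μ̂(X̂_{B̄})` is finite iff this series is finite. -/
theorem stmt3 (B : GBD) (W : ℕ → Set ℕ)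
    (hWne : ∀ n, (W n).Nonempty) (hWproper : ∀ n, W n ≠ Set.univ)
    (hWin : ∀ n, ∀ v ∈ W (n + 1), ∃ w ∈ W n, 0 < B.f n v w)
    (hWout : ∀ n, ∀ w ∈ W n, ∃ v ∈ W (n + 1), 0 < B.f n v w)
    (H : ℕ → ℕ → ℝ≥0∞)
    (hH0 : ∀ w, H 0 w = 1)
    (hHrec : ∀ n v, H (n + 1) v = ∑' w : ℕ, (B.f n v w : ℝ≥0∞) * H n w)
    (p : ℕ → ℕ → ℝ≥0∞)
    (hprob : (∑' w : ↥(W 0), p 0 (w : ℕ)) = 1)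
    (hprec : ∀ n, ∀ w ∈ W n,
      (∑' v : ↥(W (n + 1)), (B.f n (v : ℕ) w : ℝ≥0∞) * p (n + 1) (v : ℕ)) = p n w)
    (μ : Measure B.PathSpace)
    (hnull : μ ((SubXHat B W)ᶜ) = 0)
    (hval : ∀ n, ∀ v ∈ W n, ∀ es, B.IsFinPathTo n es v →
      μ {x | x ∈ B.cyl n es v ∧
          ∀ m, n ≤ m → (x.val m).src ∈ W m ∧ (x.val m).rng ∈ W (m + 1)} = p n v) :
    (μ (SubXHat B W)
      = 1 + ∑' n : ℕ, ∑' v : ↥(W (n + 1)), ∑' w : ↥((W n)ᶜ),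
          (B.f n (v : ℕ) (w : ℕ) : ℝ≥0∞) * H n (w : ℕ) * p (n + 1) (v : ℕ)) ∧
    (μ (SubXHat B W) < ∞ ↔
      (∑' n : ℕ, ∑' v : ↥(W (n + 1)), ∑' w : ↥((W n)ᶜ),
          (B.f n (v : ℕ) (w : ℕ) : ℝ≥0∞) * H n (w : ℕ) * p (n + 1) (v : ℕ)) < ∞) := by
  classical
  set D : ℕ → ℝ≥0∞ := fun n => ∑' v : ↥(W (n + 1)), ∑' w : ↥((W n)ᶜ),
      (B.f n (v : ℕ) (w : ℕ) : ℝ≥0∞) * H n (w : ℕ) * p (n + 1) (v : ℕ) with hD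
  set M : ℕ → ℝ≥0∞ := fun n => ∑' v : ↥(W n), H n (v : ℕ) * p n (v : ℕ) with hM
  set A : ℕ → Set B.PathSpace := fun n =>
    {x : B.PathSpace | ∀ m, n ≤ m → (x.val m).src ∈ W m ∧ (x.val m).rng ∈ W (m + 1)}
    with hA
  have key := Stmt3Aux.key B W H hH0 hHrec p μ hval
  have hAn : ∀ n, μ (A n) = M n := by
    intro n
    have hunion : A n = ⋃ v : ↥(W n),
        {x : B.PathSpace | (∀ m, n ≤ m → m < n → x.val m = (fun _ => (0, 0, 0)) m) ∧
          (x.val n).src = (v : ℕ) ∧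
          ∀ m, n ≤ m → (x.val m).src ∈ W m ∧ (x.val m).rng ∈ W (m + 1)} := by
      ext x
      simp only [hA, Set.mem_setOf_eq, Set.mem_iUnion]
      constructor
      · intro hx
        exact ⟨⟨(x.val n).src, (hx n le_rfl).1⟩, fun m h1 h2 => absurd h2 (by omega),
          rfl, hx⟩
      · rintro ⟨v, _, _, h3⟩
        exact h3
    rw [hunion, measure_iUnion ?_ ?_]
    · refine tsum_congr fun v => ?_
      exact key n n le_rfl (v : ℕ) v.2 (v : ℕ) (fun _ => (0, 0, 0))
        (fun m h1 h2 => absurd h2 (by omega)) (fun m h1 h2 => absurd h2 (by omega))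
        (fun k h1 h2 => absurd h2 (by omega)) (fun h => absurd h (by omega))
        (fun _ => rfl)
    · intro v v' hne
      refine Set.disjoint_left.mpr fun x hx hx' => hne ?_
      apply Subtype.ext
      rw [← hx.2.1, hx'.2.1]
    · intro v
      exact Stmt3Aux.measKeySet B W n n (v : ℕ) (fun _ => (0, 0, 0))
  have hXhat : SubXHat B W = ⋃ n, A n := by
    ext x
    simp only [SubXHat, Set.mem_setOf_eq, Set.mem_iUnion, hA]
    constructor
    · rintro ⟨y, hy, N, hN⟩
      exact ⟨N, fun m hm => by rw [hN m hm]; exact hy m⟩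
    · rintro ⟨n, hx⟩
      obtain ⟨es, h1, h2, h3⟩ :=
        Stmt3Aux.exists_prefix B W hWin n (x.val n).src (hx n le_rfl).1
      refine ⟨⟨fun m => if m < n then es m else x.val m, ?_, ?_⟩, ?_, n, ?_⟩
      · intro m
        by_cases h : m < n
        · simp only [if_pos h]; exact (h1 m h).1
        · simp only [if_neg h]; exact x.2.1 m
      · intro m
        by_cases hm1 : m + 1 < n
        · simp only [if_pos hm1, if_pos (by omega : m < n)]
          exact h2 m hm1
        · by_cases hm : m < n
          · have hn : n = m + 1 := by omega
            simp only [if_pos hm, if_neg hm1]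
            rw [h3 m hn, hn]
          · simp only [if_neg hm, if_neg hm1]
            exact x.2.2 m
      · intro m
        by_cases h : m < n
        · simp only [if_pos h]
          exact ⟨(h1 m h).2.1, (h1 m h).2.2⟩
        · simp only [if_neg h]
          exact hx m (by omega)
      · intro m hm
        simp only [if_neg (by omega : ¬ m < n)]
  have hmono : Monotone A := by
    intro a b hab x hx m hm
    exact hx m (le_trans hab hm)
  have hmu : μ (SubXHat B W) = ⨆ n, M n := by
    rw [hXhat, hmono.directed_le.measure_iUnion]
    exact iSup_congr hAn
  have hMrec : ∀ n, M (n + 1) = M n + D n := by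
    intro n
    have step1 : M (n + 1) = ∑' v : ↥(W (n + 1)), ∑' w : ℕ,
        (B.f n (v : ℕ) w : ℝ≥0∞) * H n w * p (n + 1) (v : ℕ) := by
      refine tsum_congr fun v => ?_
      rw [hHrec, ← ENNReal.tsum_mul_right]
    have step2 : ∀ v : ↥(W (n + 1)), (∑' w : ℕ,
        (B.f n (v : ℕ) w : ℝ≥0∞) * H n w * p (n + 1) (v : ℕ))
        = (∑' w : ↥(W n),
            (B.f n (v : ℕ) (w : ℕ) : ℝ≥0∞) * H n (w : ℕ) * p (n + 1) (v : ℕ))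
          + ∑' w : ↥((W n)ᶜ),
            (B.f n (v : ℕ) (w : ℕ) : ℝ≥0∞) * H n (w : ℕ) * p (n + 1) (v : ℕ) :=
      fun v => (ENNReal.summable.tsum_add_tsum_compl ENNReal.summable).symm
    have hfirst : (∑' v : ↥(W (n + 1)), ∑' w : ↥(W n),
        (B.f n (v : ℕ) (w : ℕ) : ℝ≥0∞) * H n (w : ℕ) * p (n + 1) (v : ℕ)) = M n := by
      rw [ENNReal.tsum_comm]
      refine tsum_congr fun w => ?_
      rw [← hprec n (w : ℕ) w.2, ← ENNReal.tsum_mul_left]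
      exact tsum_congr fun v => by ring
    rw [step1, tsum_congr step2, ENNReal.tsum_add, hfirst]
  have hMn : ∀ n, M n = 1 + ∑ k ∈ Finset.range n, D k := by
    intro n
    induction n with
    | zero =>
      simp only [Finset.range_zero, Finset.sum_empty, add_zero, hM]
      rw [← hprob]
      exact tsum_congr fun v => by rw [hH0, one_mul]
    | succ n ihn =>
      rw [hMrec n, ihn, Finset.sum_range_succ, add_assoc]
  have hfinal : μ (SubXHat B W) = 1 + ∑' n, D n := by
    rw [hmu, ENNReal.tsum_eq_iSup_nat, ENNReal.add_iSup]
    exact iSup_congr hMn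
  refine ⟨hfinal, ?_⟩
  rw [hfinal]
  simp [ENNReal.add_lt_top]
end

section
/- Let B be a diagram of infinite odometers (DIO). Then the sets X̂_{B̄_i}, i ≥ 1, are pairwise disjoint and X_B = ⊔_{i≥1} X̂_{B̄_i}. Equivalently: for every infinite path x ∈ X_B, the vertex sequence s_n = source(x_n) satisfies s_n ∈ {s_{n+1}, s_{n+1}+1} for all n, is eventually constant, and its eventual value i is the unique index with x ∈ X̂_{B̄_i}. -/
open MeasureTheory
open scoped ENNReal

/-- The diagram of infinite odometers (DIO) determined by the numbers `a n i ≥ 2`: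
there are `a n i` vertical edges from the vertex `i ∈ V_n` to the vertex `i ∈ V_{n+1}`,
and a single edge from the vertex `i+1 ∈ V_n` to the vertex `i ∈ V_{n+1}`.
Vertices are indexed by `ℕ` starting from `0`, so vertex `i` here corresponds to
vertex `i + 1` in the paper. -/
def DIO (a : ℕ → ℕ → ℕ) (ha : ∀ n i, 2 ≤ a n i) : GBD where
  f := fun n v w => if w = v then a n v else if w = v + 1 then 1 else 0
  in_pos := fun n v => ⟨v, by
    simp only [if_pos rfl]
    exact lt_of_lt_of_le (by norm_num) (ha n v)⟩
  out_pos := fun n w => ⟨w, by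
    simp only [if_pos rfl]
    exact lt_of_lt_of_le (by norm_num) (ha n w)⟩
  in_fin := fun n v => by
    apply Set.Finite.subset ((Set.finite_singleton (v + 1)).insert v)
    intro w hw
    rcases eq_or_ne w v with h | h
    · exact Set.mem_insert_iff.mpr (Or.inl h)
    · rcases eq_or_ne w (v + 1) with h' | h'
      · exact Set.mem_insert_iff.mpr (Or.inr h')
      · exact absurd (by simp [h, h']) hw

/-- The path space `X_{B̄_i}` of the vertical odometer subdiagram `B̄_i` through
the vertex `i`: all paths using only vertical edges at the vertex `i`. -/
def XBar (a : ℕ → ℕ → ℕ) (ha : ∀ n i, 2 ≤ a n i) (i : ℕ) : Set (DIO a ha).PathSpace :=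
  {x | ∀ n, (x.val n).src = i ∧ (x.val n).rng = i}

/-- The saturation `X̂_{B̄_i}`: all paths tail equivalent to a path of `X_{B̄_i}`. -/
def XHat (a : ℕ → ℕ → ℕ) (ha : ∀ n i, 2 ≤ a n i) (i : ℕ) : Set (DIO a ha).PathSpace :=
  {x | ∃ y ∈ XBar a ha i, (DIO a ha).TailEquiv x y}

/-- `μ` is the canonical extension `μ̂_i` of the unique tail-invariant probability
measure `μ̄_i` of the vertical odometer `B̄_i`: it is tail invariant, vanishes outside
`X̂_{B̄_i}`, and its restriction to `X_{B̄_i}` equals `μ̄_i`, i.e. every cylinder of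
`X_{B̄_i}` of length `n` has measure `1/(a 0 i ⋯ a (n-1) i)`. -/
def IsCanonicalExt (a : ℕ → ℕ → ℕ) (ha : ∀ n i, 2 ≤ a n i) (i : ℕ)
    (μ : Measure (DIO a ha).PathSpace) : Prop :=
  (DIO a ha).TailInvariant μ ∧ μ ((XHat a ha i)ᶜ) = 0 ∧
  ∀ n (es : ℕ → GBDEdge),
    (∀ m, m < n → (es m).src = i ∧ (es m).rng = i ∧ (es m).idx < a m i) →
    μ ((DIO a ha).cyl n es i ∩ XBar a ha i)
      = (∏ j ∈ Finset.range n, (a j i : ℝ≥0∞))⁻¹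

section Stmt4Aux

variable (a : ℕ → ℕ → ℕ) (ha : ∀ n i, 2 ≤ a n i)

lemma dio_src_step (x : (DIO a ha).PathSpace) (n : ℕ) :
    (x.val n).src = (x.val (n + 1)).src ∨
      (x.val n).src = (x.val (n + 1)).src + 1 := by
  have h1 := x.prop.1 n
  have h2 := x.prop.2 n
  unfold GBD.IsEdge DIO at h1
  simp only at h1
  rw [← h2]
  split_ifs at h1 with hc hc'
  · exact Or.inl hc
  · exact Or.inr hc'
  · exact absurd h1 (Nat.not_lt_zero _)

lemma dio_src_antitone (x : (DIO a ha).PathSpace) :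
    Antitone fun n => (x.val n).src := by
  apply antitone_nat_of_succ_le
  intro n
  rcases dio_src_step a ha x n with h | h
  · exact h.ge
  · omega

lemma dio_src_eventually (x : (DIO a ha).PathSpace) :
    ∃ i N, ∀ n, N ≤ n → (x.val n).src = i := by
  obtain ⟨N, hN⟩ := Nat.sInf_mem (Set.range_nonempty fun n => (x.val n).src)
  refine ⟨sInf (Set.range fun n => (x.val n).src), N, fun n hn => ?_⟩
  have h1 : (x.val n).src ≤ (x.val N).src := dio_src_antitone a ha x hn
  have h2 : sInf (Set.range fun n => (x.val n).src) ≤ (x.val n).src :=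
    Nat.sInf_le ⟨n, rfl⟩
  have h3 : (x.val N).src = sInf (Set.range fun n => (x.val n).src) := hN
  omega

lemma dio_mem_xhat (x : (DIO a ha).PathSpace) (i N : ℕ)
    (hN : ∀ n, N ≤ n → (x.val n).src = i) : x ∈ XHat a ha i := by
  set yf : ℕ → GBDEdge := fun n => if n < N then (i, i, 0) else x.val n with hyf
  have hsrc : ∀ n, (yf n).src = i := by
    intro n
    by_cases h : n < N
    · simp [hyf, h, GBDEdge.src]
    · simp only [hyf, if_neg h]; exact hN n (le_of_not_gt h)
  have hrng : ∀ n, (yf n).rng = i := by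
    intro n
    by_cases h : n < N
    · simp [hyf, h, GBDEdge.rng]
    · simp only [hyf, if_neg h]
      rw [x.prop.2 n]; exact hN (n + 1) (by omega)
  have hedge : ∀ n, (DIO a ha).IsEdge n (yf n) := by
    intro n
    by_cases h : n < N
    · simp only [hyf, if_pos h]
      show (0 : ℕ) < (DIO a ha).f n i i
      unfold DIO
      simp only [if_pos rfl]
      exact lt_of_lt_of_le (by norm_num) (ha n i)
    · simp only [hyf, if_neg h]; exact x.prop.1 n
  have hchain : ∀ n, (yf n).rng = (yf (n + 1)).src := fun n => by
    rw [hrng, hsrc]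
  refine ⟨⟨yf, hedge, hchain⟩, fun n => ⟨hsrc n, hrng n⟩, N, fun n hn => ?_⟩
  simp [hyf, Nat.not_lt.mpr hn]

lemma dio_xhat_src (x : (DIO a ha).PathSpace) (j : ℕ) (hx : x ∈ XHat a ha j) :
    ∃ M, ∀ n, M ≤ n → (x.val n).src = j := by
  obtain ⟨y, hy, M, hM⟩ := hx
  exact ⟨M, fun n hn => by rw [hM n hn]; exact (hy n).1⟩

end Stmt4Aux

/-- For a diagram of infinite odometers, the saturations `X̂_{B̄_i}`
are pairwise disjoint and partition the path space; equivalently, for every path `x`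
the source sequence satisfies `s n ∈ {s (n+1), s (n+1) + 1}`, is eventually constant,
and its eventual value `i` is the unique index with `x ∈ X̂_{B̄_i}`. -/
theorem stmt4 (a : ℕ → ℕ → ℕ) (ha : ∀ n i, 2 ≤ a n i) :
    (∀ i j, i ≠ j → Disjoint (XHat a ha i) (XHat a ha j)) ∧
    (⋃ i, XHat a ha i) = Set.univ ∧
    ∀ x : (DIO a ha).PathSpace,
      (∀ n, (x.val n).src = (x.val (n + 1)).src ∨
        (x.val n).src = (x.val (n + 1)).src + 1) ∧
      ∃ i N, (∀ n, N ≤ n → (x.val n).src = i) ∧ (∀ j, x ∈ XHat a ha j ↔ j = i) := by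

  have key : ∀ x : (DIO a ha).PathSpace,
      ∃ i N, (∀ n, N ≤ n → (x.val n).src = i) ∧ (∀ j, x ∈ XHat a ha j ↔ j = i) := by
    intro x
    obtain ⟨i, N, hN⟩ := dio_src_eventually a ha x
    refine ⟨i, N, hN, fun j => ⟨fun hj => ?_, fun hj => hj ▸ dio_mem_xhat a ha x i N hN⟩⟩
    obtain ⟨M, hM⟩ := dio_xhat_src a ha x j hj
    have h1 := hM (max M N) (le_max_left _ _)
    have h2 := hN (max M N) (le_max_right _ _)
    omega
  refine ⟨fun i j hij => ?_, ?_, fun x => ⟨dio_src_step a ha x, key x⟩⟩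
  · rw [Set.disjoint_left]
    intro x hxi hxj
    obtain ⟨k, N, -, hk⟩ := key x
    have := (hk i).1 hxi
    have := (hk j).1 hxj
    omega
  · ext x
    simp only [Set.mem_iUnion, Set.mem_univ, iff_true]
    obtain ⟨i, N, hN, -⟩ := key x
    exact ⟨i, dio_mem_xhat a ha x i N hN⟩
end

section
/- Let B be a diagram of infinite odometers (DIO) and fix i ≥ 1. Let θ be a finite tail-invariant Borel measure on X_B with θ(X_B ∖ X̂_{B̄_i}) = 0, and set C = θ(X_{B̄_i}). Then θ = C·μ̂_i; in particular, for every n ≥ 0 and every cylinder [ē] determined by a finite path ē of length n+1 ending at vertex i ∈ V_{n+1}, θ([ē]) = C/(a_0^(i) ⋯ a_n^(i)). -/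
open MeasureTheory
open scoped ENNReal

namespace Stmt5Aux

open MeasurableSpace Set

lemma GBDEdge.eta (e : GBDEdge) : ((e.src, e.rng, e.idx) : GBDEdge) = e := rfl

section Defs

variable (a : ℕ → ℕ → ℕ) (ha : ∀ n i, 2 ≤ a n i) (i : ℕ)

/-- Prefix cylinder: paths whose first `m` edges are given by `es`. -/
def precyl (m : ℕ) (es : ℕ → GBDEdge) : Set (DIO a ha).PathSpace :=
  {x | ∀ n, n < m → x.val n = es n}

/-- Paths which are vertical at vertex `i` from level `N` on. -/
def Zset (N : ℕ) : Set (DIO a ha).PathSpace :=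
  {x | ∀ n, N ≤ n → (x.val n).src = i ∧ (x.val n).rng = i}

/-- The vertical path at vertex `i` with indices `j`. -/
def vpath (j : ℕ → ℕ) : ℕ → GBDEdge := fun n => (i, i, j n)

/-- Extension of indices `j : Π k : Fin N, Fin (a k i)` to `ℕ → ℕ`. -/
def jext (N : ℕ) (j : (k : Fin N) → Fin (a k i)) : ℕ → ℕ :=
  fun n => if h : n < N then (j ⟨n, h⟩ : ℕ) else 0

/-- The set of canonical length-`N` extensions of the length-`m` finite path `es`
to finite paths ending at `i`. -/
def Ext (m N : ℕ) (es : ℕ → GBDEdge) : Set (ℕ → GBDEdge) :=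
  {p | (∀ n, n < m → p n = es n) ∧ (DIO a ha).IsFinPathTo N p i ∧
    ∀ n, N ≤ n → p n = (i, i, 0)}

/-- The collection of prefix cylinders. -/
def precyls : Set (Set (DIO a ha).PathSpace) :=
  {s | ∃ m es, s = precyl a ha m es}

end Defs

variable {a : ℕ → ℕ → ℕ} {ha : ∀ n i, 2 ≤ a n i} {i : ℕ}

lemma edge_rng_le_src {n : ℕ} {e : GBDEdge} (h : (DIO a ha).IsEdge n e) :
    e.rng ≤ e.src := by
  simp only [GBD.IsEdge, DIO] at h
  split_ifs at h with h1 h2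
  · omega
  · omega
  · omega

lemma edge_vert_idx {n : ℕ} {e : GBDEdge} (h : (DIO a ha).IsEdge n e)
    (hs : e.src = i) (hr : e.rng = i) : e.idx < a n i := by
  simp only [GBD.IsEdge, DIO, hs, hr, if_pos rfl] at h
  exact h

lemma vert_isEdge (n j : ℕ) (hj : j < a n i) : (DIO a ha).IsEdge n (i, i, j) := by
  simp only [GBD.IsEdge, DIO]
  simpa [GBDEdge.src, GBDEdge.rng, GBDEdge.idx] using hj

lemma vpath_isFinPathTo {N : ℕ} {j : ℕ → ℕ} (hj : ∀ n, n < N → j n < a n i) :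
    (DIO a ha).IsFinPathTo N (vpath i j) i :=
  ⟨fun n hn => vert_isEdge n (j n) (hj n hn), fun _ _ => rfl, fun _ _ => rfl⟩

lemma vpath_zero_isFinPathTo (N : ℕ) :
    (DIO a ha).IsFinPathTo N (vpath i fun _ => 0) i :=
  vpath_isFinPathTo fun n _ => lt_of_lt_of_le (by norm_num) (ha n i)

lemma src_le (x : (DIO a ha).PathSpace) {m n : ℕ} (h : m ≤ n) :
    (x.val n).src ≤ (x.val m).src := by
  induction n, h using Nat.le_induction with
  | base => exact le_rfl
  | succ n hmn ih =>
    calc (x.val (n + 1)).src = (x.val n).rng := (x.2.2 n).symm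
      _ ≤ (x.val n).src := edge_rng_le_src (x.2.1 n)
      _ ≤ _ := ih

lemma Zset_mono {N M : ℕ} (h : N ≤ M) : Zset a ha i N ⊆ Zset a ha i M :=
  fun _ hx n hn => hx n (h.trans hn)

lemma mem_Zset_of_src {x : (DIO a ha).PathSpace} {m N : ℕ}
    (hx : x ∈ Zset a ha i N) (hsrc : (x.val m).src = i) : x ∈ Zset a ha i m := by
  rcases le_or_gt N m with h | h
  · exact Zset_mono h hx
  · have hNsrc : (x.val N).src = i := (hx N le_rfl).1
    have key : ∀ k, m ≤ k → k ≤ N → (x.val k).src = i := by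
      intro k h1 h2
      refine le_antisymm ?_ ?_
      · rw [← hsrc]; exact src_le x h1
      · rw [← hNsrc]; exact src_le x h2
    intro n hn
    rcases le_or_gt N n with h' | h'
    · exact hx n h'
    · refine ⟨key n hn h'.le, ?_⟩
      rw [x.2.2 n]
      exact key (n + 1) (hn.trans n.le_succ) h'

lemma XBar_eq : XBar a ha i = Zset a ha i 0 := by
  ext x
  simp only [XBar, Zset, Set.mem_setOf_eq]
  exact ⟨fun h n _ => h n, fun h n => h n (Nat.zero_le n)⟩

lemma XHat_eq : XHat a ha i = ⋃ N, Zset a ha i N := by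
  ext x
  constructor
  · rintro ⟨y, hy, N, hN⟩
    refine Set.mem_iUnion.2 ⟨N, fun n hn => ?_⟩
    rw [hN n hn]
    exact ⟨(hy n).1, (hy n).2⟩
  · rintro hx
    obtain ⟨N, hN⟩ := Set.mem_iUnion.1 hx
    refine ⟨⟨fun n => if n < N then (i, i, 0) else x.val n, ?_, ?_⟩, ?_, N, ?_⟩
    · intro n
      by_cases h : n < N
      · simpa [h] using vert_isEdge (ha := ha) n 0
          (lt_of_lt_of_le (by norm_num) (ha n i))
      · simpa [h] using x.2.1 n
    · intro n
      dsimp only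
      by_cases h2 : n < N
      · rw [if_pos h2]
        by_cases h1 : n + 1 < N
        · rw [if_pos h1]; rfl
        · rw [if_neg h1]
          exact ((hN (n + 1) (by omega)).1).symm
      · rw [if_neg h2, if_neg (by omega : ¬ n + 1 < N)]
        exact x.2.2 n
    · intro n
      by_cases h : n < N
      · simp [h]; exact ⟨rfl, rfl⟩
      · simpa [h] using hN n (not_lt.1 h)
    · intro n hn
      simp [Nat.not_lt.2 hn]

lemma measurable_coord (n : ℕ) :
    Measurable fun x : (DIO a ha).PathSpace => x.val n :=
  (measurable_pi_apply n).comp measurable_subtype_coe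

lemma measurableSet_precyl {m : ℕ} {es : ℕ → GBDEdge} :
    MeasurableSet (precyl a ha m es) := by
  have : precyl a ha m es =
      ⋂ n, ⋂ (_ : n < m), (fun x : (DIO a ha).PathSpace => x.val n) ⁻¹' {es n} := by
    ext x; simp [precyl]
  rw [this]
  exact MeasurableSet.iInter fun n => MeasurableSet.iInter fun hn =>
    (measurable_coord n) (measurableSet_singleton _)

lemma measurableSet_Zset {N : ℕ} : MeasurableSet (Zset a ha i N) := by
  have : Zset a ha i N = ⋂ n, ⋂ (_ : N ≤ n),
      (fun x : (DIO a ha).PathSpace => x.val n) ⁻¹' {e | e.src = i ∧ e.rng = i} := by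
    ext x; simp [Zset]
  rw [this]
  exact MeasurableSet.iInter fun n => MeasurableSet.iInter fun hn =>
    (measurable_coord n) ((Set.to_countable _).measurableSet)

lemma precyl_zero {es : ℕ → GBDEdge} : precyl a ha 0 es = Set.univ := by
  ext x; simp [precyl]

lemma precyl_eq_cyl {N : ℕ} (hN : N ≠ 0) {es : ℕ → GBDEdge}
    (hes : (DIO a ha).IsFinPathTo N es i) :
    precyl a ha N es = (DIO a ha).cyl N es i := by
  obtain ⟨k, rfl⟩ := Nat.exists_eq_succ_of_ne_zero hN
  ext x
  constructor
  · intro hx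
    refine ⟨hx, ?_⟩
    rw [← x.2.2 k, hx k (Nat.lt_succ_self k), hes.2.2 k rfl]
  · exact fun hx => hx.1

lemma precyl_inter_XHat {N : ℕ} (hN : N ≠ 0) {es : ℕ → GBDEdge}
    (hes : (DIO a ha).IsFinPathTo N es i) :
    precyl a ha N es ∩ XHat a ha i = precyl a ha N es ∩ Zset a ha i N := by
  obtain ⟨k, rfl⟩ := Nat.exists_eq_succ_of_ne_zero hN
  ext x
  simp only [Set.mem_inter_iff, and_congr_right_iff]
  intro hx
  have hsrc : (x.val (k + 1)).src = i := by
    rw [← x.2.2 k, hx k (Nat.lt_succ_self k), hes.2.2 k rfl]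
  constructor
  · intro hxh
    rw [XHat_eq] at hxh
    obtain ⟨N', hN'⟩ := Set.mem_iUnion.1 hxh
    exact mem_Zset_of_src hN' hsrc
  · intro h
    rw [XHat_eq]
    exact Set.mem_iUnion.2 ⟨k + 1, h⟩

lemma meas_inter_XHat (θ : Measure (DIO a ha).PathSpace)
    (hnull : θ ((XHat a ha i)ᶜ) = 0) (A : Set (DIO a ha).PathSpace) :
    θ (A ∩ XHat a ha i) = θ A := by
  refine le_antisymm (measure_mono Set.inter_subset_left) ?_
  calc θ A ≤ θ ((A ∩ XHat a ha i) ∪ (XHat a ha i)ᶜ) := by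
        refine measure_mono fun x hx => ?_
        by_cases h : x ∈ XHat a ha i
        · exact Or.inl ⟨hx, h⟩
        · exact Or.inr h
    _ ≤ θ (A ∩ XHat a ha i) + θ ((XHat a ha i)ᶜ) := measure_union_le _ _
    _ = θ (A ∩ XHat a ha i) := by rw [hnull, add_zero]

lemma jext_isFinPathTo {N : ℕ} (j : (k : Fin N) → Fin (a k i)) :
    (DIO a ha).IsFinPathTo N (vpath i (jext a i N j)) i := by
  refine vpath_isFinPathTo fun n hn => ?_
  simp only [jext, dif_pos hn]
  exact (j ⟨n, hn⟩).2

lemma XBar_decomp (N : ℕ) :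
    XBar a ha i = ⋃ j : (k : Fin N) → Fin (a k i),
      (precyl a ha N (vpath i (jext a i N j)) ∩ Zset a ha i N) := by
  ext x
  rw [XBar_eq]
  constructor
  · intro hx
    refine Set.mem_iUnion.2 ⟨fun k => ⟨(x.val k).idx,
      edge_vert_idx (x.2.1 k) (hx k (Nat.zero_le _)).1 (hx k (Nat.zero_le _)).2⟩, ?_, ?_⟩
    · intro n hn
      have hs := (hx n (Nat.zero_le _)).1
      have hr := (hx n (Nat.zero_le _)).2
      show x.val n = (i, i, jext a i N _ n)
      rw [show (jext a i N _ n) = (x.val n).idx by simp [jext, dif_pos hn]]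
      have : ((i, i, (x.val n).idx) : GBDEdge)
          = ((x.val n).src, (x.val n).rng, (x.val n).idx) := by rw [hs, hr]
      rw [this, GBDEdge.eta]
    · exact Zset_mono (Nat.zero_le N) hx
  · rintro hx
    obtain ⟨j, hpre, hZ⟩ := Set.mem_iUnion.1 hx
    intro n _
    by_cases hn : n < N
    · rw [hpre n hn]; exact ⟨rfl, rfl⟩
    · exact hZ n (not_lt.1 hn)

lemma XBar_decomp_disj (N : ℕ) :
    Pairwise (Function.onFun Disjoint fun j : (k : Fin N) → Fin (a k i) =>
      (precyl a ha N (vpath i (jext a i N j)) ∩ Zset a ha i N)) := by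
  intro j j' hne
  refine Set.disjoint_left.2 ?_
  rintro x ⟨h1, _⟩ ⟨h2, _⟩
  apply hne
  funext k
  have h3 := (h1 k k.2).symm.trans (h2 k k.2)
  have h4 : ((j ⟨k.1, k.2⟩ : ℕ)) = (j' ⟨k.1, k.2⟩ : ℕ) := by
    have := congrArg (fun e : GBDEdge => e.idx) h3
    simpa [vpath, GBDEdge.idx, jext, dif_pos k.2] using this
  exact Fin.ext (by simpa using h4)

/-- The common value of `θ` on saturated cylinders ending at `i` at level `N`. -/
lemma theta_val (θ : Measure (DIO a ha).PathSpace)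
    (hinv : (DIO a ha).TailInvariant θ) (hnull : θ ((XHat a ha i)ᶜ) = 0)
    {N : ℕ} {p : ℕ → GBDEdge} (hp : (DIO a ha).IsFinPathTo N p i) :
    θ (precyl a ha N p ∩ Zset a ha i N)
      = θ (XBar a ha i) * (∏ n ∈ Finset.range N, (a n i : ℝ≥0∞))⁻¹ := by
  rcases Nat.eq_zero_or_pos N with rfl | hNpos
  · rw [precyl_zero, Set.univ_inter, ← XBar_eq]
    simp
  · have hN0 : N ≠ 0 := hNpos.ne'
    have step1 : ∀ q : ℕ → GBDEdge, (DIO a ha).IsFinPathTo N q i →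
        θ (precyl a ha N q ∩ Zset a ha i N)
          = θ ((DIO a ha).cyl N (vpath i fun _ => 0) i) := by
      intro q hq
      rw [← precyl_inter_XHat hN0 hq, meas_inter_XHat θ hnull, precyl_eq_cyl hN0 hq]
      exact hinv N q _ i hq (vpath_zero_isFinPathTo N)
    set t := θ ((DIO a ha).cyl N (vpath i fun _ => 0) i) with ht
    have hP0 : (∏ n ∈ Finset.range N, (a n i : ℝ≥0∞)) ≠ 0 := by
      refine Finset.prod_ne_zero_iff.2 fun n _ => ?_
      exact Nat.cast_ne_zero.2 (by have := ha n i; omega)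
    have hPt : (∏ n ∈ Finset.range N, (a n i : ℝ≥0∞)) ≠ ⊤ :=
      ENNReal.prod_ne_top fun n _ => ENNReal.natCast_ne_top _
    have hC : θ (XBar a ha i) = (∏ n ∈ Finset.range N, (a n i : ℝ≥0∞)) * t := by
      rw [XBar_decomp (a := a) (ha := ha) (i := i) N,
        measure_iUnion (XBar_decomp_disj N)
          (fun j => measurableSet_precyl.inter measurableSet_Zset)]
      have : ∀ j : (k : Fin N) → Fin (a k i),
          θ (precyl a ha N (vpath i (jext a i N j)) ∩ Zset a ha i N) = t :=
        fun j => step1 _ (jext_isFinPathTo j)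
      rw [tsum_congr this, tsum_fintype, Finset.sum_const, Finset.card_univ,
        nsmul_eq_mul]
      congr 1
      rw [Fintype.card_pi]
      push_cast
      rw [← Fin.prod_univ_eq_prod_range (fun n => (a n i : ℝ≥0∞)) N]
      simp
    rw [step1 p hp, hC, mul_comm (∏ n ∈ Finset.range N, (a n i : ℝ≥0∞)) t,
      mul_assoc, ENNReal.mul_inv_cancel hP0 hPt, mul_one]

/-- The common value of `μ̂` on saturated cylinders ending at `i` at level `N`. -/
lemma mu_val (μ : Measure (DIO a ha).PathSpace) (hμ : IsCanonicalExt a ha i μ)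
    {N : ℕ} {p : ℕ → GBDEdge} (hp : (DIO a ha).IsFinPathTo N p i) :
    μ (precyl a ha N p ∩ Zset a ha i N)
      = (∏ n ∈ Finset.range N, (a n i : ℝ≥0∞))⁻¹ := by
  obtain ⟨hμinv, hμnull, hμval⟩ := hμ
  have hXBar_sub : ∀ es : ℕ → GBDEdge, XBar a ha i ⊆ (DIO a ha).cyl 0 es i :=
    fun es x hx => ⟨fun n hn => absurd hn (Nat.not_lt_zero n), (hx 0).1⟩
  rcases Nat.eq_zero_or_pos N with rfl | hNpos
  · rw [precyl_zero, Set.univ_inter, ← XBar_eq]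
    have := hμval 0 (vpath i fun _ => 0) (fun m hm => absurd hm (Nat.not_lt_zero m))
    rw [Set.inter_eq_self_of_subset_right (hXBar_sub _)] at this
    simpa using this
  · have hN0 : N ≠ 0 := hNpos.ne'
    have hvert := vpath_zero_isFinPathTo (a := a) (ha := ha) (i := i) N
    have heq1 : μ (precyl a ha N p ∩ Zset a ha i N)
        = μ ((DIO a ha).cyl N (vpath i fun _ => 0) i) := by
      rw [← precyl_inter_XHat hN0 hp, meas_inter_XHat μ hμnull, precyl_eq_cyl hN0 hp]
      exact hμinv N p _ i hp hvert
    have hset : precyl a ha N (vpath i fun _ => 0) ∩ Zset a ha i N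
        = (DIO a ha).cyl N (vpath i fun _ => 0) i ∩ XBar a ha i := by
      ext x
      constructor
      · rintro ⟨hpre, hZ⟩
        have hxb : x ∈ XBar a ha i := by
          intro n
          by_cases hn : n < N
          · rw [hpre n hn]; exact ⟨rfl, rfl⟩
          · exact hZ n (not_lt.1 hn)
        exact ⟨⟨hpre, (hZ N le_rfl).1⟩, hxb⟩
      · rintro ⟨hcyl, hxb⟩
        exact ⟨hcyl.1, fun n _ => ⟨(hxb n).1, (hxb n).2⟩⟩
    have heq2 : μ ((DIO a ha).cyl N (vpath i fun _ => 0) i)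
        = μ ((DIO a ha).cyl N (vpath i fun _ => 0) i ∩ XBar a ha i) := by
      rw [← hset, ← meas_inter_XHat μ hμnull ((DIO a ha).cyl N (vpath i fun _ => 0) i),
        ← precyl_eq_cyl hN0 hvert, precyl_inter_XHat hN0 hvert]
    rw [heq1, heq2]
    exact hμval N (vpath i fun _ => 0)
      (fun m _ => ⟨rfl, rfl, show (0 : ℕ) < a m i by have := ha m i; omega⟩)

instance Ext_countable (m N : ℕ) (es : ℕ → GBDEdge) :
    Countable ↥(Ext a ha i m N es) := by
  have hinj : Function.Injective
      (fun p : ↥(Ext a ha i m N es) => (fun k : Fin N => p.1 k)) := by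
    intro p q h
    apply Subtype.ext
    funext n
    by_cases hn : n < N
    · exact congrFun h ⟨n, hn⟩
    · rw [p.2.2.2 n (not_lt.1 hn), q.2.2.2 n (not_lt.1 hn)]
  exact hinj.countable

lemma precyl_decomp (m k : ℕ) (es : ℕ → GBDEdge) :
    precyl a ha m es ∩ Zset a ha i (m + k)
      = ⋃ p : ↥(Ext a ha i m (m + k) es),
          (precyl a ha (m + k) p.1 ∩ Zset a ha i (m + k)) := by
  set N := m + k with hNdef
  have hmN : m ≤ N := Nat.le_add_right m k
  ext x
  constructor
  · rintro ⟨hpre, hZ⟩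
    refine Set.mem_iUnion.2 ⟨⟨fun n => if n < N then x.val n else (i, i, 0),
      ⟨?_, ⟨?_, ?_, ?_⟩, ?_⟩⟩, ?_, hZ⟩
    · intro n hn
      dsimp only
      rw [if_pos (lt_of_lt_of_le hn hmN)]
      exact hpre n hn
    · intro n hn
      dsimp only
      rw [if_pos hn]
      exact x.2.1 n
    · intro n hn
      dsimp only
      rw [if_pos (by omega : n < N), if_pos hn]
      exact x.2.2 n
    · intro k' hk'
      dsimp only
      rw [if_pos (by omega : k' < N)]
      rw [x.2.2 k', ← hk']
      exact (hZ N le_rfl).1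
    · intro n hn
      dsimp only
      rw [if_neg (not_lt.2 hn)]
    · intro n hn
      dsimp only
      rw [if_pos hn]
  · rintro hx
    obtain ⟨⟨p, hp1, _, _⟩, hpre, hZ⟩ := Set.mem_iUnion.1 hx
    exact ⟨fun n hn => (hpre n (lt_of_lt_of_le hn hmN)).trans (hp1 n hn), hZ⟩

lemma precyl_decomp_disj (m k : ℕ) (es : ℕ → GBDEdge) :
    Pairwise (Function.onFun Disjoint fun p : ↥(Ext a ha i m (m + k) es) =>
      (precyl a ha (m + k) p.1 ∩ Zset a ha i (m + k))) := by
  intro p q hne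
  refine Set.disjoint_left.2 ?_
  rintro x ⟨h1, _⟩ ⟨h2, _⟩
  apply hne
  apply Subtype.ext
  funext n
  by_cases hn : n < m + k
  · exact (h1 n hn).symm.trans (h2 n hn)
  · rw [p.2.2.2 n (not_lt.1 hn), q.2.2.2 n (not_lt.1 hn)]

/-- Key comparison: on each saturated piece, `θ` equals `θ(X_{B̄_i}) • μ`. -/
lemma theta_eq_mul_mu_on_piece (θ μ : Measure (DIO a ha).PathSpace)
    (hinv : (DIO a ha).TailInvariant θ) (hnull : θ ((XHat a ha i)ᶜ) = 0)
    (hμ : IsCanonicalExt a ha i μ) (m k : ℕ) (es : ℕ → GBDEdge) :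
    θ (precyl a ha m es ∩ Zset a ha i (m + k))
      = θ (XBar a ha i) * μ (precyl a ha m es ∩ Zset a ha i (m + k)) := by
  rw [precyl_decomp m k es,
    measure_iUnion (μ := θ) (precyl_decomp_disj m k es)
      (fun p => measurableSet_precyl.inter measurableSet_Zset),
    measure_iUnion (μ := μ) (precyl_decomp_disj m k es)
      (fun p => measurableSet_precyl.inter measurableSet_Zset),
    ← ENNReal.tsum_mul_left]
  refine tsum_congr fun p => ?_
  rw [theta_val θ hinv hnull p.2.2.1, mu_val μ hμ p.2.2.1]

/-- Computing a measure concentrated on `X̂` as a supremum over the sets `Z_N`. -/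
lemma meas_eq_iSup (θ : Measure (DIO a ha).PathSpace)
    (hnull : θ ((XHat a ha i)ᶜ) = 0) {A : Set (DIO a ha).PathSpace}
    (hA : MeasurableSet A) (m : ℕ) :
    θ A = ⨆ k, θ (A ∩ Zset a ha i (m + k)) := by
  have h1 : A ∩ XHat a ha i = ⋃ k, A ∩ Zset a ha i (m + k) := by
    rw [XHat_eq]
    ext x
    simp only [Set.mem_inter_iff, Set.mem_iUnion]
    constructor
    · rintro ⟨hxA, N, hN⟩
      exact ⟨N, hxA, Zset_mono (Nat.le_add_left N m) hN⟩
    · rintro ⟨k, hxA, hk⟩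
      exact ⟨hxA, m + k, hk⟩
  rw [← meas_inter_XHat θ hnull A, h1]
  refine Directed.measure_iUnion ?_
  exact Monotone.directed_le fun k k' hk =>
    Set.inter_subset_inter subset_rfl (Zset_mono (by omega))

lemma isPiSystem_precyls : IsPiSystem (precyls a ha) := by
  have aux : ∀ (m m' : ℕ) (es es' : ℕ → GBDEdge), m ≤ m' →
      (precyl a ha m es ∩ precyl a ha m' es').Nonempty →
      precyl a ha m es ∩ precyl a ha m' es' = precyl a ha m' es' := by
    intro m m' es es' h hne
    obtain ⟨x, hx1, hx2⟩ := hne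
    have hcomp : ∀ n, n < m → es n = es' n := fun n hn =>
      (hx1 n hn).symm.trans (hx2 n (lt_of_lt_of_le hn h))
    ext y
    refine ⟨fun hy => hy.2, fun hy => ⟨fun n hn => ?_, hy⟩⟩
    rw [hcomp n hn]
    exact hy n (lt_of_lt_of_le hn h)
  rintro s ⟨m, es, rfl⟩ t ⟨m', es', rfl⟩ hne
  rcases le_total m m' with h | h
  · exact ⟨m', es', aux m m' es es' h hne⟩
  · rw [Set.inter_comm]
    rw [Set.inter_comm] at hne
    exact ⟨m, es, aux m' m es' es h hne⟩

lemma generateFrom_precyls :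
    (inferInstance : MeasurableSpace (DIO a ha).PathSpace)
      = MeasurableSpace.generateFrom (precyls a ha) := by
  refine le_antisymm ?_ (MeasurableSpace.generateFrom_le ?_)
  · have hcoord : ∀ (n : ℕ) (e : GBDEdge),
        MeasurableSet[MeasurableSpace.generateFrom (precyls a ha)]
          ((fun x : (DIO a ha).PathSpace => x.val n) ⁻¹' {e}) := by
      intro n e
      have hdec : ((fun x : (DIO a ha).PathSpace => x.val n) ⁻¹' {e})
          = ⋃ q : Fin n → GBDEdge,
              precyl a ha (n + 1) (fun k => if h : k < n then q ⟨k, h⟩ else e) := by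
        ext x
        simp only [Set.mem_preimage, Set.mem_singleton_iff, Set.mem_iUnion]
        constructor
        · intro hx
          refine ⟨fun k => x.val k, fun k hk => ?_⟩
          dsimp only
          by_cases h : k < n
          · rw [dif_pos h]
          · rw [dif_neg h]
            have : k = n := by omega
            rw [this, hx]
        · rintro ⟨q, hq⟩
          have := hq n (Nat.lt_succ_self n)
          dsimp only at this
          rwa [dif_neg (lt_irrefl n)] at this
      rw [hdec]
      exact MeasurableSet.iUnion fun q =>
        MeasurableSpace.measurableSet_generateFrom ⟨n + 1, _, rfl⟩
    have hval : @Measurable _ _ (MeasurableSpace.generateFrom (precyls a ha)) _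
        (Subtype.val : (DIO a ha).PathSpace → (ℕ → GBDEdge)) :=
      (@measurable_pi_iff _ _ _ (MeasurableSpace.generateFrom (precyls a ha)) _ _).mpr
        (fun n => @measurable_to_countable' _ _ _ _
          (MeasurableSpace.generateFrom (precyls a ha)) _ (hcoord n))
    exact measurable_iff_comap_le.1 hval
  · rintro s ⟨m, es, rfl⟩
    exact measurableSet_precyl

end Stmt5Aux

/-- A finite tail-invariant measure `θ` on the path space of a DIO
diagram which vanishes outside `X̂_{B̄_i}` equals `C • μ̂_i` with `C = θ(X_{B̄_i})`;
in particular every cylinder determined by a finite path of length `n+1` ending at the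
vertex `i` has `θ`-measure `C / (a 0 i ⋯ a n i)`. -/
theorem stmt5 (a : ℕ → ℕ → ℕ) (ha : ∀ n i, 2 ≤ a n i) (i : ℕ)
    (θ : Measure (DIO a ha).PathSpace) (hθfin : IsFiniteMeasure θ)
    (hinv : (DIO a ha).TailInvariant θ)
    (hnull : θ ((XHat a ha i)ᶜ) = 0) :
    (∀ μ : Measure (DIO a ha).PathSpace, IsCanonicalExt a ha i μ →
      θ = θ (XBar a ha i) • μ) ∧
    ∀ n (es : ℕ → GBDEdge), (DIO a ha).IsFinPathTo (n + 1) es i →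
      θ ((DIO a ha).cyl (n + 1) es i)
        = θ (XBar a ha i) / ∏ j ∈ Finset.range (n + 1), (a j i : ℝ≥0∞) := by
  haveI := hθfin
  constructor
  · intro μ hμ
    have key : ∀ s ∈ Stmt5Aux.precyls a ha, θ s = (θ (XBar a ha i) • μ) s := by
      rintro s ⟨m, es, rfl⟩
      rw [Measure.smul_apply, smul_eq_mul]
      calc θ (Stmt5Aux.precyl a ha m es)
          = ⨆ k, θ (Stmt5Aux.precyl a ha m es ∩ Stmt5Aux.Zset a ha i (m + k)) :=
            Stmt5Aux.meas_eq_iSup θ hnull Stmt5Aux.measurableSet_precyl m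
        _ = ⨆ k, θ (XBar a ha i)
              * μ (Stmt5Aux.precyl a ha m es ∩ Stmt5Aux.Zset a ha i (m + k)) :=
            iSup_congr fun k =>
              Stmt5Aux.theta_eq_mul_mu_on_piece θ μ hinv hnull hμ m k es
        _ = θ (XBar a ha i)
              * ⨆ k, μ (Stmt5Aux.precyl a ha m es ∩ Stmt5Aux.Zset a ha i (m + k)) :=
            (ENNReal.mul_iSup _ _).symm
        _ = θ (XBar a ha i) * μ (Stmt5Aux.precyl a ha m es) := by
            rw [← Stmt5Aux.meas_eq_iSup μ hμ.2.1 Stmt5Aux.measurableSet_precyl m]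
    refine MeasureTheory.ext_of_generate_finite (Stmt5Aux.precyls a ha)
      Stmt5Aux.generateFrom_precyls Stmt5Aux.isPiSystem_precyls key ?_
    have huniv : (Set.univ : Set (DIO a ha).PathSpace)
        = Stmt5Aux.precyl a ha 0 (fun _ => (i, i, 0)) := Stmt5Aux.precyl_zero.symm
    rw [huniv]
    exact key _ ⟨0, _, rfl⟩
  · intro n es hes
    rw [← Stmt5Aux.precyl_eq_cyl (Nat.succ_ne_zero n) hes,
      ← Stmt5Aux.meas_inter_XHat θ hnull,
      Stmt5Aux.precyl_inter_XHat (Nat.succ_ne_zero n) hes,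
      Stmt5Aux.theta_val θ hinv hnull hes, div_eq_mul_inv]
end

section
/- Let a, k be positive integers with a − k ≥ 2, and let B(a,k) be the stationary diagram of infinite odometers with a_n^(1) = a and a_n^(i) = a − k for all i ≥ 2 and all n. Then: (1) μ̂_1(X̂_{B̄_1}) = 1 + ∑_{n=0}^∞ (a − k + 1)^n / a^{n+1}, which equals 1 + 1/(k−1) when k ≥ 2 and equals ∞ when k = 1; (2) for every i ≥ 2, μ̂_i(X̂_{B̄_i}) = 1 + ∑_{n=0}^∞ (a − k + 1)^n / (a − k)^{n+1} = ∞. -/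
open MeasureTheory
open scoped ENNReal

namespace Stmt8

open GBDEdge Finset Set MeasureTheory TopologicalSpace

section Basics

variable (a : ℕ → ℕ → ℕ) (ha : ∀ n i, 2 ≤ a n i)

lemma edgeEta (e : GBDEdge) : e = (e.src, e.rng, e.idx) := rfl

lemma isEdge_iff {n : ℕ} {e : GBDEdge} :
    (DIO a ha).IsEdge n e ↔
      (e.src = e.rng ∧ e.idx < a n e.rng) ∨ (e.src = e.rng + 1 ∧ e.idx = 0) := by
  show e.idx < (if e.src = e.rng then a n e.rng else if e.src = e.rng + 1 then 1 else 0) ↔ _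
  split_ifs with h1 h2 <;> omega

variable {a ha}

lemma isEdge_vert {n i : ℕ} {j : ℕ} (hj : j < a n i) :
    (DIO a ha).IsEdge n ((i, i, j) : GBDEdge) := by
  rw [isEdge_iff]
  exact Or.inl ⟨rfl, hj⟩

lemma isEdge_diag {n i : ℕ} : (DIO a ha).IsEdge n ((i + 1, i, 0) : GBDEdge) := by
  rw [isEdge_iff]
  exact Or.inr ⟨rfl, rfl⟩

lemma path_edge (x : (DIO a ha).PathSpace) (n : ℕ) : (DIO a ha).IsEdge n (x.val n) := x.2.1 n

lemma path_chain (x : (DIO a ha).PathSpace) (n : ℕ) : (x.val n).rng = (x.val (n + 1)).src :=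
  x.2.2 n

/-- once a path is at vertex `0`, it stays there with vertical edges. -/
lemma stay_zero (x : (DIO a ha).PathSpace) {N : ℕ} (h : (x.val N).src = 0) :
    ∀ n, N ≤ n → (x.val n).src = 0 ∧ (x.val n).rng = 0 := by
  intro n hn
  induction n, hn using Nat.le_induction with
  | base =>
    refine ⟨h, ?_⟩
    rcases (isEdge_iff a ha).1 (path_edge x N) with h1 | h1 <;> omega
  | succ n hn ih =>
    have hsrc : (x.val (n + 1)).src = 0 := by rw [← path_chain x n]; exact ih.2
    refine ⟨hsrc, ?_⟩
    rcases (isEdge_iff a ha).1 (path_edge x (n + 1)) with h1 | h1 <;> omega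

lemma measurable_eval (n : ℕ) : Measurable fun x : (DIO a ha).PathSpace => x.val n :=
  (measurable_pi_apply n).comp measurable_subtype_coe

lemma measurableSet_edge {n : ℕ} (S : Set GBDEdge) :
    MeasurableSet {x : (DIO a ha).PathSpace | x.val n ∈ S} :=
  measurable_eval n (S.to_countable.measurableSet)

lemma mem_cyl {m : ℕ} {es : ℕ → GBDEdge} {w : ℕ} {x : (DIO a ha).PathSpace} :
    x ∈ (DIO a ha).cyl m es w ↔ (∀ n, n < m → x.val n = es n) ∧ (x.val m).src = w :=
  Iff.rfl

lemma measurableSet_cyl (m : ℕ) (es : ℕ → GBDEdge) (w : ℕ) :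
    MeasurableSet ((DIO a ha).cyl m es w) := by
  have : (DIO a ha).cyl m es w =
      (⋂ n ∈ Finset.range m, {x : (DIO a ha).PathSpace | x.val n ∈ ({es n} : Set GBDEdge)}) ∩
        {x : (DIO a ha).PathSpace | x.val m ∈ {e : GBDEdge | e.src = w}} := by
    ext x
    simp only [Set.mem_inter_iff, Set.mem_iInter, Finset.mem_range, Set.mem_setOf_eq,
      Set.mem_singleton_iff, mem_cyl]
  rw [this]
  exact (MeasurableSet.biInter (Set.to_countable _) fun n _ => measurableSet_edge _).inter
    (measurableSet_edge _)

lemma mem_XBar {i : ℕ} {x : (DIO a ha).PathSpace} :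
    x ∈ XBar a ha i ↔ ∀ n, (x.val n).src = i ∧ (x.val n).rng = i := Iff.rfl

lemma measurableSet_XBar (i : ℕ) : MeasurableSet (XBar a ha i) := by
  have : XBar a ha i =
      ⋂ n, {x : (DIO a ha).PathSpace | x.val n ∈ {e : GBDEdge | e.src = i ∧ e.rng = i}} := by
    ext x; simp [mem_XBar, Set.mem_iInter, Set.mem_setOf_eq]
  rw [this]
  exact MeasurableSet.iInter fun n => measurableSet_edge _

end Basics

section VSets

variable (a : ℕ → ℕ → ℕ) (ha : ∀ n i, 2 ≤ a n i)

/-- paths that are vertical at vertex `i` from level `N` on -/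
def VN (i N : ℕ) : Set (DIO a ha).PathSpace :=
  {x | ∀ n, N ≤ n → (x.val n).src = i ∧ (x.val n).rng = i}

variable {a ha}

lemma measurableSet_VN (i N : ℕ) : MeasurableSet (VN a ha i N) := by
  have : VN a ha i N = ⋂ n, ⋂ (_ : N ≤ n),
      {x : (DIO a ha).PathSpace | x.val n ∈ {e : GBDEdge | e.src = i ∧ e.rng = i}} := by
    ext x; simp [VN, Set.mem_iInter, Set.mem_setOf_eq]
  rw [this]
  exact MeasurableSet.iInter fun n => MeasurableSet.iInter fun _ => measurableSet_edge _

lemma VN_subset_XHat (i N : ℕ) : VN a ha i N ⊆ XHat a ha i := by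
  intro x hx
  have hai : 0 < a 0 i := lt_of_lt_of_le (by norm_num) (ha 0 i)
  refine ⟨⟨fun n => if n < N then ((i, i, 0) : GBDEdge) else x.val n, ?_, ?_⟩, ?_, ?_⟩
  · intro n
    by_cases h : n < N
    · simp only [h, if_true]
      exact isEdge_vert (lt_of_lt_of_le (by norm_num) (ha n i))
    · simp only [h, if_false]; exact path_edge x n
  · intro n
    by_cases h : n + 1 < N
    · have h' : n < N := by omega
      simp only [h, h', if_true]
      rfl
    · by_cases h' : n < N
      · simp only [h, h', if_true, if_false]
        show i = (x.val (n + 1)).src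
        exact ((hx (n + 1)) (by omega)).1.symm
      · simp only [h, h', if_false]; exact path_chain x n
  · intro n
    by_cases h : n < N
    · simp only [h, if_true]; exact ⟨rfl, rfl⟩
    · simp only [h, if_false]; exact hx n (by omega)
  · exact ⟨N, fun n hn => by simp [Nat.not_lt.2 hn]⟩

lemma XHat_eq_iUnion (i : ℕ) : XHat a ha i = ⋃ N, VN a ha i N := by
  ext x
  constructor
  · rintro ⟨y, hy, N, hN⟩
    exact Set.mem_iUnion.2 ⟨N, fun n hn => by rw [hN n hn]; exact hy n⟩
  · rintro hx
    rcases Set.mem_iUnion.1 hx with ⟨N, hN⟩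
    exact VN_subset_XHat i N hN

lemma measurableSet_XHat (i : ℕ) : MeasurableSet (XHat a ha i) := by
  rw [XHat_eq_iUnion]
  exact MeasurableSet.iUnion fun N => measurableSet_VN i N

end VSets

end Stmt8
namespace Stmt8

open GBDEdge Finset Set MeasureTheory TopologicalSpace

section OmegaGroup

variable (a : ℕ → ℕ → ℕ) (i : ℕ)

/-- The digit group of the vertical odometer at vertex `i`. -/
abbrev Om : Type := ∀ n : ℕ, ZMod (a n i - 1 + 1)

/-- normalized Haar measure on the odometer digit group -/
noncomputable def rho : Measure (Om a i) := Measure.addHaarMeasure ⊤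

instance : (rho a i).IsAddRightInvariant := by unfold rho; infer_instance

lemma rho_univ : rho a i Set.univ = 1 := by
  rw [rho, ← TopologicalSpace.PositiveCompacts.coe_top (α := Om a i)]
  exact Measure.addHaarMeasure_self

instance : IsProbabilityMeasure (rho a i) := ⟨rho_univ a i⟩

variable {a i}

lemma measurableSet_omCyl (s : Finset ℕ) (c : ∀ n, ZMod (a n i - 1 + 1)) :
    MeasurableSet {ω : Om a i | ∀ n ∈ s, ω n = c n} := by
  have : {ω : Om a i | ∀ n ∈ s, ω n = c n} =
      ⋂ n ∈ (s : Set ℕ), (fun ω : Om a i => ω n) ⁻¹' {c n} := by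
    ext ω; simp [Set.mem_iInter]
  rw [this]
  exact MeasurableSet.biInter (s : Set ℕ).to_countable fun n _ =>
    (measurable_pi_apply n) (measurableSet_singleton _)

lemma rho_cyl (ha : ∀ n i, 2 ≤ a n i) (s : Finset ℕ) (c : ∀ n, ZMod (a n i - 1 + 1)) :
    rho a i {ω : Om a i | ∀ n ∈ s, ω n = c n} = (∏ n ∈ s, (a n i : ℝ≥0∞))⁻¹ := by
  classical
  -- the translated cylinders
  set T : (∀ n : s, ZMod (a n i - 1 + 1)) → Set (Om a i) :=
    fun t => {ω : Om a i | ∀ n (h : n ∈ s), ω n = t ⟨n, h⟩} with hT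
  have hTmeas : ∀ t, MeasurableSet (T t) := by
    intro t
    have : T t = {ω : Om a i | ∀ n ∈ s, ω n =
        (fun n => if h : n ∈ s then t ⟨n, h⟩ else 0 : ∀ n, ZMod (a n i - 1 + 1)) n} := by
      ext ω
      simp only [hT, Set.mem_setOf_eq]
      constructor
      · intro h n hn; rw [h n hn]; simp [hn]
      · intro h n hn; rw [h n hn]; simp [hn]
    rw [this]; exact measurableSet_omCyl s _
  -- all translates have the same measure
  have hTinv : ∀ t, rho a i (T t) = rho a i (T 0) := by
    intro t
    set e : Om a i := fun n => if h : n ∈ s then t ⟨n, h⟩ else 0 with he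
    have : T t = (fun ω : Om a i => ω + -e) ⁻¹' (T 0) := by
      ext ω
      simp only [hT, Set.mem_preimage, Set.mem_setOf_eq, Pi.add_apply, Pi.neg_apply,
        Pi.zero_apply]
      constructor
      · intro h n hn
        rw [h n hn, he]
        simp [hn]
      · intro h n hn
        have h2 := h n hn
        rw [he] at h2
        simp only [hn, dif_pos] at h2
        rw [← sub_eq_add_neg] at h2
        exact sub_eq_zero.mp h2
    rw [this, measure_preimage_add_right]
  -- they partition the space
  have hcover : Set.univ = ⋃ t, T t := by
    ext ω
    simp only [Set.mem_univ, true_iff, Set.mem_iUnion]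
    exact ⟨fun n => ω n, fun n hn => rfl⟩
  have hdisj : Pairwise (Function.onFun Disjoint T) := by
    intro t t' htt'
    show Disjoint (T t) (T t')
    rw [Set.disjoint_left]
    intro ω h1 h2
    apply htt'
    funext n
    rw [← h1 n n.2, ← h2 n n.2]
  have hsum : (1 : ℝ≥0∞) = ∑' t, rho a i (T t) := by
    rw [← measure_iUnion hdisj hTmeas, ← hcover, rho_univ]
  have hcard : (Fintype.card (∀ n : s, ZMod (a n i - 1 + 1)) : ℝ≥0∞) =
      ∏ n ∈ s, (a n i : ℝ≥0∞) := by
    rw [Fintype.card_pi]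
    push_cast
    rw [← Finset.prod_attach s (fun n => (a n i : ℝ≥0∞))]
    apply Finset.prod_congr rfl
    intro n _
    rw [ZMod.card]
    have h2 : a n.val i - 1 + 1 = a n.val i := by have := ha n.val i; omega
    rw [h2]
  have hprodne : (∏ n ∈ s, (a n i : ℝ≥0∞)) ≠ 0 := by
    rw [← hcard]
    exact_mod_cast Fintype.card_ne_zero
  have hprodnt : (∏ n ∈ s, (a n i : ℝ≥0∞)) ≠ ⊤ := by
    rw [← hcard]; exact ENNReal.natCast_ne_top _
  have hval : rho a i (T 0) = (∏ n ∈ s, (a n i : ℝ≥0∞))⁻¹ := by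
    have h1 : (1 : ℝ≥0∞) = (Fintype.card (∀ n : s, ZMod (a n i - 1 + 1))) * rho a i (T 0) := by
      rw [hsum]
      rw [tsum_eq_sum (s := Finset.univ) (by simp)]
      rw [Finset.sum_congr rfl (fun t _ => hTinv t), Finset.sum_const, Finset.card_univ,
        nsmul_eq_mul]
    rw [hcard] at h1
    rw [← one_mul (rho a i (T 0)), ← ENNReal.inv_mul_cancel hprodne hprodnt, mul_assoc, ← h1,
      mul_one]
  have : {ω : Om a i | ∀ n ∈ s, ω n = c n} = T (fun n : s => c n.val) := by
    ext ω; simp only [hT, Set.mem_setOf_eq]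
  rw [this]
  rw [hTinv (fun n : s => c n.val)]
  exact hval

end OmegaGroup

end Stmt8
namespace Stmt8

open GBDEdge Finset Set MeasureTheory TopologicalSpace

section Construction

variable (a : ℕ → ℕ → ℕ) (ha : ∀ n i, 2 ≤ a n i) (i : ℕ)

/-- `l` is a finite "entry path": a valid finite path whose last edge is the diagonal
edge entering the vertex `i` (the empty list is allowed). -/
def EPGood (l : List GBDEdge) : Prop :=
  (∀ m, m < l.length → (DIO a ha).IsEdge m (l.getD m default)) ∧
  (∀ m, m + 1 < l.length → (l.getD m default).rng = (l.getD (m + 1) default).src) ∧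
  (∀ m, l.length = m + 1 → (l.getD m default).src = i + 1 ∧ (l.getD m default).rng = i)

def EPath : Type := {l : List GBDEdge // EPGood a ha i l}

instance : Countable (EPath a ha i) :=
  inferInstanceAs (Countable {l : List GBDEdge // EPGood a ha i l})

def phiF (l : List GBDEdge) (ω : Om a i) (n : ℕ) : GBDEdge :=
  if n < l.length then l.getD n default else (i, i, (ω n).val)

lemma val_lt {a : ℕ → ℕ → ℕ} {i : ℕ} (ω : Om a i) (n : ℕ) (h2 : 2 ≤ a n i) :
    (ω n).val < a n i := by
  have h := ZMod.val_lt (ω n); omega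

/-- the path obtained by following the entry path `p` and then the vertical edges
with digits `ω`. -/
def phi (p : EPath a ha i) (ω : Om a i) : (DIO a ha).PathSpace := by
  refine ⟨phiF a i p.val ω, fun n => ?_, fun n => ?_⟩
  · unfold phiF
    by_cases h : n < p.val.length
    · simpa [h] using p.2.1 n h
    · simp only [h, if_false]
      exact isEdge_vert (val_lt ω n (ha n i))
  · unfold phiF
    by_cases h : n + 1 < p.val.length
    · have h' : n < p.val.length := by omega
      simp only [h, h', if_true]
      exact p.2.2.1 n h
    · by_cases h' : n < p.val.length
      · have hl : p.val.length = n + 1 := by omega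
        simp only [h, h', if_true, if_false]
        exact (p.2.2.2 n hl).2
      · simp only [h, h', if_false]
        rfl

lemma phi_val (p : EPath a ha i) (ω : Om a i) (n : ℕ) :
    (phi a ha i p ω).val n = phiF a i p.val ω n := rfl

lemma phi_val_lt (p : EPath a ha i) (ω : Om a i) {n : ℕ} (h : n < p.val.length) :
    (phi a ha i p ω).val n = p.val.getD n default := by
  rw [phi_val, phiF, if_pos h]

lemma phi_val_ge (p : EPath a ha i) (ω : Om a i) {n : ℕ} (h : p.val.length ≤ n) :
    (phi a ha i p ω).val n = (i, i, (ω n).val) := by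
  rw [phi_val, phiF, if_neg (by omega)]

lemma measurable_phi (p : EPath a ha i) : Measurable (phi a ha i p) := by
  apply Measurable.subtype_mk
  rw [measurable_pi_iff]
  intro n
  show Measurable fun ω : Om a i =>
    (if n < p.val.length then p.val.getD n default else (i, i, (ω n).val))
  by_cases h : n < p.val.length
  · simp only [h, if_true]; exact measurable_const
  · simp only [h, if_false]
    exact (measurable_of_countable
      (fun z : ZMod (a n i - 1 + 1) => ((i, i, z.val) : GBDEdge))).comp (measurable_pi_apply n)

noncomputable def wt (l : List GBDEdge) : ℝ≥0∞ :=
  (∏ j ∈ Finset.range l.length, (a j i : ℝ≥0∞))⁻¹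

lemma prodA_ne_zero {a : ℕ → ℕ → ℕ} {i : ℕ} (h2 : ∀ n, 2 ≤ a n i) (s : Finset ℕ) :
    (∏ n ∈ s, (a n i : ℝ≥0∞)) ≠ 0 := by
  rw [Finset.prod_ne_zero_iff]
  intro n _
  have := h2 n
  exact Nat.cast_ne_zero.mpr (by omega)

lemma prodA_ne_top (s : Finset ℕ) : (∏ n ∈ s, (a n i : ℝ≥0∞)) ≠ ⊤ :=
  (ENNReal.prod_lt_top fun n _ => ENNReal.natCast_lt_top _).ne

/-- The canonical extension measure. -/
noncomputable def muCan : Measure (DIO a ha).PathSpace :=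
  Measure.sum fun p : EPath a ha i => wt a i p.val • (rho a i).map (phi a ha i p)

lemma muCan_apply {S : Set (DIO a ha).PathSpace} (hS : MeasurableSet S) :
    muCan a ha i S = ∑' p : EPath a ha i, wt a i p.val * rho a i (phi a ha i p ⁻¹' S) := by
  rw [muCan, Measure.sum_apply _ hS]
  congr 1; funext p
  rw [Measure.smul_apply, Measure.map_apply (measurable_phi a ha i p) hS, smul_eq_mul]

lemma phi_mem_XHat (p : EPath a ha i) (ω : Om a i) : phi a ha i p ω ∈ XHat a ha i := by
  apply VN_subset_XHat i p.val.length
  intro n hn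
  rw [phi_val_ge a ha i p ω hn]
  exact ⟨rfl, rfl⟩

lemma muCan_null : muCan a ha i (XHat a ha i)ᶜ = 0 := by
  rw [muCan_apply a ha i (measurableSet_XHat i).compl]
  rw [ENNReal.tsum_eq_zero]
  intro p
  have : phi a ha i p ⁻¹' (XHat a ha i)ᶜ = ∅ := by
    ext ω
    simp only [Set.mem_preimage, Set.mem_compl_iff, Set.mem_empty_iff_false, iff_false, not_not]
    exact phi_mem_XHat a ha i p ω
  rw [this, measure_empty, mul_zero]

def nilP : EPath a ha i :=
  ⟨[], by refine ⟨?_, ?_, ?_⟩ <;> intro m h <;> simp at h⟩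

lemma cast_idx_val {a : ℕ → ℕ → ℕ} {i n j : ℕ} (h2 : 2 ≤ a n i) (hj : j < a n i) :
    ((j : ZMod (a n i - 1 + 1))).val = j :=
  ZMod.val_cast_of_lt (by omega)

lemma muCan_cylXBar : ∀ (n : ℕ) (es : ℕ → GBDEdge),
    (∀ m, m < n → (es m).src = i ∧ (es m).rng = i ∧ (es m).idx < a m i) →
    muCan a ha i ((DIO a ha).cyl n es i ∩ XBar a ha i)
      = (∏ j ∈ Finset.range n, (a j i : ℝ≥0∞))⁻¹ := by
  intro n es hes
  rw [muCan_apply a ha i ((measurableSet_cyl n es i).inter (measurableSet_XBar i))]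
  rw [tsum_eq_single (nilP a ha i) ?side]
  case side =>
    intro p hp
    have hne : p.val ≠ [] := fun h => hp (Subtype.ext h)
    obtain ⟨m, hm⟩ : ∃ m, p.val.length = m + 1 :=
      Nat.exists_eq_succ_of_ne_zero (by simpa using hne)
    have hsrc := (p.2.2.2 m hm).1
    have hemp : phi a ha i p ⁻¹' ((DIO a ha).cyl n es i ∩ XBar a ha i) = ∅ := by
      ext ω
      simp only [Set.mem_preimage, Set.mem_inter_iff, Set.mem_empty_iff_false, iff_false]
      rintro ⟨-, hXB⟩
      have h1 := (hXB m).1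
      rw [phi_val_lt a ha i p ω (by omega)] at h1
      omega
    rw [hemp, measure_empty, mul_zero]
  · have hpre : phi a ha i (nilP a ha i) ⁻¹' ((DIO a ha).cyl n es i ∩ XBar a ha i)
        = {ω : Om a i | ∀ m ∈ Finset.range n,
            ω m = (((es m).idx : ZMod (a m i - 1 + 1)))} := by
      ext ω
      have hval : ∀ m : ℕ, (phi a ha i (nilP a ha i) ω).val m = (i, i, (ω m).val) :=
        fun m => phi_val_ge a ha i _ ω (by simp [nilP])
      simp only [Set.mem_preimage, Set.mem_inter_iff, mem_cyl, mem_XBar, Set.mem_setOf_eq,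
        Finset.mem_range]
      constructor
      · rintro ⟨⟨h1, -⟩, -⟩ m hm
        have h2 := h1 m hm
        rw [hval m] at h2
        have hidx : (ω m).val = (es m).idx := by
          rw [← h2]
          rfl
        rw [← hidx]
        exact (ZMod.natCast_rightInverse (ω m)).symm
      · intro h
        refine ⟨⟨fun m hm => ?_, by rw [hval n]; rfl⟩, fun m => by rw [hval m]; exact ⟨rfl, rfl⟩⟩
        rw [hval m]
        obtain ⟨hsrc, hrng, hidx⟩ := hes m hm
        have : (ω m).val = (es m).idx := by
          rw [h m hm]; exact cast_idx_val (ha m i) hidx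
        rw [this, edgeEta (es m), hsrc, hrng]
        rfl
    rw [hpre, rho_cyl ha]
    have : wt a i (nilP a ha i).val = 1 := by
      simp [wt, nilP]
    rw [this, one_mul]

end Construction

end Stmt8
namespace Stmt8

open GBDEdge Finset Set MeasureTheory TopologicalSpace

section ListHelpers

/-- the list of the first `n` edges of `es` -/
def takeL (es : ℕ → GBDEdge) (n : ℕ) : List GBDEdge := List.ofFn fun j : Fin n => es j

@[simp] lemma takeL_length (es : ℕ → GBDEdge) (n : ℕ) : (takeL es n).length = n :=
  List.length_ofFn

lemma takeL_getD (es : ℕ → GBDEdge) {j n : ℕ} (h : j < n) :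
    (takeL es n).getD j default = es j := by
  rw [List.getD_eq_getElem _ _ (by simpa using h)]
  simp [takeL]

lemma appendL_getD_left (es : ℕ → GBDEdge) (l : List GBDEdge) {j n : ℕ} (h : j < n) :
    ((takeL es n) ++ l).getD j default = es j := by
  rw [List.getD_eq_getElem _ _ (by rw [List.length_append, takeL_length]; omega),
    List.getElem_append_left (by simpa using h)]
  simp [takeL]

lemma appendL_getD_right (es : ℕ → GBDEdge) (l : List GBDEdge) {j n : ℕ} (h : n ≤ j)
    (h2 : j < n + l.length) :
    ((takeL es n) ++ l).getD j default = l.getD (j - n) default := by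
  rw [List.getD_eq_getElem _ _ (by rw [List.length_append, takeL_length]; omega),
    List.getElem_append_right (by simpa using h),
    List.getD_eq_getElem _ _ (by omega)]
  congr 1 <;> simp

lemma drop_getD (l : List GBDEdge) {m j : ℕ} (h : j < l.length - m) :
    (l.drop m).getD j default = l.getD (m + j) default := by
  rw [List.getD_eq_getElem _ _ (by rw [List.length_drop]; omega), List.getElem_drop,
    List.getD_eq_getElem _ _ (by omega)]

end ListHelpers

section TailInv

variable (a : ℕ → ℕ → ℕ) (ha : ∀ n i, 2 ≤ a n i) (i : ℕ)

/-- the edge `e` at level `n` is a vertical edge at vertex `i`. -/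
def VertAt (n : ℕ) (e : GBDEdge) : Prop := e.src = i ∧ e.rng = i ∧ e.idx < a n i

lemma vertAt_of_eq {n : ℕ} {e : GBDEdge} {v : ℕ} (h2 : v < a n i)
    (he : e = (i, i, v)) : VertAt a i n e := by
  subst he; exact ⟨rfl, rfl, h2⟩

lemma diag_of_not_vertAt {n : ℕ} {e : GBDEdge} (hE : (DIO a ha).IsEdge n e)
    (hrng : e.rng = i) (hnv : ¬ VertAt a i n e) : e.src = i + 1 := by
  rcases (isEdge_iff a ha).1 hE with h | h
  · exact absurd ⟨by omega, hrng, by rw [hrng] at h; omega⟩ hnv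
  · omega

/-- continuations: the possible tails of entry paths extending a fixed finite path
of length `m` ending at `w`. -/
def ContGood (m w : ℕ) (t : List GBDEdge) : Prop :=
  t ≠ [] ∧
  (∀ j, j < t.length → (DIO a ha).IsEdge (m + j) (t.getD j default)) ∧
  (∀ j, j + 1 < t.length → (t.getD j default).rng = (t.getD (j + 1) default).src) ∧
  (t.getD 0 default).src = w ∧
  (∀ j, t.length = j + 1 → (t.getD j default).src = i + 1 ∧ (t.getD j default).rng = i)

lemma muCan_cyl_eq (m : ℕ) (hm : 0 < m) (es : ℕ → GBDEdge) (w : ℕ)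
    (hes : (DIO a ha).IsFinPathTo m es w) :
    muCan a ha i ((DIO a ha).cyl m es w) =
      (if w = i then (∏ j ∈ Finset.range m, (a j i : ℝ≥0∞))⁻¹ else 0) +
      ∑' t : {t : List GBDEdge // ContGood a ha i m w t},
        (∏ j ∈ Finset.range (m + t.val.length), (a j i : ℝ≥0∞))⁻¹ := by
  classical
  obtain ⟨hesE, hesC, hesL⟩ := hes
  rw [muCan_apply a ha i (measurableSet_cyl m es w)]
  rw [← Summable.tsum_add_tsum_compl (s := {p : EPath a ha i | p.val.length ≤ m})
    ENNReal.summable ENNReal.summable]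
  congr 1
  -- ==================== SHORT PART ====================
  · by_cases hw : w = i
    · obtain rfl := hw.symm
      rw [if_pos rfl]
      -- the minimal entry time
      have hex : ∃ t, ∀ n, t ≤ n → n < m → VertAt a i n (es n) :=
        ⟨m, fun n h1 h2 => by omega⟩
      set t₀ := Nat.find hex with ht₀def
      have ht₀ : ∀ n, t₀ ≤ n → n < m → VertAt a i n (es n) := Nat.find_spec hex
      have ht₀m : t₀ ≤ m := Nat.find_le (fun n h1 h2 => by omega)
      -- the unique compatible short entry path
      have hgood : EPGood a ha i (takeL es t₀) := by
        refine ⟨?_, ?_, ?_⟩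
        · intro j hj
          rw [takeL_length] at hj
          rw [takeL_getD es hj]
          exact hesE j (by omega)
        · intro j hj
          rw [takeL_length] at hj
          rw [takeL_getD es (by omega), takeL_getD es (by omega)]
          exact hesC j (by omega)
        · intro s hs
          rw [takeL_length] at hs
          rw [takeL_getD es (by omega)]
          have hsm : s < m := by omega
          have hrng : (es s).rng = i := by
            by_cases hsm1 : s + 1 = m
            · exact hesL s hsm1.symm
            · rw [hesC s (by omega)]
              exact (ht₀ (s + 1) (by omega) (by omega)).1
          have hnv : ¬ VertAt a i s (es s) := by
            intro hv
            have hmin := Nat.find_min hex (show s < t₀ by omega)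
            push_neg at hmin
            obtain ⟨n', hn1, hn2, hn3⟩ := hmin
            rcases Nat.eq_or_lt_of_le hn1 with h | h
            · exact hn3 (h ▸ hv)
            · exact hn3 (ht₀ n' (by omega) hn2)
          exact ⟨diag_of_not_vertAt a ha i (hesE s hsm) hrng hnv, hrng⟩
      have hlen0 : (⟨takeL es t₀, hgood⟩ : EPath a ha i) ∈
          {p : EPath a ha i | p.val.length ≤ m} := by
        show (takeL es t₀).length ≤ m
        rw [takeL_length]; exact ht₀m
      rw [tsum_eq_single (⟨⟨takeL es t₀, hgood⟩, hlen0⟩ :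
        {p : EPath a ha i // p ∈ {p : EPath a ha i | p.val.length ≤ m}}) ?uniq]
      case uniq =>
        rintro ⟨⟨l, hl⟩, hlen⟩ hne
        have hlen' : l.length ≤ m := hlen
        by_cases hemp : phi a ha i ⟨l, hl⟩ ⁻¹' ((DIO a ha).cyl m es i) = ∅
        · rw [hemp, measure_empty, mul_zero]
        · exfalso
          obtain ⟨ω, hω⟩ := Set.nonempty_iff_ne_empty.2 hemp
          obtain ⟨hω1, hω2⟩ := (mem_cyl (a := a) (ha := ha)).1 hω
          -- the prefix of `l` agrees with `es`
          have hpre : ∀ n, n < l.length → l.getD n default = es n := by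
            intro n hn
            rw [← hω1 n (by omega), phi_val_lt a ha i (⟨l, hl⟩ : EPath a ha i) ω (show n < l.length from hn)]
          -- beyond `l`, the path `es` is vertical at `i`
          have hvert : ∀ n, l.length ≤ n → n < m → VertAt a i n (es n) := by
            intro n h1 h2
            have hv := hω1 n h2
            rw [phi_val_ge a ha i (⟨l, hl⟩ : EPath a ha i) ω (show l.length ≤ n from h1)] at hv
            exact vertAt_of_eq a i (val_lt ω n (ha n i)) hv.symm
          have hle : t₀ ≤ l.length := Nat.find_le hvert
          -- `l` cannot be longer than `t₀`
          have hleq : l.length = t₀ := by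
            rcases Nat.eq_or_lt_of_le hle with h | h
            · omega
            · exfalso
              obtain ⟨s, hs⟩ : ∃ s, l.length = s + 1 := ⟨l.length - 1, by omega⟩
              have hsge : t₀ ≤ s := by omega
              have hsm : s < m := by omega
              have h1 := (hl.2.2 s hs).1
              rw [hpre s (by omega)] at h1
              have := (ht₀ s hsge hsm).1
              omega
          apply hne
          refine Subtype.ext (Subtype.ext ?_)
          show l = takeL es t₀
          refine List.ext_getElem (by rw [takeL_length, hleq]) ?_
          intro n h1 h2
          rw [← List.getD_eq_getElem _ default h1, ← List.getD_eq_getElem _ default h2,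
            hpre n h1, takeL_getD es (by omega)]
      -- value of the p₀ term
      · have hpre : phi a ha i ⟨takeL es t₀, hgood⟩ ⁻¹' ((DIO a ha).cyl m es i)
            = {ω : Om a i | ∀ n ∈ Finset.Ico t₀ m,
                ω n = (((es n).idx : ZMod (a n i - 1 + 1)))} := by
          ext ω
          simp only [Set.mem_preimage, mem_cyl, Set.mem_setOf_eq, Finset.mem_Ico]
          constructor
          · rintro ⟨h1, -⟩ n hn
            have h2 := h1 n hn.2
            rw [phi_val_ge a ha i (⟨takeL es t₀, hgood⟩ : EPath a ha i) ω
              (show (takeL es t₀).length ≤ n by rw [takeL_length]; exact hn.1)] at h2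
            have hidx : (ω n).val = (es n).idx := by rw [← h2]; rfl
            rw [← hidx]
            exact (ZMod.natCast_rightInverse (ω n)).symm
          · intro h
            constructor
            · intro n hn
              by_cases hn0 : n < t₀
              · rw [phi_val_lt a ha i (⟨takeL es t₀, hgood⟩ : EPath a ha i) ω
                  (show n < (takeL es t₀).length by rw [takeL_length]; exact hn0),
                  takeL_getD es hn0]
              · rw [phi_val_ge a ha i (⟨takeL es t₀, hgood⟩ : EPath a ha i) ω
                  (show (takeL es t₀).length ≤ n by rw [takeL_length]; omega)]
                obtain ⟨hsrc, hrng, hidx⟩ := ht₀ n (by omega) hn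
                have hv : (ω n).val = (es n).idx := by
                  rw [h n ⟨by omega, hn⟩]; exact cast_idx_val (ha n i) hidx
                rw [hv, edgeEta (es n), hsrc, hrng]
                rfl
            · rw [phi_val_ge a ha i (⟨takeL es t₀, hgood⟩ : EPath a ha i) ω
                (show (takeL es t₀).length ≤ m by rw [takeL_length]; omega)]
              rfl
        show wt a i (takeL es t₀) * _ = _
        rw [hpre, rho_cyl ha, wt, takeL_length,
          ← ENNReal.mul_inv (Or.inl (prodA_ne_zero (fun n => ha n i) _))
            (Or.inl (prodA_ne_top a i _)),
          Finset.prod_range_mul_prod_Ico _ ht₀m]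
    · -- w ≠ i : all short terms vanish
      rw [if_neg hw]
      rw [ENNReal.tsum_eq_zero]
      rintro ⟨⟨l, hl⟩, hlen⟩
      have hlen' : l.length ≤ m := hlen
      have hemp : phi a ha i ⟨l, hl⟩ ⁻¹' ((DIO a ha).cyl m es w) = ∅ := by
        ext ω
        simp only [Set.mem_preimage, mem_cyl, Set.mem_empty_iff_false, iff_false, not_and]
        intro h1
        rw [phi_val_ge a ha i (⟨l, hl⟩ : EPath a ha i) ω (show l.length ≤ m from hlen')]
        exact fun h => hw h.symm
      rw [hemp, measure_empty, mul_zero]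
  -- ==================== LONG PART ====================
  · have hwrng : (es (m - 1)).rng = w := hesL (m - 1) (by omega)
    -- entry path extending `es` by a continuation `t`
    have hextgood : ∀ t : List GBDEdge, ContGood a ha i m w t →
        EPGood a ha i (takeL es m ++ t) := by
      rintro t ⟨ht1, ht2, ht3, ht4, ht5⟩
      have hlen : (takeL es m ++ t).length = m + t.length := by
        rw [List.length_append, takeL_length]
      have htpos : 0 < t.length := List.length_pos_iff.2 ht1
      refine ⟨?_, ?_, ?_⟩
      · intro j hj
        rw [hlen] at hj
        by_cases h : j < m
        · rw [appendL_getD_left es t h]; exact hesE j h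
        · rw [appendL_getD_right es t (by omega) (by omega)]
          have := ht2 (j - m) (by omega)
          rwa [show m + (j - m) = j by omega] at this
      · intro j hj
        rw [hlen] at hj
        by_cases h : j + 1 < m
        · rw [appendL_getD_left es t (by omega), appendL_getD_left es t h]
          exact hesC j h
        · by_cases h' : j + 1 = m
          · rw [appendL_getD_left es t (by omega),
              appendL_getD_right es t (by omega) (by omega),
              show j + 1 - m = 0 by omega, show j = m - 1 by omega, hwrng]
            exact ht4.symm
          · rw [appendL_getD_right es t (by omega) (by omega),
              appendL_getD_right es t (by omega) (by omega)]
            have := ht3 (j - m) (by omega)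
            rwa [show j - m + 1 = j + 1 - m by omega] at this
      · intro j hj
        rw [hlen] at hj
        rw [appendL_getD_right es t (by omega) (by omega)]
        exact ht5 (j - m) (by omega)
    refine tsum_eq_tsum_of_ne_zero_bij
      (fun t => ⟨⟨takeL es m ++ t.val.val, hextgood t.val.val t.val.2⟩, ?_⟩) ?_ ?_ ?_
    · -- membership in the complement (the extended path is long)
      show ¬ (takeL es m ++ t.val.val).length ≤ m
      rw [List.length_append, takeL_length]
      have := List.length_pos_iff.2 t.val.2.1
      omega
    · -- injectivity
      intro t t' heq
      have h2 : takeL es m ++ t.val.val = takeL es m ++ t'.val.val :=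
        congrArg (fun p : {p : EPath a ha i // p ∈ {p : EPath a ha i | p.val.length ≤ m}ᶜ} =>
          p.val.val) heq
      exact Subtype.ext (Subtype.ext (List.append_cancel_left h2))
    · -- support inclusion
      rintro ⟨⟨l, hl⟩, hlong⟩ hne
      have hlong' : ¬ l.length ≤ m := hlong
      rw [Function.mem_support] at hne
      have hpre : ∀ n, n < m → l.getD n default = es n := by
        by_contra hcon
        push_neg at hcon
        apply hne
        have hemp : phi a ha i ⟨l, hl⟩ ⁻¹' ((DIO a ha).cyl m es w) = ∅ := by
          ext ω
          simp only [Set.mem_preimage, mem_cyl, Set.mem_empty_iff_false, iff_false, not_and]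
          intro h1
          obtain ⟨n, hn, hne2⟩ := hcon
          exact absurd (by rw [← h1 n hn,
            phi_val_lt a ha i (⟨l, hl⟩ : EPath a ha i) ω (show n < l.length by omega)]) hne2
        rw [hemp, measure_empty, mul_zero]
      have hcg : ContGood a ha i m w (l.drop m) := by
        have hld : (l.drop m).length = l.length - m := List.length_drop
        refine ⟨?_, ?_, ?_, ?_, ?_⟩
        · intro h
          rw [← List.length_eq_zero_iff] at h
          omega
        · intro j hj
          rw [hld] at hj
          rw [drop_getD l (by omega)]
          exact hl.1 (m + j) (by omega)
        · intro j hj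
          rw [hld] at hj
          rw [drop_getD l (by omega), drop_getD l (by omega)]
          have := hl.2.1 (m + j) (by omega)
          rwa [show m + j + 1 = m + (j + 1) by omega] at this
        · rw [drop_getD l (by omega), show m + 0 = m by omega]
          have hc := hl.2.1 (m - 1) (by omega)
          rw [show m - 1 + 1 = m by omega] at hc
          rw [← hc, hpre (m - 1) (by omega), hwrng]
        · intro j hj
          rw [hld] at hj
          rw [drop_getD l (by omega)]
          exact hl.2.2 (m + j) (by omega)
      refine ⟨⟨⟨l.drop m, hcg⟩, ?_⟩, ?_⟩
      · rw [Function.mem_support]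
        exact ENNReal.inv_ne_zero.2 (prodA_ne_top a i _)
      · refine Subtype.ext (Subtype.ext ?_)
        show takeL es m ++ l.drop m = l
        conv_rhs => rw [← List.take_append_drop m l]
        congr 1
        refine List.ext_getElem (by rw [takeL_length, List.length_take]; omega) ?_
        intro n h1 h2
        have hn : n < m := by rw [takeL_length] at h1; exact h1
        rw [← List.getD_eq_getElem _ default h1, ← List.getD_eq_getElem _ default h2,
          takeL_getD es hn, ← hpre n hn]
        rw [List.getD_eq_getElem _ default (by omega),
          List.getD_eq_getElem _ default (by rw [List.length_take]; omega)]
        exact (List.getElem_take).symm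
    · -- values agree
      rintro ⟨⟨t, hcg⟩, htne⟩
      have hlen : (takeL es m ++ t).length = m + t.length := by
        rw [List.length_append, takeL_length]
      have htpos : 0 < t.length := List.length_pos_iff.2 hcg.1
      have hpre : phi a ha i ⟨takeL es m ++ t, hextgood t hcg⟩ ⁻¹'
          ((DIO a ha).cyl m es w) = Set.univ := by
        ext ω
        simp only [Set.mem_preimage, mem_cyl, Set.mem_univ, iff_true]
        constructor
        · intro n hn
          rw [phi_val_lt a ha i (⟨takeL es m ++ t, hextgood t hcg⟩ : EPath a ha i) ω
            (show n < (takeL es m ++ t).length by rw [hlen]; omega),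
            appendL_getD_left es _ hn]
        · rw [phi_val_lt a ha i (⟨takeL es m ++ t, hextgood t hcg⟩ : EPath a ha i) ω
            (show m < (takeL es m ++ t).length by rw [hlen]; omega),
            appendL_getD_right es _ (le_refl m) (by omega), show m - m = 0 by omega]
          exact hcg.2.2.2.1
      show wt a i (takeL es m ++ t) * _ = _
      rw [hpre, measure_univ, mul_one, wt, hlen]

lemma muCan_tailInvariant : (DIO a ha).TailInvariant (muCan a ha i) := by
  intro m es es' w hes hes'
  rcases Nat.eq_zero_or_pos m with hm | hm
  · subst hm
    congr 1
    ext x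
    simp [GBD.cyl]
  · rw [muCan_cyl_eq a ha i m hm es w hes, muCan_cyl_eq a ha i m hm es' w hes']

lemma isCanonicalExt_muCan : IsCanonicalExt a ha i (muCan a ha i) :=
  ⟨muCan_tailInvariant a ha i, muCan_null a ha i, muCan_cylXBar a ha i⟩

end TailInv

end Stmt8
namespace Stmt8

open GBDEdge Finset Set MeasureTheory

section Psi

/-- number of "diagonal" choices in `g` on `[n, N)` -/
def dct (b : ℕ) (g : ℕ → ℕ) (N n : ℕ) : ℕ :=
  ((Finset.Ico n N).filter fun m => g m = b).card

@[simp] lemma dct_self (b : ℕ) (g : ℕ → ℕ) (N : ℕ) : dct b g N N = 0 := by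
  simp [dct]

lemma dct_succ (b : ℕ) (g : ℕ → ℕ) {N n : ℕ} (h : n < N) :
    dct b g N n = (if g n = b then 1 else 0) + dct b g N (n + 1) := by
  classical
  rw [dct, dct, ← Finset.insert_Ico_add_one_left_eq_Ico h, Finset.filter_insert]
  split_ifs with hgn
  · rw [Finset.card_insert_of_notMem (by simp)]
    omega
  · simp

lemma dct_congr {b : ℕ} {g g' : ℕ → ℕ} {N : ℕ} (h : ∀ m, m < N → g m = g' m) (n : ℕ) :
    dct b g N n = dct b g' N n := by
  unfold dct
  congr 1
  apply Finset.filter_congr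
  intro m hm
  rw [Finset.mem_Ico] at hm
  rw [h m hm.2]

/-- the finite path of length `N` ending at vertex `v` encoded by the backward
choice sequence `g` (value `b` = diagonal step, value `< b` = vertical edge index). -/
def psi (b v N : ℕ) (g : ℕ → ℕ) (n : ℕ) : GBDEdge :=
  (v + dct b g N n, v + dct b g N (n + 1), if g n = b then 0 else g n)

lemma psi_congr {b v N : ℕ} {g g' : ℕ → ℕ} (h : ∀ m, m < N → g m = g' m) {n : ℕ}
    (hn : n < N) : psi b v N g n = psi b v N g' n := by
  unfold psi
  rw [dct_congr h n, dct_congr h (n + 1), h n hn]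

lemma psi_inj {b v N : ℕ} {g g' : ℕ → ℕ} {n : ℕ} (hn : n < N)
    (h : psi b v N g n = psi b v N g' n) : g n = g' n := by
  have hsrc : v + dct b g N n = v + dct b g' N n := congrArg GBDEdge.src h
  have hrng : v + dct b g N (n + 1) = v + dct b g' N (n + 1) := congrArg GBDEdge.rng h
  have hidx : (if g n = b then 0 else g n) = (if g' n = b then 0 else g' n) :=
    congrArg GBDEdge.idx h
  have e1 := dct_succ b g hn
  have e2 := dct_succ b g' hn
  by_cases h1 : g n = b <;> by_cases h2 : g' n = b <;>
    simp only [h1, h2, if_true, if_false] at hidx e1 e2 <;> omega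

variable (a : ℕ → ℕ → ℕ) (ha : ∀ n i, 2 ≤ a n i)

lemma psi_isFinPath {b v N : ℕ} (hab : ∀ n u, 1 ≤ u → a n u = b) (hv : 1 ≤ v)
    {g : ℕ → ℕ} (hg : ∀ n, n < N → g n ≤ b) :
    (DIO a ha).IsFinPathTo N (psi b v N g) v := by
  refine ⟨?_, ?_, ?_⟩
  · intro n hn
    rw [isEdge_iff]
    by_cases hgn : g n = b
    · right
      refine ⟨?_, ?_⟩
      · show v + dct b g N n = v + dct b g N (n + 1) + 1
        rw [dct_succ b g hn, if_pos hgn]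
        omega
      · show (if g n = b then 0 else g n) = 0
        rw [if_pos hgn]
    · left
      refine ⟨?_, ?_⟩
      · show v + dct b g N n = v + dct b g N (n + 1)
        rw [dct_succ b g hn, if_neg hgn]
        omega
      · show (if g n = b then 0 else g n) < a n (v + dct b g N (n + 1))
        rw [if_neg hgn, hab n _ (by omega)]
        have := hg n hn
        omega
  · intro n _
    rfl
  · intro kk hNk
    show v + dct b g N (kk + 1) = v
    rw [← hNk, dct_self]
    omega

lemma psi_surj {b v N : ℕ} (hab : ∀ n u, 1 ≤ u → a n u = b) (hv : 1 ≤ v)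
    {es : ℕ → GBDEdge} (hes : (DIO a ha).IsFinPathTo N es v) :
    ∀ n, n < N →
      psi b v N (fun r => if (es r).src = (es r).rng then (es r).idx else b) n = es n ∧
      (fun r => if (es r).src = (es r).rng then (es r).idx else b) n ≤ b := by
  obtain ⟨hesE, hesC, hesL⟩ := hes
  set g : ℕ → ℕ := fun r => if (es r).src = (es r).rng then (es r).idx else b with hgdef
  -- the backward invariant: the source vertex at level `n`
  have aux : ∀ j n, n + j = N → (if n = N then v else (es n).src) = v + dct b g N n := by
    intro j
    induction j with
    | zero =>
      intro n hn
      have : n = N := by omega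
      subst this
      simp
    | succ j ih =>
      intro n hn
      have hnN : n < N := by omega
      have ihn := ih (n + 1) (by omega)
      rw [if_neg (by omega)]
      have hrng : (es n).rng = (if n + 1 = N then v else (es (n + 1)).src) := by
        by_cases h : n + 1 = N
        · rw [if_pos h]; exact hesL n h.symm
        · rw [if_neg h]; exact hesC n (by omega)
      have hrv : (es n).rng = v + dct b g N (n + 1) := hrng.trans ihn
      rcases (isEdge_iff a ha).1 (hesE n hnN) with hcase | hcase
      · -- vertical edge
        have hgn : g n = (es n).idx := by rw [hgdef]; simp only [if_pos hcase.1]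
        have hidx : (es n).idx < b := by
          have h2 := hcase.2
          rwa [hab n (es n).rng (by omega)] at h2
        rw [dct_succ b g hnN, if_neg (by omega)]
        omega
      · -- diagonal edge
        have hgn : g n = b := by rw [hgdef]; simp only [if_neg (show ¬ (es n).src = (es n).rng by omega)]
        rw [dct_succ b g hnN, if_pos hgn]
        omega
  intro n hn
  have h1 := aux (N - n) n (by omega)
  rw [if_neg (by omega)] at h1
  have ihn := aux (N - (n + 1)) (n + 1) (by omega)
  have hrng : (es n).rng = (if n + 1 = N then v else (es (n + 1)).src) := by
    by_cases h : n + 1 = N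
    · rw [if_pos h]; exact hesL n h.symm
    · rw [if_neg h]; exact hesC n (by omega)
  have hrv : (es n).rng = v + dct b g N (n + 1) := hrng.trans ihn
  rcases (isEdge_iff a ha).1 (hesE n hn) with hcase | hcase
  · have hgn : g n = (es n).idx := by rw [hgdef]; simp only [if_pos hcase.1]
    have hidx : (es n).idx < b := by
      have h2 := hcase.2
      rwa [hab n (es n).rng (by omega)] at h2
    constructor
    · rw [edgeEta (es n)]
      unfold psi
      rw [← h1, ← hrv, hgn, if_neg (by omega)]
    · show g n ≤ b
      omega
  · have hgn : g n = b := by rw [hgdef]; simp only [if_neg (show ¬ (es n).src = (es n).rng by omega)]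
    constructor
    · rw [edgeEta (es n)]
      unfold psi
      rw [← h1, ← hrv, hgn, if_pos rfl, hcase.2]
    · show g n ≤ b
      omega

end Psi

end Stmt8
namespace Stmt8

open GBDEdge Finset Set MeasureTheory

section Values

variable {a : ℕ → ℕ → ℕ} {ha : ∀ n i, 2 ≤ a n i}

/-- the all-vertical finite path at vertex `i` -/
def ver (i : ℕ) : ℕ → GBDEdge := fun _ => (i, i, 0)

lemma isFinPathTo_ver (a : ℕ → ℕ → ℕ) (ha : ∀ n i, 2 ≤ a n i) (i m : ℕ) :
    (DIO a ha).IsFinPathTo m (ver i) i :=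
  ⟨fun n _ => isEdge_vert (by have := ha n i; omega), fun _ _ => rfl, fun _ _ => rfl⟩

lemma mu_cyl_ver {i : ℕ} {μ : Measure (DIO a ha).PathSpace}
    (hμ : IsCanonicalExt a ha i μ) (m : ℕ) :
    μ ((DIO a ha).cyl m (ver i) i ∩ XBar a ha i)
      = (∏ j ∈ Finset.range m, (a j i : ℝ≥0∞))⁻¹ :=
  hμ.2.2 m (ver i) (fun n _ => ⟨rfl, rfl, show (0:ℕ) < a n i by have := ha n i; omega⟩)

lemma mu_cyl_ge {i : ℕ} {μ : Measure (DIO a ha).PathSpace}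
    (hμ : IsCanonicalExt a ha i μ) {m : ℕ} {es : ℕ → GBDEdge}
    (hes : (DIO a ha).IsFinPathTo m es i) :
    (∏ j ∈ Finset.range m, (a j i : ℝ≥0∞))⁻¹ ≤ μ ((DIO a ha).cyl m es i) := by
  rw [hμ.1 m es (ver i) i hes (isFinPathTo_ver a ha i m), ← mu_cyl_ver hμ m]
  exact measure_mono Set.inter_subset_left

lemma cyl_ver0_subset_XBar (m : ℕ) : (DIO a ha).cyl m (ver 0) 0 ⊆ XBar a ha 0 := by
  intro x hx n
  rcases lt_or_ge n m with h | h
  · rw [hx.1 n h]; exact ⟨rfl, rfl⟩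
  · exact stay_zero x hx.2 n h

lemma mu_cyl0 {μ : Measure (DIO a ha).PathSpace}
    (hμ : IsCanonicalExt a ha 0 μ) {m : ℕ} {es : ℕ → GBDEdge}
    (hes : (DIO a ha).IsFinPathTo m es 0) :
    μ ((DIO a ha).cyl m es 0) = (∏ j ∈ Finset.range m, (a j 0 : ℝ≥0∞))⁻¹ := by
  rw [hμ.1 m es (ver 0) 0 hes (isFinPathTo_ver a ha 0 m), ← mu_cyl_ver hμ m]
  congr 1
  exact (Set.inter_eq_self_of_subset_left (cyl_ver0_subset_XBar m)).symm

lemma mu_eq_mu_XHat {i : ℕ} {μ : Measure (DIO a ha).PathSpace}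
    (hμ : IsCanonicalExt a ha i μ) : μ Set.univ = μ (XHat a ha i) := by
  refine le_antisymm ?_ (measure_mono (Set.subset_univ _))
  calc μ Set.univ = μ (XHat a ha i ∪ (XHat a ha i)ᶜ) := by rw [Set.union_compl_self]
    _ ≤ μ (XHat a ha i) + μ ((XHat a ha i)ᶜ) := measure_union_le _ _
    _ = μ (XHat a ha i) := by rw [hμ.2.1, add_zero]

lemma tsum_const_fintype {ι : Type} [Fintype ι] (c : ℝ≥0∞) :
    ∑' (_ : ι), c = (Fintype.card ι : ℝ≥0∞) * c := by
  rw [tsum_fintype, Finset.sum_const, Finset.card_univ, nsmul_eq_mul]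

/-- the extension of `g : Fin N → Fin (b+1)` to `ℕ → ℕ` -/
def gx (b N : ℕ) (G : Fin N → Fin (b + 1)) : ℕ → ℕ :=
  fun n => if h : n < N then (G ⟨n, h⟩).val else 0

lemma gx_le (b N : ℕ) (G : Fin N → Fin (b + 1)) : ∀ n, n < N → gx b N G n ≤ b := by
  intro n h
  rw [gx]
  simp only [dif_pos h]
  exact Nat.lt_succ_iff.1 (Fin.is_lt _)

lemma psi_gx_inj {b v N : ℕ} {G G' : Fin N → Fin (b + 1)} (hGG : G ≠ G') :
    ∃ n, n < N ∧ psi b v N (gx b N G) n ≠ psi b v N (gx b N G') n := by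
  obtain ⟨j, hj⟩ := Function.ne_iff.1 hGG
  refine ⟨j, j.is_lt, fun h => hj ?_⟩
  have h2 := psi_inj j.is_lt h
  rw [gx, gx] at h2
  simp only [dif_pos j.is_lt, Fin.eta] at h2
  exact Fin.val_injective h2

/-- surjectivity of the ψ-encoding: every finite path of `x` ending at `v ≥ 1`
arises from some `G`. -/
lemma psi_gx_surj {b v N : ℕ} (hab : ∀ n u, 1 ≤ u → a n u = b) (hv : 1 ≤ v)
    {es : ℕ → GBDEdge} (hes : (DIO a ha).IsFinPathTo N es v) :
    ∃ G : Fin N → Fin (b + 1), ∀ n, n < N → psi b v N (gx b N G) n = es n := by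
  have h := psi_surj a ha hab hv hes
  set g0 : ℕ → ℕ := fun r => if (es r).src = (es r).rng then (es r).idx else b with hg0
  refine ⟨fun j => ⟨g0 j, by have := (h j j.is_lt).2; omega⟩, ?_⟩
  intro n hn
  have hcongr : ∀ m, m < N → gx b N (fun j : Fin N =>
      (⟨g0 j, by have := (h j j.is_lt).2; omega⟩ : Fin (b + 1))) m = g0 m := by
    intro m hm
    rw [gx]
    simp only [dif_pos hm]
  rw [psi_congr hcongr hn]
  exact (h n hn).1

/-- the measure of the set of paths traversing the diagonal edge into vertex 0
at level `N`. -/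
lemma mu_GSet {μ : Measure (DIO a ha).PathSpace} (hμ : IsCanonicalExt a ha 0 μ)
    {b : ℕ} (hab : ∀ n u, 1 ≤ u → a n u = b) (N : ℕ) :
    μ {x : (DIO a ha).PathSpace | x.val N = ((1 : ℕ), (0 : ℕ), (0 : ℕ))}
      = (((b + 1) ^ N : ℕ) : ℝ≥0∞) * (∏ j ∈ Finset.range (N + 1), (a j 0 : ℝ≥0∞))⁻¹ := by
  classical
  set esg : (Fin N → Fin (b + 1)) → ℕ → GBDEdge := fun G n =>
    if n = N then ((1 : ℕ), (0 : ℕ), (0 : ℕ)) else psi b 1 N (gx b N G) n with hesg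
  have hpathN : ∀ G, (DIO a ha).IsFinPathTo N (psi b 1 N (gx b N G)) 1 :=
    fun G => psi_isFinPath a ha hab (le_refl 1) (gx_le b N G)
  have hpath : ∀ G, (DIO a ha).IsFinPathTo (N + 1) (esg G) 0 := by
    intro G
    refine ⟨?_, ?_, ?_⟩
    · intro n hn
      by_cases h : n = N
      · rw [hesg]; simp only [if_pos h]
        exact isEdge_diag (i := 0)
      · rw [hesg]; simp only [if_neg h]
        exact (hpathN G).1 n (by omega)
    · intro n hn
      have hnN : ¬ n = N := by omega
      rw [hesg]
      simp only [if_neg hnN]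
      by_cases h : n + 1 = N
      · simp only [if_pos h]
        rw [(hpathN G).2.2 n h.symm]
        rfl
      · simp only [if_neg h]
        exact (hpathN G).2.1 n (by omega)
    · intro kk hkk
      have hkN : kk = N := by omega
      rw [hesg]
      simp only [hkN, if_pos rfl]
      rfl
  have hcover : {x : (DIO a ha).PathSpace | x.val N = ((1 : ℕ), (0 : ℕ), (0 : ℕ))}
      = ⋃ G : Fin N → Fin (b + 1), (DIO a ha).cyl (N + 1) (esg G) 0 := by
    ext x
    simp only [Set.mem_setOf_eq, Set.mem_iUnion]
    constructor
    · intro hx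
      have hxpath : (DIO a ha).IsFinPathTo N (fun n => x.val n) 1 := by
        refine ⟨fun n _ => path_edge x n, fun n _ => path_chain x n, ?_⟩
        intro kk hkk
        have : (x.val kk).rng = (x.val N).src := by
          rw [path_chain x kk, ← hkk]
        rw [this, hx]
        rfl
      obtain ⟨G, hG⟩ := psi_gx_surj hab (le_refl 1) hxpath
      refine ⟨G, ?_, ?_⟩
      · intro n hn
        by_cases h : n = N
        · rw [hesg]; simp only [if_pos h]; rw [h, hx]
        · rw [hesg]; simp only [if_neg h]
          exact (hG n (by omega)).symm
      · rw [← path_chain x N, hx]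
        rfl
    · intro ⟨G, hG⟩
      have h2 := hG.1 N (by omega)
      rw [h2, hesg]
      simp
  have hdisj : Pairwise (Function.onFun Disjoint
      (fun G : Fin N → Fin (b + 1) => (DIO a ha).cyl (N + 1) (esg G) 0)) := by
    intro G G' hGG
    show Disjoint _ _
    rw [Set.disjoint_left]
    intro x h1 h2
    obtain ⟨n, hn, hne⟩ := psi_gx_inj (v := 1) hGG
    apply hne
    have e1 := h1.1 n (by omega)
    have e2 := h2.1 n (by omega)
    rw [hesg] at e1 e2
    simp only [if_neg (show ¬ n = N by omega)] at e1 e2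
    rw [← e1, ← e2]
  rw [hcover, measure_iUnion hdisj (fun G => measurableSet_cyl _ _ _)]
  have hval : ∀ G : Fin N → Fin (b + 1),
      μ ((DIO a ha).cyl (N + 1) (esg G) 0)
        = (∏ j ∈ Finset.range (N + 1), (a j 0 : ℝ≥0∞))⁻¹ :=
    fun G => mu_cyl0 hμ (hpath G)
  rw [tsum_congr hval, tsum_const_fintype]
  congr 2
  rw [Fintype.card_fun, Fintype.card_fin, Fintype.card_fin]

/-- the set of paths that are at vertex `0` at level `N` -/
def FSet (a : ℕ → ℕ → ℕ) (ha : ∀ n i, 2 ≤ a n i) (N : ℕ) : Set (DIO a ha).PathSpace :=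
  {x | (x.val N).src = 0}

lemma measurableSet_FSet (N : ℕ) : MeasurableSet (FSet a ha N) :=
  measurableSet_edge {e : GBDEdge | e.src = 0}

lemma measurableSet_GSet (N : ℕ) :
    MeasurableSet {x : (DIO a ha).PathSpace | x.val N = ((1 : ℕ), (0 : ℕ), (0 : ℕ))} :=
  measurableSet_edge {((1 : ℕ), (0 : ℕ), (0 : ℕ))}

lemma FSet_mono : Monotone (FSet a ha) := by
  intro N M hNM x hx
  exact (stay_zero x hx M hNM).1

lemma FSet_succ (N : ℕ) : FSet a ha (N + 1)
    = FSet a ha N ∪ {x : (DIO a ha).PathSpace | x.val N = ((1 : ℕ), (0 : ℕ), (0 : ℕ))} := by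
  ext x
  simp only [FSet, Set.mem_setOf_eq, Set.mem_union]
  constructor
  · intro hx
    have hrng : (x.val N).rng = 0 := by rw [path_chain x N]; exact hx
    rcases (isEdge_iff a ha).1 (path_edge x N) with h | h
    · left; omega
    · right
      rw [edgeEta (x.val N), hrng]
      rw [show (x.val N).src = 1 by omega, h.2]
  · intro hx
    rcases hx with h | h
    · exact (stay_zero x h (N + 1) (by omega)).1
    · rw [← path_chain x N, h]
      rfl

lemma FSet_disj_GSet (N : ℕ) : Disjoint (FSet a ha N)
    {x : (DIO a ha).PathSpace | x.val N = ((1 : ℕ), (0 : ℕ), (0 : ℕ))} := by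
  rw [Set.disjoint_left]
  intro x h1 h2
  rw [Set.mem_setOf_eq] at h2
  have : (x.val N).src = 0 := h1
  rw [h2] at this
  exact absurd this (by decide)

lemma mu_FSet_zero {μ : Measure (DIO a ha).PathSpace} (hμ : IsCanonicalExt a ha 0 μ) :
    μ (FSet a ha 0) = 1 := by
  have hF : FSet a ha 0 = (DIO a ha).cyl 0 (ver 0) 0 := by
    ext x
    simp only [FSet, Set.mem_setOf_eq, mem_cyl]
    exact ⟨fun h => ⟨fun n hn => absurd hn (by omega), h⟩, fun h => h.2⟩
  rw [hF, mu_cyl0 hμ (isFinPathTo_ver a ha 0 0)]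
  simp

lemma mu_FSet {μ : Measure (DIO a ha).PathSpace} (hμ : IsCanonicalExt a ha 0 μ)
    {b : ℕ} (hab : ∀ n u, 1 ≤ u → a n u = b) (N : ℕ) :
    μ (FSet a ha N) = 1 + ∑ n ∈ Finset.range N,
      (((b + 1) ^ n : ℕ) : ℝ≥0∞) * (∏ j ∈ Finset.range (n + 1), (a j 0 : ℝ≥0∞))⁻¹ := by
  induction N with
  | zero => simp [mu_FSet_zero hμ]
  | succ N ih =>
    rw [FSet_succ N, measure_union (FSet_disj_GSet N) (measurableSet_GSet N), ih,
      mu_GSet hμ hab N, Finset.sum_range_succ, add_assoc]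

lemma XHat0_eq_iUnion_FSet : XHat a ha 0 = ⋃ N, FSet a ha N := by
  ext x
  constructor
  · rintro ⟨y, hy, N, hN⟩
    refine Set.mem_iUnion.2 ⟨N, ?_⟩
    show (x.val N).src = 0
    rw [hN N (le_refl N)]
    exact (hy N).1
  · intro hx
    obtain ⟨N, hN⟩ := Set.mem_iUnion.1 hx
    refine VN_subset_XHat 0 N ?_
    intro n hn
    exact stay_zero x hN n hn

/-- the main value computation at vertex 0 -/
lemma mu_XHat0 {μ : Measure (DIO a ha).PathSpace} (hμ : IsCanonicalExt a ha 0 μ)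
    {b : ℕ} (hab : ∀ n u, 1 ≤ u → a n u = b) :
    μ (XHat a ha 0) = 1 + ∑' n : ℕ,
      (((b + 1) ^ n : ℕ) : ℝ≥0∞) * (∏ j ∈ Finset.range (n + 1), (a j 0 : ℝ≥0∞))⁻¹ := by
  rw [XHat0_eq_iUnion_FSet,
    Directed.measure_iUnion (Monotone.directed_le FSet_mono)]
  rw [funext fun N => mu_FSet hμ hab N]
  rw [ENNReal.tsum_eq_iSup_nat, ENNReal.add_iSup]

/-- lower bound at vertices `i ≥ 1` -/
lemma mu_XHat_ge {i : ℕ} (hi : 1 ≤ i) {μ : Measure (DIO a ha).PathSpace}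
    (hμ : IsCanonicalExt a ha i μ) {b : ℕ}
    (hab : ∀ n u, 1 ≤ u → a n u = b) (N : ℕ) :
    (((b + 1) ^ N : ℕ) : ℝ≥0∞) * (((b : ℕ) : ℝ≥0∞) ^ N)⁻¹ ≤ μ (XHat a ha i) := by
  classical
  have hprod : (∏ j ∈ Finset.range N, (a j i : ℝ≥0∞)) = ((b : ℕ) : ℝ≥0∞) ^ N := by
    rw [Finset.prod_congr rfl (fun j _ => by rw [hab j i hi]), Finset.prod_const,
      Finset.card_range]
  have hpathN : ∀ G : Fin N → Fin (b + 1),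
      (DIO a ha).IsFinPathTo N (psi b i N (gx b N G)) i :=
    fun G => psi_isFinPath a ha hab hi (gx_le b N G)
  have hdisj : Pairwise (Function.onFun Disjoint
      (fun G : Fin N → Fin (b + 1) => (DIO a ha).cyl N (psi b i N (gx b N G)) i)) := by
    intro G G' hGG
    show Disjoint _ _
    rw [Set.disjoint_left]
    intro x h1 h2
    obtain ⟨n, hn, hne⟩ := psi_gx_inj (v := i) hGG
    exact hne (by rw [← h1.1 n hn, ← h2.1 n hn])
  calc (((b + 1) ^ N : ℕ) : ℝ≥0∞) * (((b : ℕ) : ℝ≥0∞) ^ N)⁻¹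
      = ∑' _ : Fin N → Fin (b + 1), (((b : ℕ) : ℝ≥0∞) ^ N)⁻¹ := by
        rw [tsum_const_fintype]
        congr 2
        rw [Fintype.card_fun, Fintype.card_fin, Fintype.card_fin]
    _ ≤ ∑' G : Fin N → Fin (b + 1), μ ((DIO a ha).cyl N (psi b i N (gx b N G)) i) := by
        refine ENNReal.tsum_le_tsum fun G => ?_
        rw [← hprod]
        exact mu_cyl_ge hμ (hpathN G)
    _ = μ (⋃ G : Fin N → Fin (b + 1), (DIO a ha).cyl N (psi b i N (gx b N G)) i) :=
        (measure_iUnion hdisj (fun G => measurableSet_cyl _ _ _)).symm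
    _ ≤ μ Set.univ := measure_mono (Set.subset_univ _)
    _ = μ (XHat a ha i) := mu_eq_mu_XHat hμ

/-- binomial bound -/
lemma nat_binom (b : ℕ) : ∀ n : ℕ, b ^ n + n * b ^ (n - 1) ≤ (b + 1) ^ n := by
  intro n
  induction n with
  | zero => simp
  | succ n ih =>
    have h1 : (b + 1) ^ (n + 1) = (b + 1) ^ n * (b + 1) := pow_succ _ _
    have h2 : (b ^ n + n * b ^ (n - 1)) * (b + 1) ≤ (b + 1) ^ n * (b + 1) :=
      Nat.mul_le_mul_right _ ih
    have h3 : b ^ (n + 1) + (n + 1) * b ^ n ≤ (b ^ n + n * b ^ (n - 1)) * (b + 1) := by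
      rcases Nat.eq_zero_or_pos n with hn | hn
      · subst hn; simp
      · have hb : b ^ (n - 1) * b = b ^ n := by
          rw [← pow_succ]
          congr 1
          omega
        calc b ^ (n + 1) + (n + 1) * b ^ n
            = b ^ n * b + n * (b ^ (n - 1) * b) + b ^ n := by rw [hb]; ring
          _ ≤ b ^ n * b + n * (b ^ (n - 1) * b) + b ^ n + n * b ^ (n - 1) := by omega
          _ = (b ^ n + n * b ^ (n - 1)) * (b + 1) := by ring
    simp only [Nat.add_sub_cancel]
    exact le_trans h3 (le_trans h2 (le_of_eq h1.symm))
  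
lemma mu_XHat_i_top {i : ℕ} (hi : 1 ≤ i) {μ : Measure (DIO a ha).PathSpace}
    (hμ : IsCanonicalExt a ha i μ) {b : ℕ} (hb2 : 2 ≤ b)
    (hab : ∀ n u, 1 ≤ u → a n u = b) : μ (XHat a ha i) = ∞ := by
  by_contra h
  obtain ⟨n0, hn0⟩ := ENNReal.exists_nat_gt h
  set N := n0 * b + 1 with hN
  have hnat : n0 * b ^ N ≤ (b + 1) ^ N := by
    have h1 := nat_binom b N
    have h2 : N * b ^ (N - 1) = n0 * b ^ N + b ^ (N - 1) := by
      rw [hN]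
      have : b ^ (n0 * b + 1 - 1) = b ^ (n0 * b) := by congr 1
      rw [this, add_mul, one_mul]
      have hbp : b ^ (n0 * b + 1) = b ^ (n0 * b) * b := pow_succ b _
      rw [hbp]
      ring
    omega
  have hbN0 : (((b : ℕ) : ℝ≥0∞) ^ N) ≠ 0 := by
    apply pow_ne_zero
    exact_mod_cast (by omega : b ≠ 0)
  have hbNt : (((b : ℕ) : ℝ≥0∞) ^ N) ≠ ⊤ := by
    apply ENNReal.pow_ne_top
    exact ENNReal.natCast_ne_top b
  have hle : (n0 : ℝ≥0∞) ≤ μ (XHat a ha i) := by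
    calc (n0 : ℝ≥0∞) = (n0 : ℝ≥0∞) * (((b : ℕ) : ℝ≥0∞) ^ N) * (((b : ℕ) : ℝ≥0∞) ^ N)⁻¹ := by
          rw [mul_assoc, ENNReal.mul_inv_cancel hbN0 hbNt, mul_one]
      _ = ((n0 * b ^ N : ℕ) : ℝ≥0∞) * (((b : ℕ) : ℝ≥0∞) ^ N)⁻¹ := by push_cast; ring_nf
      _ ≤ (((b + 1) ^ N : ℕ) : ℝ≥0∞) * (((b : ℕ) : ℝ≥0∞) ^ N)⁻¹ := by
          exact mul_le_mul_left (by exact_mod_cast hnat) _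
      _ ≤ μ (XHat a ha i) := mu_XHat_ge hi hμ hab N
  exact absurd (lt_of_le_of_lt hle hn0) (lt_irrefl _)

end Values

end Stmt8
namespace Stmt8

section Arith

lemma term_eq (c A n : ℕ) (hA : 0 < A) :
    ((c : ℕ) : ℝ≥0∞) ^ n / ((A : ℕ) : ℝ≥0∞) ^ (n + 1)
      = (((c : ℕ) : ℝ≥0∞) * (((A : ℕ) : ℝ≥0∞))⁻¹) ^ n * (((A : ℕ) : ℝ≥0∞))⁻¹ := by
  have hA0 : ((A : ℕ) : ℝ≥0∞) ≠ 0 := Nat.cast_ne_zero.2 (by omega)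
  have hAt : ((A : ℕ) : ℝ≥0∞) ≠ ⊤ := ENNReal.natCast_ne_top A
  rw [div_eq_mul_inv, pow_succ, ENNReal.mul_inv (Or.inl (pow_ne_zero n hA0))
    (Or.inl (ENNReal.pow_ne_top hAt)), mul_pow, ENNReal.inv_pow, mul_assoc]

lemma tsum_geom_div (c A : ℕ) (hc : 0 < c) (hcA : c < A) :
    ∑' n : ℕ, ((c : ℕ) : ℝ≥0∞) ^ n / ((A : ℕ) : ℝ≥0∞) ^ (n + 1)
      = 1 / ((A - c : ℕ) : ℝ≥0∞) := by
  have hA0 : ((A : ℕ) : ℝ≥0∞) ≠ 0 := Nat.cast_ne_zero.2 (by omega)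
  have hAt : ((A : ℕ) : ℝ≥0∞) ≠ ⊤ := ENNReal.natCast_ne_top A
  have hAc0 : ((A - c : ℕ) : ℝ≥0∞) ≠ 0 := Nat.cast_ne_zero.2 (by omega)
  have hAct : ((A - c : ℕ) : ℝ≥0∞) ≠ ⊤ := ENNReal.natCast_ne_top _
  have hct : ((c : ℕ) : ℝ≥0∞) ≠ ⊤ := ENNReal.natCast_ne_top c
  rw [tsum_congr (fun n => term_eq c A n (by omega)), ENNReal.tsum_mul_right,
    ENNReal.tsum_geometric]
  have hsplit : ((c : ℕ) : ℝ≥0∞) * (((A : ℕ) : ℝ≥0∞))⁻¹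
      + ((A - c : ℕ) : ℝ≥0∞) * (((A : ℕ) : ℝ≥0∞))⁻¹ = 1 := by
    rw [← add_mul, ← Nat.cast_add, show c + (A - c) = A by omega,
      ENNReal.mul_inv_cancel hA0 hAt]
  have h1r : (1 : ℝ≥0∞) - ((c : ℕ) : ℝ≥0∞) * (((A : ℕ) : ℝ≥0∞))⁻¹
      = ((A - c : ℕ) : ℝ≥0∞) * (((A : ℕ) : ℝ≥0∞))⁻¹ := by
    rw [← hsplit]
    exact ENNReal.add_sub_cancel_left (ENNReal.mul_ne_top hct (ENNReal.inv_ne_top.2 hA0))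
  rw [h1r, ENNReal.mul_inv (Or.inl hAc0) (Or.inr (ENNReal.inv_ne_zero.2 hAt)), inv_inv,
    mul_assoc, ENNReal.mul_inv_cancel hA0 hAt, mul_one, one_div]

lemma tsum_div_self_top (A : ℕ) (hA : 2 ≤ A) :
    ∑' n : ℕ, ((A : ℕ) : ℝ≥0∞) ^ n / ((A : ℕ) : ℝ≥0∞) ^ (n + 1) = ∞ := by
  have hA0 : ((A : ℕ) : ℝ≥0∞) ≠ 0 := Nat.cast_ne_zero.2 (by omega)
  have hAt : ((A : ℕ) : ℝ≥0∞) ≠ ⊤ := ENNReal.natCast_ne_top A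
  have hterm : ∀ n : ℕ, ((A : ℕ) : ℝ≥0∞) ^ n / ((A : ℕ) : ℝ≥0∞) ^ (n + 1)
      = (((A : ℕ) : ℝ≥0∞))⁻¹ := by
    intro n
    rw [term_eq A A n (by omega), ENNReal.mul_inv_cancel hA0 hAt, one_pow, one_mul]
  rw [tsum_congr hterm]
  exact ENNReal.tsum_const_eq_top_of_ne_zero (ENNReal.inv_ne_zero.2 hAt)

lemma tsum_ratio_top (b : ℕ) (hb : 2 ≤ b) :
    ∑' n : ℕ, ((b + 1 : ℕ) : ℝ≥0∞) ^ n / ((b : ℕ) : ℝ≥0∞) ^ (n + 1) = ∞ := by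
  rw [eq_top_iff]
  calc (⊤ : ℝ≥0∞) = ∑' n : ℕ, ((b : ℕ) : ℝ≥0∞) ^ n / ((b : ℕ) : ℝ≥0∞) ^ (n + 1) :=
        (tsum_div_self_top b hb).symm
    _ ≤ ∑' n : ℕ, ((b + 1 : ℕ) : ℝ≥0∞) ^ n / ((b : ℕ) : ℝ≥0∞) ^ (n + 1) := by
        refine ENNReal.tsum_le_tsum fun n => ?_
        refine ENNReal.div_le_div ?_ (le_refl _)
        exact pow_le_pow_left₀ zero_le (by exact_mod_cast Nat.le_succ b) n

end Arith

end Stmt8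
/-- For the stationary DIO diagram `B(A,k)` with `a n 0 = A` and
`a n i = A - k` for `i ≥ 1` (vertices indexed from `0`): the canonical extensions exist,
`μ̂_0(X̂_{B̄_0}) = 1 + ∑_n (A-k+1)^n / A^(n+1)`, which equals `1 + 1/(k-1)` if `k ≥ 2`
and `∞` if `k = 1`; and for every `i ≥ 1`,
`μ̂_i(X̂_{B̄_i}) = 1 + ∑_n (A-k+1)^n / (A-k)^(n+1) = ∞`. -/
theorem stmt8 (A k : ℕ) (hk : 0 < k) (hak : k + 2 ≤ A)
    (a : ℕ → ℕ → ℕ) (hadef : ∀ n i, a n i = if i = 0 then A else A - k)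
    (ha : ∀ n i, 2 ≤ a n i) :
    (∀ i, ∃ μ, IsCanonicalExt a ha i μ) ∧
    (∀ μ, IsCanonicalExt a ha 0 μ →
      (μ (XHat a ha 0)
        = 1 + ∑' n : ℕ, ((A - k + 1 : ℕ) : ℝ≥0∞) ^ n / ((A : ℕ) : ℝ≥0∞) ^ (n + 1)) ∧
      (2 ≤ k → μ (XHat a ha 0) = 1 + 1 / ((k - 1 : ℕ) : ℝ≥0∞)) ∧
      (k = 1 → μ (XHat a ha 0) = ∞)) ∧
    (∀ i, 1 ≤ i → ∀ μ, IsCanonicalExt a ha i μ →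
      (μ (XHat a ha i)
        = 1 + ∑' n : ℕ, ((A - k + 1 : ℕ) : ℝ≥0∞) ^ n / ((A - k : ℕ) : ℝ≥0∞) ^ (n + 1)) ∧
      μ (XHat a ha i) = ∞) := by
  have hb2 : 2 ≤ A - k := by omega
  have hab : ∀ n u, 1 ≤ u → a n u = A - k := fun n u hu => by
    rw [hadef, if_neg (by omega)]
  have hA : ∀ n, a n 0 = A := fun n => by rw [hadef, if_pos rfl]
  have hA2 : 2 ≤ A := by omega
  refine ⟨fun i => ⟨Stmt8.muCan a ha i, Stmt8.isCanonicalExt_muCan a ha i⟩, ?_, ?_⟩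
  · intro μ hμ
    have hmain : μ (XHat a ha 0)
        = 1 + ∑' n : ℕ, ((A - k + 1 : ℕ) : ℝ≥0∞) ^ n / ((A : ℕ) : ℝ≥0∞) ^ (n + 1) := by
      rw [Stmt8.mu_XHat0 hμ hab]
      congr 1
      apply tsum_congr
      intro n
      have hprod : (∏ j ∈ Finset.range (n + 1), (a j 0 : ℝ≥0∞)) = ((A : ℕ) : ℝ≥0∞) ^ (n + 1) := by
        rw [Finset.prod_congr rfl (fun j _ => by rw [hA j]), Finset.prod_const,
          Finset.card_range]
      rw [hprod, Nat.cast_pow, div_eq_mul_inv]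
    refine ⟨hmain, ?_, ?_⟩
    · intro hk2
      rw [hmain, Stmt8.tsum_geom_div (A - k + 1) A (by omega) (by omega),
        show A - (A - k + 1) = k - 1 by omega]
    · intro hk1
      subst hk1
      rw [hmain, show A - 1 + 1 = A by omega, Stmt8.tsum_div_self_top A hA2]
      simp
  · intro i hi μ hμ
    have htop := Stmt8.mu_XHat_i_top hi hμ hb2 hab
    have htsum : ∑' n : ℕ, ((A - k + 1 : ℕ) : ℝ≥0∞) ^ n / ((A - k : ℕ) : ℝ≥0∞) ^ (n + 1)
        = ∞ := Stmt8.tsum_ratio_top (A - k) hb2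
    refine ⟨?_, htop⟩
    rw [htop, htsum]
    simp
end

section
/- Let B be the stationary diagram of infinite odometers with a_n^(i) = i + 1 for all n ≥ 0 and i ≥ 1, i.e. the stationary generalized Bratteli diagram with incidence matrix F given by F_{i,i} = i + 1, F_{i,i+1} = 1, and 0 elsewhere. Then there does not exist a nonzero tail-invariant Borel measure on the path space X_B that assigns finite values to all cylinder sets. -/
open MeasureTheory
open scoped ENNReal

section Stmt14Aux

variable (a : ℕ → ℕ → ℕ) (ha : ∀ n i, 2 ≤ a n i)

/-- The vertical path staying at vertex `w`. -/
def vertPath (w : ℕ) : ℕ → GBDEdge := fun _ => (w, w, 0)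

lemma vertPath_isFinPathTo (n w : ℕ) : (DIO a ha).IsFinPathTo n (vertPath w) w := by
  refine ⟨fun m _ => ?_, fun m _ => rfl, fun k _ => rfl⟩
  show (vertPath w m).idx < (DIO a ha).f m (vertPath w m).rng (vertPath w m).src
  simp only [vertPath, GBDEdge.idx, GBDEdge.rng, GBDEdge.src, DIO, if_pos rfl]
  exact lt_of_lt_of_le (by norm_num) (ha m w)

/-- The finite set of edges at level `n` with source `w`. -/
def edgesFrom (n w : ℕ) : Finset GBDEdge :=
  ((Finset.range (a n w)).image fun j => (w, w, j)) ∪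
    (if w = 0 then ∅ else {(w, w - 1, 0)})

lemma mem_edgesFrom {n w : ℕ} {e : GBDEdge} :
    e ∈ edgesFrom a n w ↔ e.src = w ∧ (DIO a ha).IsEdge n e := by
  obtain ⟨s, r, j⟩ := e
  simp only [edgesFrom, Finset.mem_union, Finset.mem_image, Finset.mem_range,
    GBD.IsEdge, GBDEdge.src, GBDEdge.rng, GBDEdge.idx, DIO]
  constructor
  · rintro (⟨k, hk, he⟩ | h)
    · rw [Prod.mk.injEq, Prod.mk.injEq] at he
      obtain ⟨rfl, rfl, rfl⟩ := he
      exact ⟨rfl, by simp [hk]⟩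
    · rcases Nat.eq_zero_or_pos w with hw | hw
      · simp [hw] at h
      · rw [if_neg (Nat.pos_iff_ne_zero.mp hw)] at h
        simp only [Finset.mem_singleton, Prod.mk.injEq] at h
        obtain ⟨rfl, rfl, rfl⟩ := h
        refine ⟨rfl, ?_⟩
        rw [if_neg (by omega), if_pos (by omega)]
        norm_num
  · rintro ⟨rfl, hj⟩
    by_cases hsr : s = r
    · subst hsr
      rw [if_pos rfl] at hj
      exact Or.inl ⟨j, hj, rfl⟩
    · rw [if_neg hsr] at hj
      by_cases hsr1 : s = r + 1
      · rw [if_pos hsr1] at hj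
        right
        rw [if_neg (by omega)]
        simp only [Finset.mem_singleton, Prod.mk.injEq]
        exact ⟨trivial, by omega, by omega⟩
      · rw [if_neg hsr1] at hj; omega

lemma cyl_decomp (n w : ℕ) (es : ℕ → GBDEdge) :
    (DIO a ha).cyl n es w =
      ⋃ e ∈ edgesFrom a n w,
        (DIO a ha).cyl (n + 1) (Function.update es n e) e.rng := by
  ext x
  simp only [Set.mem_iUnion, GBD.cyl, Set.mem_setOf_eq]
  constructor
  · rintro ⟨h1, h2⟩
    refine ⟨x.val n, (mem_edgesFrom a ha).mpr ⟨h2, x.2.1 n⟩, fun m hm => ?_, ?_⟩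
    · rcases Nat.lt_succ_iff_lt_or_eq.mp hm with h | h
      · rw [Function.update_of_ne (Nat.ne_of_lt h)]; exact h1 m h
      · subst h; rw [Function.update_self]
    · exact (x.2.2 n).symm
  · rintro ⟨e, he, h1, _⟩
    obtain ⟨hsrc, _⟩ := (mem_edgesFrom a ha).mp he
    refine ⟨fun m hm => ?_, ?_⟩
    · rw [h1 m (Nat.lt_succ_of_lt hm), Function.update_of_ne (Nat.ne_of_lt hm)]
    · rw [h1 n (Nat.lt_succ_self n), Function.update_self]; exact hsrc

lemma cyl_measurable (B : GBD) (m : ℕ) (es : ℕ → GBDEdge) (w : ℕ) :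
    MeasurableSet (B.cyl m es w) := by
  have hev : ∀ n : ℕ, Measurable fun x : B.PathSpace => x.val n := fun n =>
    (measurable_pi_apply n).comp (measurable_subtype_coe (α := ℕ → GBDEdge))
  have heq : B.cyl m es w =
      (⋂ n ∈ Finset.range m, (fun x : B.PathSpace => x.val n) ⁻¹' {es n}) ∩
        ((fun x : B.PathSpace => (x.val m).1) ⁻¹' {w}) := by
    ext x
    simp [GBD.cyl, GBDEdge.src]
  rw [heq]
  refine MeasurableSet.inter ?_ ?_
  · exact MeasurableSet.biInter (Finset.range m).countable_toSet
      fun n _ => (hev n) (measurableSet_singleton _)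
  · exact (measurable_fst.comp (hev m)) (measurableSet_singleton _)

lemma update_isFinPathTo {n w : ℕ} {es : ℕ → GBDEdge} {e : GBDEdge}
    (hes : (DIO a ha).IsFinPathTo n es w) (hsrc : e.src = w)
    (he : (DIO a ha).IsEdge n e) :
    (DIO a ha).IsFinPathTo (n + 1) (Function.update es n e) e.rng := by
  obtain ⟨h1, h2, h3⟩ := hes
  refine ⟨fun m hm => ?_, fun m hm => ?_, fun k hk => ?_⟩
  · rcases Nat.lt_succ_iff_lt_or_eq.mp hm with h | h
    · rw [Function.update_of_ne (Nat.ne_of_lt h)]; exact h1 m h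
    · subst h; rw [Function.update_self]; exact he
  · have hmn : m + 1 ≤ n := Nat.lt_succ_iff.mp hm
    rcases lt_or_eq_of_le hmn with h | h
    · rw [Function.update_of_ne (by omega), Function.update_of_ne (by omega)]
      exact h2 m h
    · rw [Function.update_of_ne (by omega), h, Function.update_self, hsrc]
      exact h3 m h.symm
  · have : k = n := by omega
    subst this
    rw [Function.update_self]

lemma sum_edgesFrom (n w : ℕ) (g : ℕ → ℝ≥0∞) :
    ∑ e ∈ edgesFrom a n w, g e.rng
      = (a n w : ℝ≥0∞) * g w + (if w = 0 then 0 else g (w - 1)) := by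
  unfold edgesFrom
  have hdisj : Disjoint ((Finset.range (a n w)).image fun j => ((w, w, j) : GBDEdge))
      (if w = 0 then (∅ : Finset GBDEdge) else {(w, w - 1, 0)}) := by
    rcases Nat.eq_zero_or_pos w with hw | hw
    · simp [hw]
    · rw [if_neg (Nat.pos_iff_ne_zero.mp hw)]
      rw [Finset.disjoint_singleton_right]
      simp only [Finset.mem_image, Finset.mem_range, Prod.mk.injEq, not_exists, not_and]
      intro j _
      rintro ⟨-, h, -⟩
      omega
  rw [Finset.sum_union hdisj]
  have h1 : ∑ e ∈ (Finset.range (a n w)).image (fun j => ((w, w, j) : GBDEdge)),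
        g (GBDEdge.rng e) = (a n w : ℝ≥0∞) * g w := by
    rw [Finset.sum_image (by intro x _ y _ h; simpa using h)]
    simp [GBDEdge.rng, Finset.sum_const, Finset.card_range, nsmul_eq_mul]
  have h2 : ∑ e ∈ (if w = 0 then (∅ : Finset GBDEdge) else ({(w, w - 1, 0)} : Finset GBDEdge)),
        g (GBDEdge.rng e) = (if w = 0 then 0 else g (w - 1)) := by
    split <;> simp [GBDEdge.rng]
  rw [h1, h2]

end Stmt14Aux

/-- For the stationary DIO diagram with `a n i = i + 2` (vertices
indexed from `0`, so this is the paper's diagram with incidence matrix entries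
`F_{i,i} = i + 1`, `F_{i,i+1} = 1` for `i ≥ 1`), there is no nonzero tail-invariant
Borel measure on the path space taking finite values on all cylinder sets. -/
theorem stmt14 (a : ℕ → ℕ → ℕ) (hadef : ∀ n i, a n i = i + 2)
    (ha : ∀ n i, 2 ≤ a n i) :
    ¬ ∃ μ : Measure (DIO a ha).PathSpace, μ ≠ 0 ∧ (DIO a ha).TailInvariant μ ∧
      ∀ m es w, (DIO a ha).IsFinPathTo m es w → μ ((DIO a ha).cyl m es w) < ∞ := by
  rintro ⟨μ, hμ0, hTI, hfin⟩
  obtain ⟨p, hp⟩ : ∃ p : ℕ → ℕ → ℝ≥0∞,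
      ∀ n w, p n w = μ ((DIO a ha).cyl n (vertPath w) w) :=
    ⟨_, fun _ _ => rfl⟩
  have hfinite : ∀ n w, p n w ≠ ∞ := by
    intro n w
    rw [hp]
    exact (hfin n (vertPath w) w (vertPath_isFinPathTo a ha n w)).ne
  have hwne : ∀ w : ℕ, ((w : ℝ≥0∞) + 2) ≠ 0 := by
    intro w h
    rw [add_eq_zero] at h
    exact two_ne_zero h.2
  have hwnt : ∀ w : ℕ, ((w : ℝ≥0∞) + 2) ≠ ∞ :=
    fun w => ENNReal.add_ne_top.mpr ⟨ENNReal.natCast_ne_top w, by norm_num⟩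
  have hrec : ∀ n w, p n w = ((w : ℝ≥0∞) + 2) * p (n + 1) w
      + (if w = 0 then 0 else p (n + 1) (w - 1)) := by
    intro n w
    have hdisj : Set.PairwiseDisjoint (↑(edgesFrom a n w) : Set GBDEdge)
        (fun e => (DIO a ha).cyl (n + 1) (Function.update (vertPath w) n e)
          (GBDEdge.rng e)) := by
      intro e _ e' _ hne
      refine Set.disjoint_left.mpr fun x hx hx' => hne ?_
      have h1 : x.val n = e := by
        rw [hx.1 n (Nat.lt_succ_self n), Function.update_self]
      have h2 : x.val n = e' := by
        rw [hx'.1 n (Nat.lt_succ_self n), Function.update_self]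
      rw [← h1, h2]
    have hdec := cyl_decomp a ha n w (vertPath w)
    have hsum := measure_biUnion_finset (μ := μ) hdisj
      (fun e _ => cyl_measurable (DIO a ha) (n + 1)
        (Function.update (vertPath w) n e) (GBDEdge.rng e))
    have hterm : ∀ e ∈ edgesFrom a n w,
        μ ((DIO a ha).cyl (n + 1) (Function.update (vertPath w) n e) (GBDEdge.rng e))
          = p (n + 1) (GBDEdge.rng e) := by
      intro e he
      obtain ⟨hsrc, hedge⟩ := (mem_edgesFrom a ha).mp he
      rw [hp]
      exact hTI (n + 1) _ _ _
        (update_isFinPathTo a ha (vertPath_isFinPathTo a ha n w) hsrc hedge)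
        (vertPath_isFinPathTo a ha (n + 1) (GBDEdge.rng e))
    conv_lhs => rw [hp]
    rw [hdec, hsum, Finset.sum_congr rfl hterm,
      sum_edgesFrom a n w (fun v => p (n + 1) v), hadef n w]
    push_cast
    ring_nf
  have hzero : ∀ w n, p n w = 0 := by
    intro w
    induction w using Nat.strong_induction_on with
    | _ w IH =>
    have hsimp : ∀ n, p n w = ((w : ℝ≥0∞) + 2) * p (n + 1) w := by
      intro n
      rw [hrec n w]
      rcases Nat.eq_zero_or_pos w with hw | hw
      · simp [hw]
      · rw [if_neg (by omega), IH (w - 1) (by omega), add_zero]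
    have hpow : ∀ n k, p n w = ((w : ℝ≥0∞) + 2) ^ k * p (n + k) w := by
      intro n k
      induction k with
      | zero => simp
      | succ k ih =>
        show p n w = ((w : ℝ≥0∞) + 2) ^ (k + 1) * p (n + k + 1) w
        rw [pow_succ, mul_assoc, ← hsimp (n + k)]
        exact ih
    have tk : ∀ n k, ((w : ℝ≥0∞) + 2) ^ k * p (n + k + 1) w
        = p n w / ((w : ℝ≥0∞) + 2) := by
      intro n k
      rw [ENNReal.eq_div_iff (hwne w) (hwnt w)]
      have := hpow n (k + 1)
      rw [pow_succ'] at this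
      rw [← mul_assoc]
      exact (this.trans (by rw [show n + (k + 1) = n + k + 1 from rfl])).symm
    have hsum : ∀ K n, (∑ k ∈ Finset.range K, ((w : ℝ≥0∞) + 3) ^ k * p (n + k + 1) w)
        ≤ p n (w + 1) := by
      intro K
      induction K with
      | zero => intro n; simp
      | succ K ih =>
        intro n
        rw [Finset.sum_range_succ']
        have e1 : ∀ k ∈ Finset.range K, ((w : ℝ≥0∞) + 3) ^ (k + 1) * p (n + (k + 1) + 1) w
            = ((w : ℝ≥0∞) + 3) * (((w : ℝ≥0∞) + 3) ^ k * p ((n + 1) + k + 1) w) := by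
          intro k _
          rw [pow_succ', mul_assoc, show n + (k + 1) + 1 = (n + 1) + k + 1 from by omega]
        rw [Finset.sum_congr rfl e1, ← Finset.mul_sum, pow_zero, one_mul]
        have h3 : p n (w + 1) = ((w : ℝ≥0∞) + 3) * p (n + 1) (w + 1) + p (n + 1) w := by
          have h4 := hrec n (w + 1)
          rw [if_neg (Nat.succ_ne_zero w)] at h4
          rw [h4, show w + 1 - 1 = w from rfl]
          congr 2
          push_cast
          ring
        rw [h3]
        exact add_le_add_left (mul_le_mul_right (ih (n + 1)) _) _
    have hKbound : ∀ (K n : ℕ), (K : ℝ≥0∞) * (p n w / ((w : ℝ≥0∞) + 2)) ≤ p n (w + 1) := by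
      intro K n
      refine le_trans ?_ (hsum K n)
      calc (K : ℝ≥0∞) * (p n w / ((w : ℝ≥0∞) + 2))
          = ∑ _k ∈ Finset.range K, p n w / ((w : ℝ≥0∞) + 2) := by
            rw [Finset.sum_const, Finset.card_range, nsmul_eq_mul]
        _ ≤ ∑ k ∈ Finset.range K, ((w : ℝ≥0∞) + 3) ^ k * p (n + k + 1) w := by
            refine Finset.sum_le_sum fun k _ => ?_
            rw [← tk n k]
            gcongr
            norm_num
    intro n
    by_contra hne
    have hε0 : p n w / ((w : ℝ≥0∞) + 2) ≠ 0 := by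
      simp only [ne_eq, ENNReal.div_eq_zero_iff, not_or]
      exact ⟨hne, hwnt w⟩
    have hM : p n (w + 1) ≠ ∞ := hfinite n (w + 1)
    obtain ⟨K, hK⟩ := ENNReal.exists_nat_gt
      (ENNReal.div_lt_top hM hε0).ne
    have hlt : p n (w + 1) < (K : ℝ≥0∞) * (p n w / ((w : ℝ≥0∞) + 2)) := by
      rwa [ENNReal.div_lt_iff (Or.inl hε0) (Or.inr hM)] at hK
    exact absurd (hKbound K n) (not_le.mpr hlt)
  have huniv : (Set.univ : Set (DIO a ha).PathSpace)
      ⊆ ⋃ w, (DIO a ha).cyl 0 (vertPath w) w := by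
    intro x _
    exact Set.mem_iUnion.mpr ⟨(x.val 0).src, fun n hn => absurd hn (by omega), rfl⟩
  have hμuniv : μ Set.univ = 0 :=
    measure_mono_null huniv (measure_iUnion_null fun w => by rw [← hp]; exact hzero w 0)
  exact hμ0 (Measure.measure_univ_eq_zero.mp hμuniv)
end
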